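/- arXiv:2402.02428 — 9 statements merged into one kernel-verified Lean document; each statement's English description precedes it below -/
import Mathlib

section
/- There exists a constant c_min > 0 (depending only on K, M, Δ, a, pL, pg,min and the capacities e_{m,max}) such that, whenever c_m ≥ c_min for every m = 1,…,M, every optimal solution (p*, p*_chg) of the operator's quadratic program satisfies ∑_{m=1}^{M} p*_chg,m,k = max(0, pg,min − pL,k) for every time index k. -/
private lemma sum_range_ite {n u : ℕ} (x : ℝ) :
    ∑ k ∈ Finset.range n, (if k = u then x else 0) = if u < n then x else 0 := by
  simp [Finset.sum_ite_eq', Finset.mem_range]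

private lemma sum_pair_support {K u v : ℕ} (hu : u < K) (hv : v < K) (huv : u ≠ v)
    (f : ℕ → ℝ) (hf : ∀ k, k ≠ u → k ≠ v → f k = 0) :
    ∑ k ∈ Finset.range K, f k = f u + f v := by
  have h1 : ∑ k ∈ ({u, v} : Finset ℕ), f k = ∑ k ∈ Finset.range K, f k := by
    apply Finset.sum_subset
    · intro x hx
      simp only [Finset.mem_insert, Finset.mem_singleton] at hx
      rcases hx with rfl | rfl
      · exact Finset.mem_range.mpr hu
      · exact Finset.mem_range.mpr hv
    · intro x _ hnx
      simp only [Finset.mem_insert, Finset.mem_singleton] at hnx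
      push_neg at hnx
      exact hf x hnx.1 hnx.2
  rw [← h1, Finset.sum_pair huv]

private def rowg (u v : ℕ) (ε : ℝ) (k : ℕ) : ℝ :=
  (if k = u then -ε else 0) + (if k = v then ε else 0)

private lemma rowg_prefix (u v : ℕ) (ε : ℝ) (n : ℕ) :
    ∑ k ∈ Finset.range n, rowg u v ε k
      = (if u < n then -ε else 0) + (if v < n then ε else 0) := by
  unfold rowg
  rw [Finset.sum_add_distrib, sum_range_ite, sum_range_ite]

private lemma cost_delta {K M : ℕ} {a : ℝ} (c : ℕ → ℝ) (pchg : ℕ → ℕ → ℝ)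
    {m0 k0 : ℕ} (hm0 : m0 < M) (hk0 : k0 < K) (x : ℝ) :
    ∑ k ∈ Finset.range K, ∑ m ∈ Finset.range M,
        (c m / a) * (pchg m k + (if m = m0 ∧ k = k0 then x else 0))
      = ∑ k ∈ Finset.range K, ∑ m ∈ Finset.range M, (c m / a) * pchg m k
        + (c m0 / a) * x := by
  have hpt : ∀ k ∈ Finset.range K, ∑ m ∈ Finset.range M,
      (c m / a) * (pchg m k + (if m = m0 ∧ k = k0 then x else 0))
      = (∑ m ∈ Finset.range M, (c m / a) * pchg m k)
        + (if k = k0 then (c m0 / a) * x else 0) := by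
    intro k _
    have hinner : ∀ m ∈ Finset.range M,
        (c m / a) * (pchg m k + (if m = m0 ∧ k = k0 then x else 0))
        = (c m / a) * pchg m k
          + (if m = m0 then (if k = k0 then (c m / a) * x else 0) else 0) := by
      intro m _
      by_cases hm : m = m0
      · by_cases hk : k = k0
        · simp [hm, hk, mul_add]
        · simp [hm, hk]
      · by_cases hk : k = k0
        · simp [hm, hk]
        · simp [hm, hk]
    rw [Finset.sum_congr rfl hinner, Finset.sum_add_distrib]
    congr 1
    rw [Finset.sum_ite_eq' (Finset.range M) m0
      (fun m => if k = k0 then (c m / a) * x else 0)]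
    simp [Finset.mem_range.mpr hm0]
  rw [Finset.sum_congr rfl hpt, Finset.sum_add_distrib, sum_range_ite, if_pos hk0]

/-- Feasibility of a pair `(p, pchg)` for the operator's quadratic program. -/
def Feasible (K M : ℕ) (Δ pgmin : ℝ) (pL emax : ℕ → ℝ)
    (p pchg : ℕ → ℕ → ℝ) : Prop :=
  (∀ k < K, pgmin - pL k ≤ ∑ m ∈ Finset.range M, p m k) ∧
  (∀ m < M, ∀ k < K, 0 ≤ pchg m k ∧ p m k ≤ pchg m k) ∧
  (∀ m < M, ∀ k, 1 ≤ k → k ≤ K - 1 →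
    0 ≤ ∑ j ∈ Finset.range k, p m j ∧ ∑ j ∈ Finset.range k, p m j ≤ emax m / Δ) ∧
  (∀ m < M, ∑ j ∈ Finset.range K, p m j = 0)

/-- The operator's objective
`F(p,pchg) = ½ ∑_k (∑_m p_{m,k})² + ∑_k ∑_m pL_k p_{m,k} + ∑_k ∑_m (c_m/a) pchg_{m,k}`. -/
noncomputable def Objective (K M : ℕ) (a : ℝ) (pL c : ℕ → ℝ)
    (p pchg : ℕ → ℕ → ℝ) : ℝ :=
  (1/2) * ∑ k ∈ Finset.range K, (∑ m ∈ Finset.range M, p m k)^2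
    + ∑ k ∈ Finset.range K, ∑ m ∈ Finset.range M, pL k * p m k
    + ∑ k ∈ Finset.range K, ∑ m ∈ Finset.range M, (c m / a) * pchg m k

/-- A feasible pair is optimal if it minimizes the objective over the feasible set. -/
noncomputable def Optimal (K M : ℕ) (Δ a pgmin : ℝ) (pL emax c : ℕ → ℝ)
    (p pchg : ℕ → ℕ → ℝ) : Prop :=
  Feasible K M Δ pgmin pL emax p pchg ∧
  ∀ q qchg : ℕ → ℕ → ℝ, Feasible K M Δ pgmin pL emax q qchg →
    Objective K M a pL c p pchg ≤ Objective K M a pL c q qchg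

set_option maxHeartbeats 2000000 in
/-- There exists `c_min > 0` (depending only on the fixed data) such that whenever all
price bids satisfy `c_m ≥ c_min`, every optimal solution has
`∑_m pchg*_{m,k} = max(0, pg,min − pL,k)` at every time index `k`. -/
theorem stmt3 (K M : ℕ) (hK : 1 ≤ K) (hM : 1 ≤ M) (Δ a pgmin : ℝ)
    (hΔ : 0 < Δ) (ha : 0 < a) (pL emax : ℕ → ℝ)
    (hemax : ∀ m < M, 0 < emax m)
    (hne : ∃ p pchg : ℕ → ℕ → ℝ, Feasible K M Δ pgmin pL emax p pchg) :
    ∃ cmin : ℝ, 0 < cmin ∧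
      ∀ c : ℕ → ℝ, (∀ m < M, cmin ≤ c m) →
        ∀ p pchg : ℕ → ℕ → ℝ, Optimal K M Δ a pgmin pL emax c p pchg →
          ∀ k < K, ∑ m ∈ Finset.range M, pchg m k = max 0 (pgmin - pL k) := by
  classical
  have hBnn : (0:ℝ) ≤ ∑ m ∈ Finset.range M, emax m / Δ :=
    Finset.sum_nonneg fun m hm => le_of_lt (div_pos (hemax m (Finset.mem_range.mp hm)) hΔ)
  have hLnn : (0:ℝ) ≤ ∑ k ∈ Finset.range K, |pL k| :=
    Finset.sum_nonneg fun k _ => abs_nonneg _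
  refine ⟨a * (2 * (∑ m ∈ Finset.range M, emax m / Δ)
      + 2 * (∑ k ∈ Finset.range K, |pL k|) + 2), mul_pos ha (by linarith), ?_⟩
  intro c hc p pchg hopt k0 hk0
  set B := ∑ m ∈ Finset.range M, emax m / Δ with hBdef
  set L := ∑ k ∈ Finset.range K, |pL k| with hLdef
  obtain ⟨hfeas, hmin⟩ := hopt
  obtain ⟨h1, h2, h3, h4⟩ := hfeas
  have hcmin : (0:ℝ) < a * (2 * B + 2 * L + 2) := mul_pos ha (by linarith)
  have hca : ∀ m < M, 0 < c m := fun m hm => lt_of_lt_of_le hcmin (hc m hm)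
  have hcda : ∀ m < M, 0 < c m / a := fun m hm => div_pos (hca m hm) ha
  -- bounds on partial sums
  have hSb : ∀ m < M, ∀ n ≤ K, 0 ≤ ∑ j ∈ Finset.range n, p m j
      ∧ ∑ j ∈ Finset.range n, p m j ≤ emax m / Δ := by
    intro m hm n hn
    have hE : (0:ℝ) ≤ emax m / Δ := le_of_lt (div_pos (hemax m hm) hΔ)
    rcases eq_or_lt_of_le hn with rfl | hnK
    · rw [h4 m hm]; exact ⟨le_refl 0, hE⟩
    · rcases Nat.eq_zero_or_pos n with rfl | hn1
      · simp [hE]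
      · exact h3 m hm n hn1 (Nat.le_pred_of_lt hnK)
  have habs : ∀ m < M, ∀ k < K, |p m k| ≤ emax m / Δ := by
    intro m hm k hk
    obtain ⟨ha1, ha2⟩ := hSb m hm k (le_of_lt hk)
    obtain ⟨hb1, hb2⟩ := hSb m hm (k+1) hk
    rw [Finset.sum_range_succ] at hb1 hb2
    rw [abs_le]
    constructor <;> linarith
  have hPb : ∀ k < K, |∑ m ∈ Finset.range M, p m k| ≤ B := by
    intro k hk
    calc |∑ m ∈ Finset.range M, p m k| ≤ ∑ m ∈ Finset.range M, |p m k| :=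
          Finset.abs_sum_le_sum_abs _ _
      _ ≤ B := Finset.sum_le_sum fun m hm => habs m (Finset.mem_range.mp hm) k hk
  have hpLb : ∀ k < K, |pL k| ≤ L := fun k hk =>
    Finset.single_le_sum (fun i _ => abs_nonneg (pL i)) (Finset.mem_range.mpr hk)
  -- the lower bound always holds
  have hlow : max 0 (pgmin - pL k0) ≤ ∑ m ∈ Finset.range M, pchg m k0 := by
    apply max_le
    · exact Finset.sum_nonneg fun m hm => (h2 m (Finset.mem_range.mp hm) k0 hk0).1
    · exact le_trans (h1 k0 hk0)
        (Finset.sum_le_sum fun m hm => (h2 m (Finset.mem_range.mp hm) k0 hk0).2)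
  refine le_antisymm ?_ hlow
  by_contra hgt
  push_neg at hgt
  -- Step 2 : at the optimum, pchg m k0 = max 0 (p m k0)
  have hpc : ∀ m < M, pchg m k0 = max 0 (p m k0) := by
    set qc : ℕ → ℕ → ℝ := fun m k => if k = k0 then max 0 (p m k) else pchg m k with hqc
    have hfe : Feasible K M Δ pgmin pL emax p qc := by
      refine ⟨h1, ?_, h3, h4⟩
      intro m hm k hk
      by_cases hkk : k = k0
      · simp only [hqc, if_pos hkk]; exact ⟨le_max_left _ _, le_max_right _ _⟩
      · simp only [hqc, if_neg hkk]; exact h2 m hm k hk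
    have hle := hmin p qc hfe
    unfold Objective at hle
    have hc1 : ∑ k ∈ Finset.range K, ∑ m ∈ Finset.range M, (c m / a) * pchg m k
        ≤ ∑ k ∈ Finset.range K, ∑ m ∈ Finset.range M, (c m / a) * qc m k := by linarith
    have hpt : ∀ k ∈ Finset.range K, ∀ m ∈ Finset.range M,
        (c m / a) * qc m k ≤ (c m / a) * pchg m k := by
      intro k hk m hm
      apply mul_le_mul_of_nonneg_left _ (le_of_lt (hcda m (Finset.mem_range.mp hm)))
      by_cases hkk : k = k0
      · subst hkk
        simp only [hqc, if_pos rfl]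
        exact max_le (h2 m (Finset.mem_range.mp hm) k (Finset.mem_range.mp hk)).1
          (h2 m (Finset.mem_range.mp hm) k (Finset.mem_range.mp hk)).2
      · simp only [hqc, if_neg hkk]
        exact le_rfl
    have hc2 : ∑ k ∈ Finset.range K, ∑ m ∈ Finset.range M, (c m / a) * qc m k
        ≤ ∑ k ∈ Finset.range K, ∑ m ∈ Finset.range M, (c m / a) * pchg m k :=
      Finset.sum_le_sum fun k hk => Finset.sum_le_sum fun m hm => hpt k hk m hm
    have hEq : ∑ k ∈ Finset.range K, ∑ m ∈ Finset.range M, (c m / a) * pchg m k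
        = ∑ k ∈ Finset.range K, ∑ m ∈ Finset.range M, (c m / a) * qc m k :=
      le_antisymm hc1 hc2
    have hzero : ∑ k ∈ Finset.range K, ∑ m ∈ Finset.range M,
        ((c m / a) * pchg m k - (c m / a) * qc m k) = 0 := by
      simp only [Finset.sum_sub_distrib]
      rw [hEq, sub_self]
    have hall := (Finset.sum_eq_zero_iff_of_nonneg
      (fun k hk => Finset.sum_nonneg fun m hm => sub_nonneg.mpr (hpt k hk m hm))).mp hzero
    have hk0m := (Finset.sum_eq_zero_iff_of_nonneg
      (fun m hm => sub_nonneg.mpr (hpt k0 (Finset.mem_range.mpr hk0) m hm))).mp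
      (hall k0 (Finset.mem_range.mpr hk0))
    intro m hm
    have hz := hk0m m (Finset.mem_range.mpr hm)
    have hqck0 : qc m k0 = max 0 (p m k0) := by simp only [hqc, if_pos rfl]
    rw [hqck0] at hz
    have hcne : c m / a ≠ 0 := ne_of_gt (hcda m hm)
    exact mul_left_cancel₀ hcne (by linarith)
  have hsum : max 0 (pgmin - pL k0) < ∑ m ∈ Finset.range M, max 0 (p m k0) := by
    have heq : ∑ m ∈ Finset.range M, pchg m k0 = ∑ m ∈ Finset.range M, max 0 (p m k0) :=
      Finset.sum_congr rfl fun m hm => hpc m (Finset.mem_range.mp hm)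
    linarith
  obtain ⟨m0, hm0, hpm0⟩ : ∃ m0, m0 < M ∧ 0 < p m0 k0 := by
    by_contra hno
    push_neg at hno
    have hz : ∑ m ∈ Finset.range M, max 0 (p m k0) = 0 :=
      Finset.sum_eq_zero fun m hm => max_eq_left (hno m (Finset.mem_range.mp hm))
    rw [hz] at hsum
    exact absurd hsum (not_lt.mpr (le_max_left 0 _))
  have hpceq0 : pchg m0 k0 = p m0 k0 := by
    rw [hpc m0 hm0]; exact max_eq_right (le_of_lt hpm0)
  by_cases hmixed : ∃ m1, m1 < M ∧ p m1 k0 < 0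
  · -- CASE B : mixed signs at k0
    obtain ⟨m1, hm1, hpm1⟩ := hmixed
    have hm01 : m0 ≠ m1 := fun h => by rw [h] at hpm0; linarith
    have hS1k0 : 0 < ∑ x ∈ Finset.range k0, p m1 x := by
      have h' := (hSb m1 hm1 (k0+1) hk0).1
      rw [Finset.sum_range_succ] at h'
      linarith
    have hS0k0 : ∑ x ∈ Finset.range k0, p m0 x < emax m0 / Δ := by
      have h' := (hSb m0 hm0 (k0+1) hk0).2
      rw [Finset.sum_range_succ] at h'
      linarith
    set Pr : ℕ → Prop := fun j => (∑ x ∈ Finset.range j, p m0 x = emax m0 / Δ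
      ∨ ∑ x ∈ Finset.range j, p m1 x = 0) with hPrdef
    set r := Nat.findGreatest Pr k0 with hrdef
    have hP0 : Pr 0 := by simp only [hPrdef]; exact Or.inr (by simp)
    have hPspec : Pr r := by rw [hrdef]; exact Nat.findGreatest_spec (Nat.zero_le k0) hP0
    have hrle : r ≤ k0 := by rw [hrdef]; exact Nat.findGreatest_le k0
    have hnotP : ∀ j, r < j → j ≤ k0 → ¬ Pr j := by
      intro j hj1 hj2
      rw [hrdef] at hj1
      exact Nat.findGreatest_is_greatest hj1 hj2
    simp only [hPrdef] at hPspec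
    have hrk0 : r < k0 := by
      rcases lt_or_eq_of_le hrle with h | h
      · exact h
      · exfalso
        rw [h] at hPspec
        rcases hPspec with h' | h' <;> linarith
    have hob0 : ∀ j ∈ Finset.Ioc r k0, ∑ x ∈ Finset.range j, p m0 x < emax m0 / Δ := by
      intro j hj
      rw [Finset.mem_Ioc] at hj
      have hub := (hSb m0 hm0 j (le_trans hj.2 (le_of_lt hk0))).2
      have hnp := hnotP j hj.1 hj.2
      simp only [hPrdef] at hnp
      push_neg at hnp
      exact lt_of_le_of_ne hub hnp.1
    have hob1 : ∀ j ∈ Finset.Ioc r k0, 0 < ∑ x ∈ Finset.range j, p m1 x := by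
      intro j hj
      rw [Finset.mem_Ioc] at hj
      have hlb := (hSb m1 hm1 j (le_trans hj.2 (le_of_lt hk0))).1
      have hnp := hnotP j hj.1 hj.2
      simp only [hPrdef] at hnp
      push_neg at hnp
      exact lt_of_le_of_ne hlb (Ne.symm hnp.2)
    obtain ⟨t, htmem, ht⟩ : ∃ t ∈ Finset.Ico r k0, (0 < p m1 t ∨ p m0 t < 0) := by
      rcases hPspec with h' | h'
      · by_contra hno
        push_neg at hno
        have hsum0 : ∑ x ∈ Finset.Ico r k0, p m0 x
            = (∑ x ∈ Finset.range k0, p m0 x) - emax m0 / Δ := by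
          rw [Finset.sum_Ico_eq_sub _ hrle, h']
        have hpos : 0 ≤ ∑ x ∈ Finset.Ico r k0, p m0 x :=
          Finset.sum_nonneg fun x hx => (hno x hx).2
        linarith
      · by_contra hno
        push_neg at hno
        have hsum1 : ∑ x ∈ Finset.Ico r k0, p m1 x = ∑ x ∈ Finset.range k0, p m1 x := by
          rw [Finset.sum_Ico_eq_sub _ hrle, h', sub_zero]
        have hneg' : ∑ x ∈ Finset.Ico r k0, p m1 x ≤ 0 :=
          Finset.sum_nonpos fun x hx => (hno x hx).1
        linarith
    rw [Finset.mem_Ico] at htmem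
    have htk0 : t < k0 := htmem.2
    have htK : t < K := lt_trans htk0 hk0
    have htne : t ≠ k0 := Nat.ne_of_lt htk0
    have htk0ne : k0 ≠ t := Ne.symm htne
    have hIoc : (Finset.Ioc t k0).Nonempty := ⟨k0, Finset.mem_Ioc.mpr ⟨htk0, le_refl _⟩⟩
    have hsubset : Finset.Ioc t k0 ⊆ Finset.Ioc r k0 := by
      intro x hx
      rw [Finset.mem_Ioc] at hx ⊢
      exact ⟨lt_of_le_of_lt htmem.1 hx.1, hx.2⟩
    set εS0 := (Finset.Ioc t k0).inf' hIoc
      (fun j => emax m0 / Δ - ∑ x ∈ Finset.range j, p m0 x) with hεS0def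
    set εS1 := (Finset.Ioc t k0).inf' hIoc
      (fun j => ∑ x ∈ Finset.range j, p m1 x) with hεS1def
    set εt := if 0 < p m1 t then p m1 t else -(p m0 t) with hεtdef
    have hεS0pos : 0 < εS0 := (Finset.lt_inf'_iff hIoc).mpr
      (fun j hj => sub_pos.mpr (hob0 j (hsubset hj)))
    have hεS1pos : 0 < εS1 := (Finset.lt_inf'_iff hIoc).mpr (fun j hj => hob1 j (hsubset hj))
    have hεtpos : 0 < εt := by
      rw [hεtdef]
      split_ifs with h'
      · exact h'
      · rcases ht with h'' | h''
        · exact absurd h'' h'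
        · linarith
    set ε := min (p m0 k0) (min (-(p m1 k0)) (min εS0 (min εS1 εt))) with hεdef
    have hεpos : 0 < ε :=
      lt_min hpm0 (lt_min (by linarith) (lt_min hεS0pos (lt_min hεS1pos hεtpos)))
    have hεp0 : ε ≤ p m0 k0 := min_le_left _ _
    have hεp1 : ε ≤ -(p m1 k0) := le_trans (min_le_right _ _) (min_le_left _ _)
    have hεS0' : ∀ j ∈ Finset.Ioc t k0, ε ≤ emax m0 / Δ - ∑ x ∈ Finset.range j, p m0 x :=
      fun j hj => le_trans (le_trans (min_le_right _ _)
        (le_trans (min_le_right _ _) (min_le_left _ _))) (Finset.inf'_le _ hj)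
    have hεS1' : ∀ j ∈ Finset.Ioc t k0, ε ≤ ∑ x ∈ Finset.range j, p m1 x :=
      fun j hj => le_trans (le_trans (min_le_right _ _) (le_trans (min_le_right _ _)
        (le_trans (min_le_right _ _) (min_le_left _ _)))) (Finset.inf'_le _ hj)
    have hεt' : ε ≤ εt := le_trans (min_le_right _ _) (le_trans (min_le_right _ _)
      (le_trans (min_le_right _ _) (min_le_right _ _)))
    set q : ℕ → ℕ → ℝ := fun m k => p m k + (if m = m0 then rowg k0 t ε k else 0)
        + (if m = m1 then rowg t k0 ε k else 0) with hqdef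
    have er1 : rowg k0 t ε k0 = -ε := by simp [rowg, htk0ne]
    have er2 : rowg k0 t ε t = ε := by simp [rowg, htne]
    have er3 : rowg t k0 ε t = -ε := by simp [rowg, htne]
    have er4 : rowg t k0 ε k0 = ε := by simp [rowg, htk0ne]
    have er5 : ∀ k, k ≠ k0 → k ≠ t → rowg k0 t ε k = 0 := fun k hA hB => by
      simp [rowg, hA, hB]
    have er6 : ∀ k, k ≠ k0 → k ≠ t → rowg t k0 ε k = 0 := fun k hA hB => by
      simp [rowg, hA, hB]
    have hcol : ∀ k, ∑ m ∈ Finset.range M, q m k = ∑ m ∈ Finset.range M, p m k := by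
      intro k
      simp only [hqdef]
      rw [Finset.sum_add_distrib, Finset.sum_add_distrib, sum_range_ite, sum_range_ite,
        if_pos hm0, if_pos hm1]
      have hz : rowg k0 t ε k + rowg t k0 ε k = 0 := by unfold rowg; split_ifs <;> ring
      linarith
    have hpre : ∀ m n, ∑ j ∈ Finset.range n, q m j = (∑ j ∈ Finset.range n, p m j)
        + (if m = m0 then ((if k0 < n then -ε else 0) + (if t < n then ε else 0)) else 0)
        + (if m = m1 then ((if t < n then -ε else 0) + (if k0 < n then ε else 0)) else 0) := by
      intro m n
      simp only [hqdef]
      rw [Finset.sum_add_distrib, Finset.sum_add_distrib]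
      congr 1
      · congr 1
        by_cases hm' : m = m0
        · simp only [if_pos hm']; exact rowg_prefix k0 t ε n
        · simp [hm']
      · by_cases hm' : m = m1
        · simp only [if_pos hm']; exact rowg_prefix t k0 ε n
        · simp [hm']
    have hfi : ∀ k < K, pgmin - pL k ≤ ∑ m ∈ Finset.range M, q m k := by
      intro k hk
      rw [hcol k]
      exact h1 k hk
    have hfiii : ∀ m < M, ∀ n, 1 ≤ n → n ≤ K - 1 →
        0 ≤ ∑ j ∈ Finset.range n, q m j ∧ ∑ j ∈ Finset.range n, q m j ≤ emax m / Δ := by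
      intro m hm n hn1 hnK1
      have hb := h3 m hm n hn1 hnK1
      rw [hpre m n]
      by_cases hm0' : m = m0
      · rw [hm0'] at hb ⊢
        rw [if_pos rfl, if_neg hm01]
        by_cases hto : t < n
        · by_cases hko : k0 < n
          · rw [if_pos hko, if_pos hto]
            constructor <;> linarith [hb.1, hb.2]
          · rw [if_neg hko, if_pos hto]
            have hmem : n ∈ Finset.Ioc t k0 := Finset.mem_Ioc.mpr ⟨hto, not_lt.mp hko⟩
            have hh := hεS0' n hmem
            constructor <;> linarith [hb.1, hεpos]
        · have hko : ¬ k0 < n := fun hcon => hto (lt_trans htk0 hcon)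
          rw [if_neg hko, if_neg hto]
          simpa using hb
      · by_cases hm1' : m = m1
        · rw [hm1'] at hb ⊢
          rw [if_neg (Ne.symm hm01), if_pos rfl]
          by_cases hto : t < n
          · by_cases hko : k0 < n
            · rw [if_pos hto, if_pos hko]
              constructor <;> linarith [hb.1, hb.2]
            · rw [if_pos hto, if_neg hko]
              have hmem : n ∈ Finset.Ioc t k0 := Finset.mem_Ioc.mpr ⟨hto, not_lt.mp hko⟩
              have hh := hεS1' n hmem
              constructor <;> linarith [hb.2, hεpos]
          · have hko : ¬ k0 < n := fun hcon => hto (lt_trans htk0 hcon)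
            rw [if_neg hto, if_neg hko]
            simpa using hb
        · rw [if_neg hm0', if_neg hm1']
          simpa using hb
    have hfiv : ∀ m < M, ∑ j ∈ Finset.range K, q m j = 0 := by
      intro m hm
      rw [hpre m K, h4 m hm]
      by_cases hm0' : m = m0
      · have hm1' : m ≠ m1 := by rw [hm0']; exact hm01
        rw [if_pos hm0', if_neg hm1', if_pos hk0, if_pos htK]
        ring
      · by_cases hm1' : m = m1
        · rw [if_neg hm0', if_pos hm1', if_pos htK, if_pos hk0]
          ring
        · rw [if_neg hm0', if_neg hm1']
          ring
    have hsq : ∑ k ∈ Finset.range K, (∑ m ∈ Finset.range M, q m k)^2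
        = ∑ k ∈ Finset.range K, (∑ m ∈ Finset.range M, p m k)^2 :=
      Finset.sum_congr rfl fun k _ => by rw [hcol k]
    have hlin : ∑ k ∈ Finset.range K, ∑ m ∈ Finset.range M, pL k * q m k
        = ∑ k ∈ Finset.range K, ∑ m ∈ Finset.range M, pL k * p m k :=
      Finset.sum_congr rfl fun k _ => by rw [← Finset.mul_sum, hcol k, Finset.mul_sum]
    by_cases hb1 : 0 < p m1 t
    · -- B1 : p m1 t > 0
      have hεt1 : ε ≤ p m1 t := by
        have h' := hεt'
        rw [hεtdef, if_pos hb1] at h'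
        exact h'
      set qchg : ℕ → ℕ → ℝ := fun m k => pchg m k + (if m = m0 then rowg k0 t ε k else 0)
          + (if m = m1 ∧ k = t then -ε else 0) with hqcdef
      have hfii : ∀ m < M, ∀ k < K, 0 ≤ qchg m k ∧ q m k ≤ qchg m k := by
        intro m hm k hk
        have hc2' := h2 m hm k hk
        by_cases hm0' : m = m0
        · rw [hm0'] at hc2' ⊢
          simp only [hqdef, hqcdef, if_true]
          rw [if_neg hm01,
            if_neg (show ¬(m0 = m1 ∧ k = t) from fun h => hm01 h.1)]
          by_cases hk' : k = k0
          · rw [hk'] at hc2' ⊢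
            rw [er1]
            constructor
            · linarith [hpceq0, hεp0]
            · linarith [hc2'.2]
          · by_cases hk'' : k = t
            · rw [hk''] at hc2' ⊢
              rw [er2]
              constructor
              · linarith [hc2'.1, hεpos]
              · linarith [hc2'.2]
            · rw [er5 k hk' hk'']
              constructor <;> linarith [hc2'.1, hc2'.2]
        · by_cases hm1' : m = m1
          · rw [hm1'] at hc2' ⊢
            simp only [hqdef, hqcdef, if_true, true_and]
            rw [if_neg (Ne.symm hm01)]
            by_cases hk'' : k = t
            · rw [if_pos hk'']
              rw [hk''] at hc2' ⊢
              rw [er3]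
              constructor
              · linarith [hεt1, hc2'.2]
              · linarith [hc2'.2]
            · rw [if_neg hk'']
              by_cases hk' : k = k0
              · rw [hk'] at hc2' ⊢
                rw [er4]
                constructor
                · linarith [hc2'.1]
                · linarith [hεp1, hc2'.1]
              · rw [er6 k hk' hk'']
                constructor <;> linarith [hc2'.1, hc2'.2]
          · simp only [hqdef, hqcdef]
            rw [if_neg hm0', if_neg hm1',
              if_neg (show ¬(m = m1 ∧ k = t) from fun h => hm1' h.1)]
            constructor <;> linarith [hc2'.1, hc2'.2]
      have hT3 : ∑ k ∈ Finset.range K, ∑ m ∈ Finset.range M, (c m / a) * qchg m k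
          = ∑ k ∈ Finset.range K, ∑ m ∈ Finset.range M, (c m / a) * pchg m k
            + (c m1 / a) * (-ε) := by
        have hinner : ∀ k ∈ Finset.range K, ∑ m ∈ Finset.range M, (c m / a) * qchg m k
            = (∑ m ∈ Finset.range M, (c m / a) * pchg m k)
              + (c m0 / a) * rowg k0 t ε k + (if k = t then (c m1 / a) * (-ε) else 0) := by
          intro k _
          have hptm : ∀ m ∈ Finset.range M, (c m / a) * qchg m k
              = (c m / a) * pchg m k + (if m = m0 then (c m / a) * rowg k0 t ε k else 0)
                + (if m = m1 then (if k = t then (c m / a) * (-ε) else 0) else 0) := by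
            intro m _
            simp only [hqcdef]
            by_cases hm0' : m = m0
            · have hm1' : ¬ m = m1 := by rw [hm0']; exact hm01
              by_cases hk'' : k = t <;> simp [hm0', hm1', hk'', mul_add] <;> ring
            · by_cases hm1' : m = m1
              · by_cases hk'' : k = t <;> simp [hm0', hm1', hk'', mul_add] <;> ring
              · by_cases hk'' : k = t <;> simp [hm0', hm1', hk'', mul_add] <;> ring
          rw [Finset.sum_congr rfl hptm, Finset.sum_add_distrib, Finset.sum_add_distrib]
          congr 1
          · congr 1
            rw [Finset.sum_ite_eq' (Finset.range M) m0 (fun m => (c m / a) * rowg k0 t ε k)]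
            simp [Finset.mem_range.mpr hm0]
          · rw [Finset.sum_ite_eq' (Finset.range M) m1
              (fun m => if k = t then (c m / a) * (-ε) else 0)]
            simp [Finset.mem_range.mpr hm1]
        rw [Finset.sum_congr rfl hinner, Finset.sum_add_distrib, Finset.sum_add_distrib]
        have hz : ∑ k ∈ Finset.range K, (c m0 / a) * rowg k0 t ε k = 0 := by
          rw [← Finset.mul_sum, rowg_prefix, if_pos hk0, if_pos htK]
          ring
        rw [hz, sum_range_ite, if_pos htK]
        ring
      have hobj : Objective K M a pL c q qchg
          = Objective K M a pL c p pchg + (c m1 / a) * (-ε) := by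
        unfold Objective
        rw [hsq, hlin, hT3]
        ring
      have hlt : Objective K M a pL c q qchg < Objective K M a pL c p pchg := by
        rw [hobj]
        have h' := mul_pos (hcda m1 hm1) hεpos
        linarith
      exact absurd (hmin q qchg ⟨hfi, hfii, hfiii, hfiv⟩) (not_le.mpr hlt)
    · -- B2 : p m0 t < 0
      have hm0t : p m0 t < 0 := by
        rcases ht with h' | h'
        · exact absurd h' hb1
        · exact h'
      have hεt2 : ε ≤ -(p m0 t) := by
        have h' := hεt'
        rw [hεtdef, if_neg hb1] at h'
        exact h'
      set qchg : ℕ → ℕ → ℝ :=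
        fun m k => pchg m k + (if m = m0 ∧ k = k0 then -ε else 0) with hqcdef
      have hfii : ∀ m < M, ∀ k < K, 0 ≤ qchg m k ∧ q m k ≤ qchg m k := by
        intro m hm k hk
        have hc2' := h2 m hm k hk
        by_cases hm0' : m = m0
        · rw [hm0'] at hc2' ⊢
          simp only [hqdef, hqcdef, if_true, true_and]
          rw [if_neg hm01]
          by_cases hk' : k = k0
          · rw [if_pos hk']
            rw [hk'] at hc2' ⊢
            rw [er1]
            constructor
            · linarith [hpceq0, hεp0]
            · linarith [hc2'.2]
          · rw [if_neg hk']
            by_cases hk'' : k = t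
            · rw [hk''] at hc2' ⊢
              rw [er2]
              constructor
              · linarith [hc2'.1]
              · linarith [hεt2, hc2'.1]
            · rw [er5 k hk' hk'']
              constructor <;> linarith [hc2'.1, hc2'.2]
        · by_cases hm1' : m = m1
          · rw [hm1'] at hc2' ⊢
            simp only [hqdef, hqcdef, if_true]
            rw [if_neg (Ne.symm hm01),
              if_neg (show ¬(m1 = m0 ∧ k = k0) from fun h => (Ne.symm hm01) h.1)]
            by_cases hk' : k = k0
            · rw [hk'] at hc2' ⊢
              rw [er4]
              constructor
              · linarith [hc2'.1]
              · linarith [hεp1, hc2'.1]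
            · by_cases hk'' : k = t
              · rw [hk''] at hc2' ⊢
                rw [er3]
                constructor
                · linarith [hc2'.1]
                · linarith [hc2'.2, hεpos]
              · rw [er6 k hk' hk'']
                constructor <;> linarith [hc2'.1, hc2'.2]
          · simp only [hqdef, hqcdef]
            rw [if_neg hm0', if_neg hm1',
              if_neg (show ¬(m = m0 ∧ k = k0) from fun h => hm0' h.1)]
            constructor <;> linarith [hc2'.1, hc2'.2]
      have hT3 : ∑ k ∈ Finset.range K, ∑ m ∈ Finset.range M, (c m / a) * qchg m k
          = ∑ k ∈ Finset.range K, ∑ m ∈ Finset.range M, (c m / a) * pchg m k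
            + (c m0 / a) * (-ε) := by
        simp only [hqcdef]
        exact cost_delta c pchg hm0 hk0 (-ε)
      have hobj : Objective K M a pL c q qchg
          = Objective K M a pL c p pchg + (c m0 / a) * (-ε) := by
        unfold Objective
        rw [hsq, hlin, hT3]
        ring
      have hlt : Objective K M a pL c q qchg < Objective K M a pL c p pchg := by
        rw [hobj]
        have h' := mul_pos (hcda m0 hm0) hεpos
        linarith
      exact absurd (hmin q qchg ⟨hfi, hfii, hfiii, hfiv⟩) (not_le.mpr hlt)
  · -- CASE A : all nonnegative at k0
    push_neg at hmixed
    have hPgt : pgmin - pL k0 < ∑ m ∈ Finset.range M, p m k0 := by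
      have he : ∑ m ∈ Finset.range M, max 0 (p m k0) = ∑ m ∈ Finset.range M, p m k0 :=
        Finset.sum_congr rfl fun m hm => max_eq_right (hmixed m (Finset.mem_range.mp hm))
      have h0 : pgmin - pL k0 ≤ max 0 (pgmin - pL k0) := le_max_right _ _
      rw [he] at hsum
      linarith
    -- first return-to-zero of the partial sums of m0 after k0
    have hex : ∃ j, k0 < j ∧ ∑ x ∈ Finset.range j, p m0 x = 0 := ⟨K, hk0, h4 m0 hm0⟩
    set jstar := Nat.find hex with hjdef
    have hjspec := Nat.find_spec hex
    rw [← hjdef] at hjspec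
    have hjK : jstar ≤ K := Nat.find_min' hex ⟨hk0, h4 m0 hm0⟩
    have hjmin : ∀ j, j < jstar → ¬(k0 < j ∧ ∑ x ∈ Finset.range j, p m0 x = 0) :=
      fun j hj => Nat.find_min hex hj
    have hSk0 : 0 ≤ ∑ x ∈ Finset.range k0, p m0 x := (hSb m0 hm0 k0 (le_of_lt hk0)).1
    have hSk01 : 0 < ∑ x ∈ Finset.range (k0+1), p m0 x := by
      rw [Finset.sum_range_succ]; linarith
    have hjne : k0 + 1 ≠ jstar := by
      intro h
      have h' := hjspec.2
      rw [← h] at h'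
      linarith
    have hk01j : k0 + 1 < jstar := lt_of_le_of_ne (Nat.succ_le_of_lt hjspec.1) hjne
    set k1 := jstar - 1 with hk1def
    have hjpos : 0 < jstar := Nat.lt_of_le_of_lt (Nat.zero_le k0) hjspec.1
    have hk1succ : k1 + 1 = jstar := Nat.succ_pred_eq_of_pos hjpos
    have hk0k1 : k0 < k1 := by omega
    have hk1K : k1 < K := by omega
    have hk0k1ne : k0 ≠ k1 := Nat.ne_of_lt hk0k1
    have hSpos : ∀ j ∈ Finset.Ioc k0 k1, 0 < ∑ x ∈ Finset.range j, p m0 x := by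
      intro j hj
      rw [Finset.mem_Ioc] at hj
      have hjK' : j ≤ K := by omega
      have hnz : ∑ x ∈ Finset.range j, p m0 x ≠ 0 := by
        intro h0
        exact hjmin j (by omega) ⟨hj.1, h0⟩
      exact lt_of_le_of_ne (hSb m0 hm0 j hjK').1 (Ne.symm hnz)
    have hpk1 : ∑ x ∈ Finset.range k1, p m0 x + p m0 k1 = 0 := by
      rw [← Finset.sum_range_succ, hk1succ]; exact hjspec.2
    have hIoc : (Finset.Ioc k0 k1).Nonempty := ⟨k1, Finset.mem_Ioc.mpr ⟨hk0k1, le_refl _⟩⟩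
    set εS := (Finset.Ioc k0 k1).inf' hIoc (fun j => ∑ x ∈ Finset.range j, p m0 x) with hεSdef
    have hεSpos : 0 < εS := (Finset.lt_inf'_iff hIoc).mpr hSpos
    have hεSle : ∀ j ∈ Finset.Ioc k0 k1, εS ≤ ∑ x ∈ Finset.range j, p m0 x :=
      fun j hj => Finset.inf'_le _ hj
    set ε := min 1 (min (∑ m ∈ Finset.range M, p m k0 - (pgmin - pL k0))
      (min (p m0 k0) εS)) with hεdef
    have hεpos : 0 < ε :=
      lt_min one_pos (lt_min (by linarith) (lt_min hpm0 hεSpos))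
    have hε1 : ε ≤ 1 := min_le_left _ _
    have hεslack : ε ≤ ∑ m ∈ Finset.range M, p m k0 - (pgmin - pL k0) :=
      le_trans (min_le_right _ _) (min_le_left _ _)
    have hεp : ε ≤ p m0 k0 :=
      le_trans (min_le_right _ _) (le_trans (min_le_right _ _) (min_le_left _ _))
    have hεS' : ∀ j ∈ Finset.Ioc k0 k1, ε ≤ ∑ x ∈ Finset.range j, p m0 x := fun j hj =>
      le_trans (le_trans (min_le_right _ _)
        (le_trans (min_le_right _ _) (min_le_right _ _))) (hεSle j hj)
    have hεk1 : ε ≤ ∑ x ∈ Finset.range k1, p m0 x :=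
      hεS' k1 (Finset.mem_Ioc.mpr ⟨hk0k1, le_refl _⟩)
    set q : ℕ → ℕ → ℝ := fun m k => p m k + (if m = m0 then rowg k0 k1 ε k else 0) with hqdef
    set qchg : ℕ → ℕ → ℝ :=
      fun m k => pchg m k + (if m = m0 ∧ k = k0 then -ε else 0) with hqcdef
    have e0 : rowg k0 k1 ε k0 = -ε := by simp [rowg, hk0k1ne]
    have e1 : rowg k0 k1 ε k1 = ε := by simp [rowg, Ne.symm hk0k1ne]
    have hcol : ∀ k, ∑ m ∈ Finset.range M, q m k
        = (∑ m ∈ Finset.range M, p m k) + rowg k0 k1 ε k := by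
      intro k
      simp only [hqdef]
      rw [Finset.sum_add_distrib, sum_range_ite, if_pos hm0]
    have hpre : ∀ m n, ∑ j ∈ Finset.range n, q m j = (∑ j ∈ Finset.range n, p m j)
        + (if m = m0 then ((if k0 < n then -ε else 0) + (if k1 < n then ε else 0)) else 0) := by
      intro m n
      simp only [hqdef]
      rw [Finset.sum_add_distrib]
      congr 1
      by_cases hm' : m = m0
      · simp only [if_pos hm']; exact rowg_prefix k0 k1 ε n
      · simp [hm']
    have hfq : Feasible K M Δ pgmin pL emax q qchg := by
      refine ⟨?_, ?_, ?_, ?_⟩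
      · intro k hk
        rw [hcol k]
        unfold rowg
        by_cases hkk0 : k = k0
        · subst hkk0
          rw [if_pos rfl, if_neg hk0k1ne]
          linarith [hεslack]
        · by_cases hkk1 : k = k1
          · subst hkk1
            rw [if_neg hkk0, if_pos rfl]
            have := h1 k1 hk1K
            linarith
          · rw [if_neg hkk0, if_neg hkk1]
            have := h1 k hk
            linarith
      · intro m hm k hk
        have hpchg := h2 m hm k hk
        by_cases hm' : m = m0
        · subst hm'
          by_cases hkk0 : k = k0
          · subst hkk0
            simp only [hqdef, hqcdef, if_pos rfl, e0, and_self, if_true]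
            constructor
            · linarith [hεp, hpceq0]
            · linarith [hpchg.2]
          · by_cases hkk1 : k = k1
            · subst hkk1
              simp only [hqdef, hqcdef, if_pos rfl, e1]
              simp only [true_and, if_true, if_neg hkk0]
              constructor
              · linarith [hpchg.1]
              · linarith [hpk1, hεk1, hpchg.1]
            · have hz : rowg k0 k1 ε k = 0 := by simp [rowg, hkk0, hkk1]
              simp only [hqdef, hqcdef, if_pos rfl, hz]
              simp only [true_and, if_true, if_neg hkk0]
              simpa using hpchg
        · simp only [hqdef, hqcdef, if_neg hm']
          rw [if_neg (show ¬(m = m0 ∧ k = k0) from fun h => hm' h.1)]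
          simpa using hpchg
      · intro m hm n hn1 hnK1
        have hb := h3 m hm n hn1 hnK1
        rw [hpre m n]
        by_cases hm' : m = m0
        · subst hm'
          rw [if_pos rfl]
          by_cases hn0 : k0 < n
          · by_cases hn1' : k1 < n
            · rw [if_pos hn0, if_pos hn1']
              constructor <;> linarith [hb.1, hb.2]
            · rw [if_pos hn0, if_neg hn1']
              have hmem : n ∈ Finset.Ioc k0 k1 := Finset.mem_Ioc.mpr ⟨hn0, not_lt.mp hn1'⟩
              have hh := hεS' n hmem
              constructor <;> linarith [hb.2, hεpos]
          · have hn1'' : ¬ k1 < n := fun hcon => hn0 (lt_trans hk0k1 hcon)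
            rw [if_neg hn0, if_neg hn1'']
            simpa using hb
        · rw [if_neg hm']
          simpa using hb
      · intro m hm
        rw [hpre m K, h4 m hm]
        by_cases hm' : m = m0
        · rw [if_pos hm', if_pos hk0, if_pos hk1K]; ring
        · rw [if_neg hm']; ring
    -- objective computation
    have hT1 : ∑ k ∈ Finset.range K, (∑ m ∈ Finset.range M, q m k)^2
        = ∑ k ∈ Finset.range K, (∑ m ∈ Finset.range M, p m k)^2
          + (2*(∑ m ∈ Finset.range M, p m k0)*(-ε) + ε^2
             + (2*(∑ m ∈ Finset.range M, p m k1)*ε + ε^2)) := by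
      have hc1' : ∀ k ∈ Finset.range K, (∑ m ∈ Finset.range M, q m k)^2
          = (∑ m ∈ Finset.range M, p m k)^2
            + (2*(∑ m ∈ Finset.range M, p m k)*(rowg k0 k1 ε k) + (rowg k0 k1 ε k)^2) := by
        intro k _
        rw [hcol k]; ring
      rw [Finset.sum_congr rfl hc1', Finset.sum_add_distrib]
      congr 1
      rw [sum_pair_support hk0 hk1K hk0k1ne
        (fun k => 2*(∑ m ∈ Finset.range M, p m k)*(rowg k0 k1 ε k) + (rowg k0 k1 ε k)^2)
        (fun k hku hkv => by simp [rowg, hku, hkv])]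
      rw [e0, e1]
      ring
    have hT2 : ∑ k ∈ Finset.range K, ∑ m ∈ Finset.range M, pL k * q m k
        = ∑ k ∈ Finset.range K, ∑ m ∈ Finset.range M, pL k * p m k
          + (pL k0 * (-ε) + pL k1 * ε) := by
      have hc1' : ∀ k ∈ Finset.range K, ∑ m ∈ Finset.range M, pL k * q m k
          = (∑ m ∈ Finset.range M, pL k * p m k) + pL k * rowg k0 k1 ε k := by
        intro k _
        rw [← Finset.mul_sum, hcol k, mul_add, Finset.mul_sum]
      rw [Finset.sum_congr rfl hc1', Finset.sum_add_distrib]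
      congr 1
      rw [sum_pair_support hk0 hk1K hk0k1ne (fun k => pL k * rowg k0 k1 ε k)
        (fun k hku hkv => by simp [rowg, hku, hkv])]
      rw [e0, e1]
    have hT3 : ∑ k ∈ Finset.range K, ∑ m ∈ Finset.range M, (c m / a) * qchg m k
        = ∑ k ∈ Finset.range K, ∑ m ∈ Finset.range M, (c m / a) * pchg m k
          + (c m0 / a) * (-ε) := by
      simp only [hqcdef]
      exact cost_delta c pchg hm0 hk0 (-ε)
    have hobj : Objective K M a pL c q qchg = Objective K M a pL c p pchg
        + ε * ((∑ m ∈ Finset.range M, p m k1) - (∑ m ∈ Finset.range M, p m k0)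
               + pL k1 - pL k0 + ε - c m0 / a) := by
      unfold Objective
      rw [hT1, hT2, hT3]
      ring
    have habs0 := abs_le.mp (hPb k0 hk0)
    have habs1 := abs_le.mp (hPb k1 hk1K)
    have habsL0 := abs_le.mp (hpLb k0 hk0)
    have habsL1 := abs_le.mp (hpLb k1 hk1K)
    have hcm : a * (2*B + 2*L + 2) ≤ c m0 := hc m0 hm0
    have hcda' : 2*B + 2*L + 2 ≤ c m0 / a := by
      rw [le_div_iff₀ ha]
      linarith
    have hneg : ((∑ m ∈ Finset.range M, p m k1) - (∑ m ∈ Finset.range M, p m k0)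
               + pL k1 - pL k0 + ε - c m0 / a) < 0 := by
      linarith [habs0.1, habs0.2, habs1.1, habs1.2, habsL0.1, habsL0.2, habsL1.1, habsL1.2]
    have hlt : Objective K M a pL c q qchg < Objective K M a pL c p pchg := by
      rw [hobj]
      have hm' := mul_neg_of_pos_of_neg hεpos hneg
      linarith
    exact absurd (hmin q qchg hfq) (not_le.mpr hlt)
end

section
/- If c_m > 0 for every m = 1,…,M, then every optimal solution (p*, p*_chg) of the operator's quadratic program satisfies p*_chg,m,k = max(p*_{m,k}, 0) for every m and every time index k; that is, p*_chg,m,k = p*_{m,k} whenever p*_{m,k} ≥ 0, and p*_chg,m,k = 0 whenever p*_{m,k} < 0. -/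
/-- If all price bids are positive, then every optimal solution satisfies
`pchg*_{m,k} = max(p*_{m,k}, 0)` for every firm `m` and time index `k`. -/
theorem stmt4 (K M : ℕ) (hK : 1 ≤ K) (hM : 1 ≤ M) (Δ a pgmin : ℝ)
    (hΔ : 0 < Δ) (ha : 0 < a) (pL emax c : ℕ → ℝ)
    (hemax : ∀ m < M, 0 < emax m) (hc : ∀ m < M, 0 < c m)
    (hne : ∃ p pchg : ℕ → ℕ → ℝ, Feasible K M Δ pgmin pL emax p pchg)
    (p pchg : ℕ → ℕ → ℝ) (hopt : Optimal K M Δ a pgmin pL emax c p pchg) :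
    ∀ m < M, ∀ k < K, pchg m k = max (p m k) 0 := by

  obtain ⟨hfeas, hmin⟩ := hopt
  have hfeas' : Feasible K M Δ pgmin pL emax p (fun m k => max (p m k) 0) := by
    obtain ⟨h1, h2, h3, h4⟩ := hfeas
    exact ⟨h1, fun m hm k hk => ⟨le_max_right _ _, le_max_left _ _⟩, h3, h4⟩
  have hle := hmin p (fun m k => max (p m k) 0) hfeas'
  unfold Objective at hle
  have hsum : ∑ k ∈ Finset.range K, ∑ m ∈ Finset.range M, (c m / a) * pchg m k
      ≤ ∑ k ∈ Finset.range K, ∑ m ∈ Finset.range M, (c m / a) * max (p m k) 0 := by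
    linarith
  have hpt : ∀ k ∈ Finset.range K, ∀ m ∈ Finset.range M,
      (c m / a) * max (p m k) 0 ≤ (c m / a) * pchg m k := by
    intro k hk m hm
    simp only [Finset.mem_range] at hk hm
    have h2 := hfeas.2.1 m hm k hk
    have hq : max (p m k) 0 ≤ pchg m k := max_le h2.2 h2.1
    have hca : 0 ≤ c m / a := le_of_lt (div_pos (hc m hm) ha)
    nlinarith
  intro m hm k hk
  by_contra hne'
  have h2 := hfeas.2.1 m hm k hk
  have hq : max (p m k) 0 < pchg m k :=
    lt_of_le_of_ne (max_le h2.2 h2.1) (fun h => hne' h.symm)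
  have hca : 0 < c m / a := div_pos (hc m hm) ha
  have hstrict : ∑ k ∈ Finset.range K, ∑ m ∈ Finset.range M, (c m / a) * max (p m k) 0
      < ∑ k ∈ Finset.range K, ∑ m ∈ Finset.range M, (c m / a) * pchg m k := by
    apply Finset.sum_lt_sum
    · intro kk hkk
      exact Finset.sum_le_sum (hpt kk hkk)
    · refine ⟨k, Finset.mem_range.mpr hk, ?_⟩
      apply Finset.sum_lt_sum
      · intro mm hmm
        exact hpt k (Finset.mem_range.mpr hk) mm hmm
      · exact ⟨m, Finset.mem_range.mpr hm, by nlinarith⟩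
  linarith
end

section
/- Suppose M = 2 and K_absorb is nonempty and equals a contiguous interval {k1, k1+1, …, k2} with 1 ≤ k1 ≤ k2 ≤ K−2. Then there exists a constant c_min > 0 such that, whenever c_1 ≥ c_min and c_2 ≥ c_min, every optimal solution (p*, p*_chg) of the operator's quadratic program satisfies, for each m ∈ {1,2}: p*_{m,k} = 0 for all k = 0,…,k1−1; p*_{m,k} = λ_{m,k}·(pg,min − pL,k) for all k ∈ K_absorb, where λ_{1,k} ≥ 0, λ_{2,k} ≥ 0 and λ_{1,k} + λ_{2,k} = 1 for every k ∈ K_absorb; and p*_{m,k} ≤ 0 for all k = k2+1,…,K−1. Moreover p*_chg,m,k = p*_{m,k} for k ∈ K_absorb and p*_chg,m,k = 0 for k ∉ K_absorb. -/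
/-!
At an optimum every charging variable is the positive part of the dispatch, so the objective is
the load cost of the aggregate profile `S` plus, for each unit, its bid times the energy it
charges. Every feasible point charges at least the surplus `T = ∑_{k1 ≤ k ≤ k2} (pgmin - pL k)`
that the window forces into storage. Conversely, any feasible point can be compared with one
that charges exactly `T`: its aggregate profile is `0` before the window, the surplus inside it,
and afterwards the discharges of `S` scaled down to total `T`; it is split among the units in
proportion to their states of charge at the end of the window, so no unit charges more than
before. Its aggregate profile is `ℓ¹`-close to `S`, within twice the excess charge, and the load
cost is Lipschitz on bounded profiles; so once the bids exceed twice that Lipschitz constant,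
optimality forces the excess to vanish. Zero excess is exactly the claimed shape: no charging
outside the window, no discharging inside it, and the surplus absorbed exactly.
-/

open Finset

lemma sum_abs_eq_two_mul_sum_posPart {ι : Type*} {s : Finset ι} {f : ι → ℝ}
    (h : ∑ i ∈ s, f i = 0) : ∑ i ∈ s, |f i| = 2 * ∑ i ∈ s, (f i)⁺ := by
  have hf : ∀ i ∈ s, |f i| = 2 * (f i)⁺ - f i := fun i _ => by
    linarith [abs_add_eq_two_nsmul_posPart (f i), two_nsmul (f i)⁺]
  rw [sum_congr rfl hf, sum_sub_distrib, h, mul_sum, sub_zero]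

lemma sum_range_mem_Icc_of_nonneg_of_nonpos {f : ℕ → ℝ} {n K : ℕ}
    (hrise : ∀ k < n, 0 ≤ f k) (hfall : ∀ k, n ≤ k → k < K → f k ≤ 0)
    (htotal : ∑ k ∈ range K, f k = 0) {k : ℕ} (hk : k ≤ K) :
    ∑ j ∈ range k, f j ∈ Set.Icc 0 (∑ j ∈ range n, f j) := by
  rcases le_total k n with hkn | hnk
  · exact ⟨sum_nonneg fun j hj => hrise j ((mem_range.1 hj).trans_le hkn),
      sum_le_sum_of_subset_of_nonneg (range_subset_range.2 hkn)
        fun j hj _ => hrise j (mem_range.1 hj)⟩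
  · have hnk' : ∑ j ∈ Ico n k, f j ≤ 0 :=
      sum_nonpos fun j hj => by grind
    have hkK : ∑ j ∈ Ico k K, f j ≤ 0 :=
      sum_nonpos fun j hj => by grind
    have h₁ := sum_range_add_sum_Ico f hnk
    have h₂ := sum_range_add_sum_Ico f hk
    constructor <;> linarith

lemma sum_range_le_sum_Ico_negPart {S : ℕ → ℝ} {n K : ℕ} (hnK : n ≤ K)
    (hS : ∑ k ∈ range K, S k = 0) : ∑ k ∈ range n, S k ≤ ∑ k ∈ Ico n K, (S k)⁻ := by
  have h := sum_range_add_sum_Ico S hnK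
  have hneg : ∑ k ∈ Ico n K, -S k ≤ ∑ k ∈ Ico n K, (S k)⁻ :=
    sum_le_sum fun k _ => neg_le_negPart (S k)
  rw [sum_neg_distrib] at hneg
  linarith

lemma posPart_mul_of_nonneg {w : ℝ} (hw : 0 ≤ w) (x : ℝ) : (w * x)⁺ = w * x⁺ := by
  rw [posPart_def, posPart_def, mul_max_of_nonneg _ _ hw, mul_zero]

lemma abs_le_of_sum_range_mem_Icc {f : ℕ → ℝ} {E : ℝ} {K : ℕ}
    (h : ∀ k ≤ K, ∑ j ∈ range k, f j ∈ Set.Icc 0 E) {k : ℕ} (hk : k < K) : |f k| ≤ E := by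
  have h₁ := h k hk.le
  have h₂ := h (k + 1) hk
  rw [sum_range_succ, Set.mem_Icc] at h₂
  rw [Set.mem_Icc] at h₁
  rw [abs_le]; constructor <;> linarith

lemma exists_weights_mul_le {M : ℕ} (hM : 0 < M) {u : ℕ → ℝ} (hu : ∀ m < M, 0 ≤ u m)
    {T : ℝ} (hT : 0 ≤ T) (hTu : T ≤ ∑ m ∈ range M, u m) :
    ∃ w : ℕ → ℝ, (∀ m < M, 0 ≤ w m ∧ w m * T ≤ u m) ∧ ∑ m ∈ range M, w m = 1 := by
  rcases (sum_nonneg fun m hm => hu m (mem_range.1 hm)).eq_or_lt with hU | hU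
  · refine ⟨fun _ => 1 / M, fun m hm => ⟨by positivity, ?_⟩, ?_⟩
    · rw [le_antisymm (hU ▸ hTu) hT, mul_zero]; exact hu m hm
    · simp [hM.ne']
  · refine ⟨fun m => u m / ∑ m ∈ range M, u m, fun m hm => ⟨div_nonneg (hu m hm) hU.le, ?_⟩, ?_⟩
    · rw [div_mul_eq_mul_div, div_le_iff₀ hU]
      exact mul_le_mul_of_nonneg_left hTu (hu m hm)
    · rw [← sum_div, div_self hU.ne']

noncomputable def share (x d : ℝ) : ℝ := if d = 0 then 1 / 2 else x / d

lemma share_nonneg {x d : ℝ} (hx : 0 ≤ x) (hd : 0 ≤ d) : 0 ≤ share x d := by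
  unfold share; split_ifs <;> positivity

lemma share_add_share {x y d : ℝ} (h : x + y = d) : share x d + share y d = 1 := by
  unfold share; split_ifs with hd
  · norm_num
  · rw [← add_div, h, div_self hd]

lemma share_mul_self {x d : ℝ} (hx : 0 ≤ x) (hxd : x ≤ d) : share x d * d = x := by
  unfold share; split_ifs with hd
  · rw [hd, mul_zero]; linarith
  · exact div_mul_cancel₀ x hd

noncomputable def loadCost (K : ℕ) (pL S : ℕ → ℝ) : ℝ :=
  ∑ k ∈ range K, ((1 / 2) * S k ^ 2 + pL k * S k)

lemma objective_eq_loadCost_add (K M : ℕ) (a : ℝ) (pL c : ℕ → ℝ) (p pchg : ℕ → ℕ → ℝ) :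
    Objective K M a pL c p pchg = loadCost K pL (fun k => ∑ m ∈ range M, p m k)
      + ∑ m ∈ range M, c m / a * ∑ k ∈ range K, pchg m k := by
  simp only [Objective, loadCost, sum_add_distrib, mul_sum]
  congr 1
  exact sum_comm

lemma loadCost_sub_le {K : ℕ} {pL x y : ℕ → ℝ} {B L : ℝ} (hx : ∀ k < K, |x k| ≤ B)
    (hy : ∀ k < K, |y k| ≤ B) (hL : ∀ k < K, |pL k| ≤ L) :
    loadCost K pL x - loadCost K pL y ≤ (B + L) * ∑ k ∈ range K, |x k - y k| := by
  rw [loadCost, loadCost, ← sum_sub_distrib, mul_sum]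
  refine sum_le_sum fun k hk => ?_
  have hk := mem_range.1 hk
  have hmid : |(x k + y k) / 2 + pL k| ≤ B + L := by
    have := abs_add_le ((x k + y k) / 2) (pL k)
    have := abs_add_le (x k) (y k)
    rw [abs_div, abs_two] at *
    linarith [hx k hk, hy k hk, hL k hk]
  calc (1 / 2 * x k ^ 2 + pL k * x k) - (1 / 2 * y k ^ 2 + pL k * y k)
      = (x k - y k) * ((x k + y k) / 2 + pL k) := by ring
    _ ≤ |x k - y k| * |(x k + y k) / 2 + pL k| := (le_abs_self _).trans (abs_mul _ _).le
    _ ≤ |x k - y k| * (B + L) := mul_le_mul_of_nonneg_left hmid (abs_nonneg _)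
    _ = (B + L) * |x k - y k| := mul_comm _ _

namespace Feasible

variable {K M : ℕ} {Δ pgmin : ℝ} {pL emax : ℕ → ℝ} {p pchg : ℕ → ℕ → ℝ}

lemma posPart (h : Feasible K M Δ pgmin pL emax p pchg) :
    Feasible K M Δ pgmin pL emax p (fun m k => (p m k)⁺) :=
  ⟨h.1, fun _ _ _ _ => ⟨posPart_nonneg _, le_posPart _⟩, h.2.2⟩

lemma sum_range_mem_Icc (h : Feasible K M Δ pgmin pL emax p pchg) {m : ℕ} (hm : m < M)
    (hE : 0 ≤ emax m / Δ) {k : ℕ} (hk : k ≤ K) :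
    ∑ j ∈ range k, p m j ∈ Set.Icc 0 (emax m / Δ) := by
  rcases Nat.eq_zero_or_pos k with rfl | hk0
  · simpa using hE
  rcases hk.eq_or_lt with rfl | hkK
  · simpa [h.2.2.2 m hm] using hE
  exact h.2.2.1 m hm k hk0 (by omega)

lemma abs_le (h : Feasible K M Δ pgmin pL emax p pchg) {m : ℕ} (hm : m < M)
    (hE : 0 ≤ emax m / Δ) {k : ℕ} (hk : k < K) : |p m k| ≤ emax m / Δ :=
  abs_le_of_sum_range_mem_Icc (fun _ hj => h.sum_range_mem_Icc hm hE hj) hk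

lemma eq_zero_of_nonpos (h : Feasible K M Δ pgmin pL emax p pchg) {m : ℕ} (hm : m < M)
    (hE : 0 ≤ emax m / Δ) {n : ℕ} (hn : n ≤ K) (hnp : ∀ k < n, p m k ≤ 0) {k : ℕ}
    (hk : k < n) : p m k = 0 := by
  have hle : ∀ j ∈ range n, p m j ≤ 0 := fun j hj => hnp j (mem_range.1 hj)
  exact (sum_eq_zero_iff_of_nonpos hle).1
    ((sum_nonpos hle).antisymm (h.sum_range_mem_Icc hm hE hn).1) k (mem_range.2 hk)

end Feasible

lemma Optimal.pchg_eq_posPart {K M : ℕ} {Δ a pgmin : ℝ} {pL emax c : ℕ → ℝ}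
    {p pchg : ℕ → ℕ → ℝ} (h : Optimal K M Δ a pgmin pL emax c p pchg)
    (hc : ∀ m < M, 0 < c m / a) {m k : ℕ} (hm : m < M) (hk : k < K) :
    pchg m k = (p m k)⁺ := by
  set g : ℕ → ℕ → ℝ := fun m k => c m / a * (pchg m k - (p m k)⁺)
  have hg : ∀ m ∈ range M, ∀ k ∈ range K, 0 ≤ g m k := fun m hm k hk => by
    have := h.1.2.1 m (mem_range.1 hm) k (mem_range.1 hk)
    exact mul_nonneg (hc m (mem_range.1 hm)).le (sub_nonneg.2 (max_le this.2 this.1))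
  have hsum : ∑ m ∈ range M, ∑ k ∈ range K, g m k = 0 := by
    refine le_antisymm ?_ (sum_nonneg fun m hm => sum_nonneg (hg m hm))
    have := h.2 p _ h.1.posPart
    rw [objective_eq_loadCost_add, objective_eq_loadCost_add] at this
    simp only [g, mul_sum, mul_sub, sum_sub_distrib] at this ⊢
    linarith
  have hm' := mem_range.2 hm
  have hgmk := (sum_eq_zero_iff_of_nonneg (hg m hm')).1
    ((sum_eq_zero_iff_of_nonneg fun m hm => sum_nonneg (hg m hm)).1 hsum m hm') k (mem_range.2 hk)
  have := (mul_eq_zero.1 hgmk).resolve_left (hc m hm).ne'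
  linarith

section DischargeProfile

variable {K k1 k2 k : ℕ} {d S : ℕ → ℝ}

noncomputable def dischargeScale (K k1 k2 : ℕ) (d S : ℕ → ℝ) : ℝ :=
  (∑ j ∈ Ico k1 (k2 + 1), d j) / ∑ j ∈ Ico (k2 + 1) K, (S j)⁻

/-- The aggregate load of the comparison point. -/
noncomputable def dischargeProfile (K k1 k2 : ℕ) (d S : ℕ → ℝ) (k : ℕ) : ℝ :=
  if k < k1 then 0 else if k ≤ k2 then d k else -(dischargeScale K k1 k2 d S * (S k)⁻)

lemma dischargeScale_nonneg
    (hT : ∑ j ∈ Ico k1 (k2 + 1), d j ∈ Set.Icc 0 (∑ j ∈ Ico (k2 + 1) K, (S j)⁻)) :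
    0 ≤ dischargeScale K k1 k2 d S :=
  div_nonneg hT.1 (hT.1.trans hT.2)

lemma dischargeScale_le_one
    (hT : ∑ j ∈ Ico k1 (k2 + 1), d j ∈ Set.Icc 0 (∑ j ∈ Ico (k2 + 1) K, (S j)⁻)) :
    dischargeScale K k1 k2 d S ≤ 1 :=
  div_le_one_of_le₀ hT.2 (hT.1.trans hT.2)

lemma dischargeScale_mul
    (hT : ∑ j ∈ Ico k1 (k2 + 1), d j ∈ Set.Icc 0 (∑ j ∈ Ico (k2 + 1) K, (S j)⁻)) :
    dischargeScale K k1 k2 d S * ∑ j ∈ Ico (k2 + 1) K, (S j)⁻ = ∑ j ∈ Ico k1 (k2 + 1), d j :=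
  div_mul_cancel_of_imp fun h => le_antisymm (h ▸ hT.2) hT.1

lemma dischargeProfile_of_lt (h : k < k1) : dischargeProfile K k1 k2 d S k = 0 :=
  if_pos h

lemma dischargeProfile_of_mem (h₁ : k1 ≤ k) (h₂ : k ≤ k2) :
    dischargeProfile K k1 k2 d S k = d k := by
  simp [dischargeProfile, h₁, h₂]

lemma dischargeProfile_of_gt (h₁ : k1 ≤ k2) (h : k2 < k) :
    dischargeProfile K k1 k2 d S k = -(dischargeScale K k1 k2 d S * (S k)⁻) := by
  simp [dischargeProfile, h.not_ge, (h₁.trans_lt h).not_gt]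

lemma dischargeProfile_nonneg (hdA : ∀ k, k1 ≤ k → k ≤ k2 → 0 ≤ d k) (hk : k ≤ k2) :
    0 ≤ dischargeProfile K k1 k2 d S k := by
  rcases lt_or_ge k k1 with h | h
  · rw [dischargeProfile_of_lt h]
  · rw [dischargeProfile_of_mem h hk]; exact hdA k h hk

lemma dischargeProfile_nonpos (hk12 : k1 ≤ k2)
    (hT : ∑ j ∈ Ico k1 (k2 + 1), d j ∈ Set.Icc 0 (∑ j ∈ Ico (k2 + 1) K, (S j)⁻)) (hk : k2 < k) :
    dischargeProfile K k1 k2 d S k ≤ 0 := by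
  rw [dischargeProfile_of_gt hk12 hk, neg_nonpos]
  exact mul_nonneg (dischargeScale_nonneg hT) (negPart_nonneg _)

lemma sum_range_succ_dischargeProfile (hk12 : k1 ≤ k2) :
    ∑ k ∈ range (k2 + 1), dischargeProfile K k1 k2 d S k = ∑ k ∈ Ico k1 (k2 + 1), d k := by
  rw [← sum_range_add_sum_Ico _ (by omega : k1 ≤ k2 + 1),
    sum_eq_zero fun k hk => dischargeProfile_of_lt (mem_range.1 hk), zero_add]
  exact sum_congr rfl fun k hk => dischargeProfile_of_mem (mem_Ico.1 hk).1 (by grind)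

lemma sum_Ico_dischargeProfile (hk12 : k1 ≤ k2)
    (hT : ∑ j ∈ Ico k1 (k2 + 1), d j ∈ Set.Icc 0 (∑ j ∈ Ico (k2 + 1) K, (S j)⁻)) :
    ∑ k ∈ Ico (k2 + 1) K, dischargeProfile K k1 k2 d S k = -∑ k ∈ Ico k1 (k2 + 1), d k := by
  rw [sum_congr rfl fun k hk => dischargeProfile_of_gt hk12 (mem_Ico.1 hk).1, sum_neg_distrib,
    ← mul_sum, dischargeScale_mul hT]

lemma sum_range_dischargeProfile (hk12 : k1 ≤ k2) (hK : k2 < K)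
    (hT : ∑ j ∈ Ico k1 (k2 + 1), d j ∈ Set.Icc 0 (∑ j ∈ Ico (k2 + 1) K, (S j)⁻)) :
    ∑ k ∈ range K, dischargeProfile K k1 k2 d S k = 0 := by
  rw [← sum_range_add_sum_Ico _ hK, sum_range_succ_dischargeProfile hk12,
    sum_Ico_dischargeProfile hk12 hT, add_neg_cancel]

lemma sum_range_dischargeProfile_mem_Icc (hk12 : k1 ≤ k2) (hK : k2 < K)
    (hdA : ∀ k, k1 ≤ k → k ≤ k2 → 0 ≤ d k)
    (hT : ∑ j ∈ Ico k1 (k2 + 1), d j ∈ Set.Icc 0 (∑ j ∈ Ico (k2 + 1) K, (S j)⁻))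
    (hk : k ≤ K) :
    ∑ j ∈ range k, dischargeProfile K k1 k2 d S j ∈ Set.Icc 0 (∑ j ∈ Ico k1 (k2 + 1), d j) := by
  rw [← sum_range_succ_dischargeProfile hk12]
  exact sum_range_mem_Icc_of_nonneg_of_nonpos
    (fun j hj => dischargeProfile_nonneg hdA (Nat.lt_succ_iff.1 hj))
    (fun j hj _ => dischargeProfile_nonpos hk12 hT hj) (sum_range_dischargeProfile hk12 hK hT) hk

lemma le_dischargeProfile (hk12 : k1 ≤ k2)
    (hT : ∑ j ∈ Ico k1 (k2 + 1), d j ∈ Set.Icc 0 (∑ j ∈ Ico (k2 + 1) K, (S j)⁻))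
    (hdS : d k ≤ S k) (hdoff : ¬(k1 ≤ k ∧ k ≤ k2) → d k ≤ 0) :
    d k ≤ dischargeProfile K k1 k2 d S k := by
  rcases lt_or_ge k k1 with h | h
  · rw [dischargeProfile_of_lt h]; exact hdoff (by omega)
  rcases le_or_gt k k2 with h' | h'
  · rw [dischargeProfile_of_mem h h']
  rw [dischargeProfile_of_gt hk12 h']
  have hneg : (S k)⁻ ≤ -d k := max_le (by linarith) (by linarith [hdoff (by omega)])
  have := mul_le_of_le_one_left (negPart_nonneg (S k)) (dischargeScale_le_one hT)
  linarith

lemma sum_posPart_dischargeProfile (hk12 : k1 ≤ k2) (hK : k2 < K)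
    (hdA : ∀ k, k1 ≤ k → k ≤ k2 → 0 ≤ d k)
    (hT : ∑ j ∈ Ico k1 (k2 + 1), d j ∈ Set.Icc 0 (∑ j ∈ Ico (k2 + 1) K, (S j)⁻)) :
    ∑ k ∈ range K, (dischargeProfile K k1 k2 d S k)⁺ = ∑ k ∈ Ico k1 (k2 + 1), d k := by
  rw [← sum_range_add_sum_Ico _ hK,
    sum_eq_zero fun k hk => posPart_eq_zero.2 (dischargeProfile_nonpos hk12 hT (mem_Ico.1 hk).1),
    add_zero, ← sum_range_succ_dischargeProfile hk12]
  exact sum_congr rfl fun k hk =>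
    posPart_eq_self.2 (dischargeProfile_nonneg hdA (Nat.lt_succ_iff.1 (mem_range.1 hk)))

lemma sum_abs_dischargeProfile_sub_le (hk12 : k1 ≤ k2) (hK : k2 < K)
    (hdS : ∀ k, k1 ≤ k → k ≤ k2 → d k ≤ S k)
    (hT : ∑ j ∈ Ico k1 (k2 + 1), d j ∈ Set.Icc 0 (∑ j ∈ Ico (k2 + 1) K, (S j)⁻)) :
    ∑ k ∈ range K, |dischargeProfile K k1 k2 d S k - S k|
      ≤ ∑ k ∈ range K, |S k| - 2 * ∑ k ∈ Ico k1 (k2 + 1), d k := by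
  set ρ := dischargeScale K k1 k2 d S
  have hB : ∑ k ∈ range k1, |dischargeProfile K k1 k2 d S k - S k| = ∑ k ∈ range k1, |S k| :=
    sum_congr rfl fun k hk => by rw [dischargeProfile_of_lt (mem_range.1 hk), zero_sub, abs_neg]
  have hA : ∑ k ∈ Ico k1 (k2 + 1), |dischargeProfile K k1 k2 d S k - S k|
      ≤ ∑ k ∈ Ico k1 (k2 + 1), |S k| - ∑ k ∈ Ico k1 (k2 + 1), d k := by
    rw [← sum_sub_distrib]
    refine sum_le_sum fun k hk => ?_
    obtain ⟨h₁, h₂⟩ := mem_Ico.1 hk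
    rw [dischargeProfile_of_mem h₁ (by omega), abs_sub_comm,
      abs_of_nonneg (sub_nonneg.2 (hdS k h₁ (by omega)))]
    linarith [le_abs_self (S k)]
  have hC : ∑ k ∈ Ico (k2 + 1) K, |dischargeProfile K k1 k2 d S k - S k|
      ≤ ∑ k ∈ Ico (k2 + 1) K, |S k| - ∑ k ∈ Ico k1 (k2 + 1), d k := by
    rw [← dischargeScale_mul hT, mul_sum, ← sum_sub_distrib]
    refine sum_le_sum fun k hk => ?_
    rw [dischargeProfile_of_gt hk12 (mem_Ico.1 hk).1, ← posPart_add_negPart (S k)]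
    have hS := posPart_sub_negPart (S k)
    have hP := posPart_nonneg (S k)
    have hN : 0 ≤ (1 - ρ) * (S k)⁻ :=
      mul_nonneg (sub_nonneg.2 (dischargeScale_le_one hT)) (negPart_nonneg _)
    rw [abs_le]; constructor <;> linarith
  rw [← sum_range_add_sum_Ico _ hK, ← sum_range_add_sum_Ico _ (by omega : k1 ≤ k2 + 1),
    ← sum_range_add_sum_Ico _ hK, ← sum_range_add_sum_Ico _ (by omega : k1 ≤ k2 + 1), hB]
  linarith

end DischargeProfile

section ComparisonPoint

variable {K M : ℕ} {Δ a pgmin : ℝ} {pL emax c : ℕ → ℝ} {k1 k2 : ℕ} {p pchg : ℕ → ℕ → ℝ}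

lemma Feasible.sum_Ico_le_sum_sum_range (h : Feasible K M Δ pgmin pL emax p pchg)
    (hE : ∀ m < M, 0 ≤ emax m / Δ) (hk12 : k1 ≤ k2) (hK : k2 < K) :
    ∑ k ∈ Ico k1 (k2 + 1), (pgmin - pL k) ≤ ∑ m ∈ range M, ∑ k ∈ range (k2 + 1), p m k := by
  have hB : 0 ≤ ∑ m ∈ range M, ∑ k ∈ range k1, p m k := sum_nonneg fun m hm =>
    (h.sum_range_mem_Icc (mem_range.1 hm) (hE m (mem_range.1 hm)) (by omega)).1
  have hA : ∑ k ∈ Ico k1 (k2 + 1), (pgmin - pL k) ≤ ∑ k ∈ Ico k1 (k2 + 1), ∑ m ∈ range M, p m k :=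
    sum_le_sum fun k hk => h.1 k (by grind)
  simp only [← sum_range_add_sum_Ico _ (by omega : k1 ≤ k2 + 1), sum_add_distrib]
  rw [sum_comm] at hA
  linarith

lemma sum_Ico_sub_nonneg (hK : k2 < K) (habsorb : ∀ k < K, (pL k ≤ pgmin ↔ k1 ≤ k ∧ k ≤ k2)) :
    0 ≤ ∑ k ∈ Ico k1 (k2 + 1), (pgmin - pL k) :=
  sum_nonneg fun k hk => sub_nonneg.2 ((habsorb k (by grind)).2 (by grind))

lemma feasible_mul_profile {b : ℕ → ℝ} {w : ℕ → ℝ} {T : ℝ}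
    (hb : ∀ k < K, pgmin - pL k ≤ b k) (hbT : ∀ k ≤ K, ∑ j ∈ range k, b j ∈ Set.Icc 0 T)
    (hb0 : ∑ k ∈ range K, b k = 0) (hw : ∀ m < M, 0 ≤ w m ∧ w m * T ≤ emax m / Δ)
    (hw1 : ∑ m ∈ range M, w m = 1) :
    Feasible K M Δ pgmin pL emax (fun m k => w m * b k) (fun m k => (w m * b k)⁺) := by
  refine ⟨fun k hk => ?_, fun _ _ _ _ => ⟨posPart_nonneg _, le_posPart _⟩,
    fun m hm k _ hk => ?_, fun m _ => by rw [← mul_sum, hb0, mul_zero]⟩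
  · rw [← sum_mul, hw1, one_mul]; exact hb k hk
  · rw [← mul_sum]
    obtain ⟨h₀, h₁⟩ := hbT k (by omega)
    exact ⟨mul_nonneg (hw m hm).1 h₀,
      (mul_le_mul_of_nonneg_left h₁ (hw m hm).1).trans (hw m hm).2⟩

lemma Feasible.sum_abs_sum_le (h : Feasible K M Δ pgmin pL emax p pchg) :
    ∑ k ∈ range K, |∑ m ∈ range M, p m k| ≤ 2 * ∑ m ∈ range M, ∑ k ∈ range K, (p m k)⁺ := by
  calc ∑ k ∈ range K, |∑ m ∈ range M, p m k|
      ≤ ∑ k ∈ range K, ∑ m ∈ range M, |p m k| := sum_le_sum fun k _ => abs_sum_le_sum_abs _ _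
    _ = ∑ m ∈ range M, ∑ k ∈ range K, |p m k| := sum_comm
    _ = 2 * ∑ m ∈ range M, ∑ k ∈ range K, (p m k)⁺ := by
      rw [mul_sum]
      exact sum_congr rfl fun m hm =>
        sum_abs_eq_two_mul_sum_posPart (h.2.2.2 m (mem_range.1 hm))

theorem Feasible.exists_comparison (h : Feasible K M Δ pgmin pL emax p pchg) (hM : 0 < M)
    (hE : ∀ m < M, 0 ≤ emax m / Δ) (hk12 : k1 ≤ k2) (hK : k2 < K)
    (habsorb : ∀ k < K, (pL k ≤ pgmin ↔ k1 ≤ k ∧ k ≤ k2)) :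
    ∃ q : ℕ → ℕ → ℝ, Feasible K M Δ pgmin pL emax q (fun m k => (q m k)⁺) ∧
      (∀ m < M, ∑ k ∈ range K, (q m k)⁺ ≤ ∑ k ∈ range K, (p m k)⁺) ∧
      ∑ m ∈ range M, ∑ k ∈ range K, (q m k)⁺ = ∑ k ∈ Ico k1 (k2 + 1), (pgmin - pL k) ∧
      (∀ k < K, |∑ m ∈ range M, q m k| ≤ ∑ k ∈ Ico k1 (k2 + 1), (pgmin - pL k)) ∧
      ∑ k ∈ range K, |∑ m ∈ range M, q m k - ∑ m ∈ range M, p m k|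
        ≤ 2 * (∑ m ∈ range M, ∑ k ∈ range K, (p m k)⁺ - ∑ k ∈ Ico k1 (k2 + 1), (pgmin - pL k)) := by
  set d : ℕ → ℝ := fun k => pgmin - pL k
  set S : ℕ → ℝ := fun k => ∑ m ∈ range M, p m k
  set T := ∑ k ∈ Ico k1 (k2 + 1), d k
  have hdA : ∀ k, k1 ≤ k → k ≤ k2 → 0 ≤ d k := fun k h₁ h₂ =>
    sub_nonneg.2 ((habsorb k (by omega)).2 ⟨h₁, h₂⟩)
  have hdS : ∀ k, k1 ≤ k → k ≤ k2 → d k ≤ S k := fun k _ _ => h.1 k (by omega)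
  set u : ℕ → ℝ := fun m => ∑ j ∈ range (k2 + 1), p m j
  have hu (m : ℕ) (hm : m < M) : u m ∈ Set.Icc 0 (emax m / Δ) :=
    h.sum_range_mem_Icc hm (hE m hm) hK
  have hTu : T ≤ ∑ m ∈ range M, u m := h.sum_Ico_le_sum_sum_range hE hk12 hK
  have hS : ∑ k ∈ range K, S k = 0 :=
    sum_comm.trans (sum_eq_zero fun m hm => h.2.2.2 m (mem_range.1 hm))
  have hT : T ∈ Set.Icc 0 (∑ k ∈ Ico (k2 + 1) K, (S k)⁻) := ⟨sum_Ico_sub_nonneg hK habsorb,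
    hTu.trans (sum_comm.trans_le (sum_range_le_sum_Ico_negPart hK hS))⟩
  set b := dischargeProfile K k1 k2 d S
  have hbT (k : ℕ) (hk : k ≤ K) : ∑ j ∈ range k, b j ∈ Set.Icc 0 T :=
    sum_range_dischargeProfile_mem_Icc hk12 hK hdA hT hk
  obtain ⟨w, hw, hw1⟩ := exists_weights_mul_le hM (fun m hm => (hu m hm).1) hT.1 hTu
  have hpos (m : ℕ) (hm : m < M) : ∑ k ∈ range K, (w m * b k)⁺ = w m * T := by
    simp only [posPart_mul_of_nonneg (hw m hm).1, ← mul_sum]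
    rw [sum_posPart_dischargeProfile hk12 hK hdA hT]
  have hqb (k : ℕ) : ∑ m ∈ range M, w m * b k = b k := by rw [← sum_mul, hw1, one_mul]
  refine ⟨fun m k => w m * b k, feasible_mul_profile (fun k hk => ?_)
    hbT (sum_range_dischargeProfile hk12 hK hT)
    (fun m hm => ⟨(hw m hm).1, (hw m hm).2.trans (hu m hm).2⟩) hw1,
    fun m hm => ?_, ?_, fun k hk => ?_, ?_⟩
  · refine le_dischargeProfile hk12 hT (h.1 k hk) fun hk' => ?_
    exact sub_nonpos.2 (not_le.1 (mt (habsorb k hk).1 hk')).le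
  · calc ∑ k ∈ range K, (w m * b k)⁺ = w m * T := hpos m hm
      _ ≤ u m := (hw m hm).2
      _ ≤ ∑ j ∈ range (k2 + 1), (p m j)⁺ := sum_le_sum fun j _ => le_posPart _
      _ ≤ ∑ j ∈ range K, (p m j)⁺ := sum_le_sum_of_subset_of_nonneg
          (range_subset_range.2 hK) fun _ _ _ => posPart_nonneg _
  · rw [sum_congr rfl fun m hm => hpos m (mem_range.1 hm), ← sum_mul, hw1, one_mul]
  · rw [hqb]; exact abs_le_of_sum_range_mem_Icc hbT hk
  · simp only [hqb]
    linarith [sum_abs_dischargeProfile_sub_le hk12 hK hdS hT, h.sum_abs_sum_le]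

theorem Feasible.sum_posPart_eq_ite (h : Feasible K M Δ pgmin pL emax p pchg)
    {A : Finset ℕ} (hA : A ⊆ range K)
    (hP : ∑ m ∈ range M, ∑ k ∈ range K, (p m k)⁺ ≤ ∑ k ∈ A, (pgmin - pL k)) {k : ℕ}
    (hk : k < K) : ∑ m ∈ range M, (p m k)⁺ = if k ∈ A then pgmin - pL k else 0 := by
  set ψ : ℕ → ℝ := fun j => ∑ m ∈ range M, (p m j)⁺ - if j ∈ A then pgmin - pL j else 0
  have hψ : ∀ j ∈ range K, 0 ≤ ψ j := fun j hj => by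
    simp only [ψ, sub_nonneg]
    split_ifs
    · exact (h.1 j (mem_range.1 hj)).trans (sum_le_sum fun m _ => le_posPart _)
    · exact sum_nonneg fun m _ => posPart_nonneg _
  have hsum : ∑ j ∈ range K, ψ j ≤ 0 := by
    simp only [ψ]
    rw [sum_sub_distrib, sum_ite_mem, inter_eq_right.2 hA, sum_comm]
    linarith
  have := (sum_eq_zero_iff_of_nonneg hψ).1 (hsum.antisymm (sum_nonneg hψ)) k (mem_range.2 hk)
  exact sub_eq_zero.1 this

theorem Feasible.sum_eq_and_nonneg_of_mem (h : Feasible K M Δ pgmin pL emax p pchg)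
    {A : Finset ℕ} (hA : A ⊆ range K)
    (hP : ∑ m ∈ range M, ∑ k ∈ range K, (p m k)⁺ ≤ ∑ k ∈ A, (pgmin - pL k)) {k : ℕ}
    (hk : k ∈ A) : ∑ m ∈ range M, p m k = pgmin - pL k ∧ ∀ m < M, 0 ≤ p m k := by
  have hkK := mem_range.1 (hA hk)
  have hpos := h.sum_posPart_eq_ite hA hP hkK
  rw [if_pos hk] at hpos
  have hle : ∑ m ∈ range M, p m k ≤ ∑ m ∈ range M, (p m k)⁺ := sum_le_sum fun m _ => le_posPart _
  have heq : ∑ m ∈ range M, p m k = ∑ m ∈ range M, (p m k)⁺ := hle.antisymm (hpos ▸ h.1 k hkK)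
  refine ⟨heq.trans hpos, fun m hm => ?_⟩
  have := (sum_eq_sum_iff_of_le fun m _ => le_posPart (p m k)).1 heq m (mem_range.2 hm)
  exact posPart_eq_self.1 this.symm

theorem Feasible.nonpos_of_notMem (h : Feasible K M Δ pgmin pL emax p pchg)
    {A : Finset ℕ} (hA : A ⊆ range K)
    (hP : ∑ m ∈ range M, ∑ k ∈ range K, (p m k)⁺ ≤ ∑ k ∈ A, (pgmin - pL k)) {k : ℕ}
    (hk : k < K) (hkA : k ∉ A) {m : ℕ} (hm : m < M) : p m k ≤ 0 := by
  have hpos := h.sum_posPart_eq_ite hA hP hk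
  rw [if_neg hkA] at hpos
  exact posPart_eq_zero.1 ((sum_eq_zero_iff_of_nonneg fun m _ => posPart_nonneg (p m k)).1 hpos m
    (mem_range.2 hm))

noncomputable def loadCostLipschitz (K M k1 k2 : ℕ) (Δ pgmin : ℝ) (pL emax : ℕ → ℝ) : ℝ :=
  ∑ m ∈ range M, emax m / Δ + ∑ k ∈ Ico k1 (k2 + 1), (pgmin - pL k) + ∑ k ∈ range K, |pL k|

lemma loadCostLipschitz_nonneg (hE : ∀ m < M, 0 ≤ emax m / Δ) (hK : k2 < K)
    (habsorb : ∀ k < K, (pL k ≤ pgmin ↔ k1 ≤ k ∧ k ≤ k2)) :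
    0 ≤ loadCostLipschitz K M k1 k2 Δ pgmin pL emax :=
  add_nonneg (add_nonneg (sum_nonneg fun m hm => hE m (mem_range.1 hm))
    (sum_Ico_sub_nonneg hK habsorb)) (sum_nonneg fun k _ => abs_nonneg (pL k))

theorem Optimal.sum_posPart_le (h : Optimal K M Δ a pgmin pL emax c p pchg) (hM : 0 < M)
    (hE : ∀ m < M, 0 ≤ emax m / Δ) (hk12 : k1 ≤ k2) (hK : k2 < K)
    (habsorb : ∀ k < K, (pL k ≤ pgmin ↔ k1 ≤ k ∧ k ≤ k2))
    (hc : ∀ m < M, 2 * loadCostLipschitz K M k1 k2 Δ pgmin pL emax + 1 ≤ c m / a) :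
    ∑ m ∈ range M, ∑ k ∈ range K, (p m k)⁺ ≤ ∑ k ∈ Ico k1 (k2 + 1), (pgmin - pL k) := by
  set C := loadCostLipschitz K M k1 k2 Δ pgmin pL emax
  set T := ∑ k ∈ Ico k1 (k2 + 1), (pgmin - pL k)
  set P := ∑ m ∈ range M, ∑ k ∈ range K, (p m k)⁺
  have hC : 0 ≤ C := loadCostLipschitz_nonneg hE hK habsorb
  obtain ⟨q, hq, hqp, hqT, hqb, hqdist⟩ := h.1.exists_comparison hM hE hk12 hK habsorb
  have hS (k : ℕ) (hk : k < K) : |∑ m ∈ range M, p m k| ≤ ∑ m ∈ range M, emax m / Δ + T :=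
    (abs_sum_le_sum_abs _ _).trans <| le_add_of_le_of_nonneg
      (sum_le_sum fun m hm => h.1.abs_le (mem_range.1 hm) (hE m (mem_range.1 hm)) hk)
      (sum_Ico_sub_nonneg hK habsorb)
  have hq' (k : ℕ) (hk : k < K) : |∑ m ∈ range M, q m k| ≤ ∑ m ∈ range M, emax m / Δ + T :=
    le_add_of_nonneg_of_le (sum_nonneg fun m hm => hE m (mem_range.1 hm)) (hqb k hk)
  have hload : loadCost K pL (fun k => ∑ m ∈ range M, q m k)
      - loadCost K pL (fun k => ∑ m ∈ range M, p m k) ≤ C * (2 * (P - T)) :=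
    (loadCost_sub_le hq' hS fun k hk => single_le_sum (fun j _ => abs_nonneg (pL j))
      (mem_range.2 hk)).trans (mul_le_mul_of_nonneg_left hqdist hC)
  have hcharge : (2 * C + 1) * (P - T) ≤ ∑ m ∈ range M,
      c m / a * (∑ k ∈ range K, (p m k)⁺ - ∑ k ∈ range K, (q m k)⁺) := by
    have hPT : P - T = ∑ m ∈ range M,
        (∑ k ∈ range K, (p m k)⁺ - ∑ k ∈ range K, (q m k)⁺) := by
      rw [sum_sub_distrib, hqT]
    rw [hPT, mul_sum]
    exact sum_le_sum fun m hm =>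
      mul_le_mul_of_nonneg_right (hc m (mem_range.1 hm)) (sub_nonneg.2 (hqp m (mem_range.1 hm)))
  have hopt := h.2 q _ hq
  rw [objective_eq_loadCost_add, objective_eq_loadCost_add,
    sum_congr rfl fun m hm => congrArg (c m / a * ·) (sum_congr rfl fun k hk =>
      h.pchg_eq_posPart (fun m hm => by linarith [hc m hm]) (mem_range.1 hm) (mem_range.1 hk))]
    at hopt
  simp only [mul_sub, sum_sub_distrib] at hcharge
  linarith

end ComparisonPoint

theorem stmt5_general (K : ℕ) (Δ a pgmin : ℝ) (hΔ : 0 < Δ) (ha : 0 < a)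
    (pL emax : ℕ → ℝ) (hemax : ∀ m < 2, 0 < emax m)
    (k1 k2 : ℕ) (hk12 : k1 ≤ k2) (hk2 : k2 + 2 ≤ K)
    (habsorb : ∀ k < K, (pL k ≤ pgmin ↔ k1 ≤ k ∧ k ≤ k2)) :
    ∃ cmin : ℝ, 0 < cmin ∧
      ∀ c : ℕ → ℝ, (∀ m < 2, cmin ≤ c m) →
        ∀ p pchg : ℕ → ℕ → ℝ, Optimal K 2 Δ a pgmin pL emax c p pchg →
          ∃ lam : ℕ → ℕ → ℝ,
            (∀ k, k1 ≤ k → k ≤ k2 →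
              0 ≤ lam 0 k ∧ 0 ≤ lam 1 k ∧ lam 0 k + lam 1 k = 1) ∧
            ∀ m < 2,
              (∀ k < k1, p m k = 0) ∧
              (∀ k, k1 ≤ k → k ≤ k2 →
                p m k = lam m k * (pgmin - pL k) ∧ pchg m k = p m k) ∧
              (∀ k, k2 < k → k < K → p m k ≤ 0) ∧
              (∀ k < K, ¬(k1 ≤ k ∧ k ≤ k2) → pchg m k = 0) := by
  have hE : ∀ m < 2, 0 ≤ emax m / Δ := fun m hm => div_nonneg (hemax m hm).le hΔ.le
  have hK : k2 < K := by omega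
  have hA : Ico k1 (k2 + 1) ⊆ range K := fun k hk => mem_range.2 (by grind)
  have hC := loadCostLipschitz_nonneg (M := 2) hE hK habsorb
  refine ⟨a * (2 * loadCostLipschitz K 2 k1 k2 Δ pgmin pL emax + 1), by positivity,
    fun c hc p pchg hopt => ?_⟩
  have hca (m : ℕ) (hm : m < 2) : 2 * loadCostLipschitz K 2 k1 k2 Δ pgmin pL emax + 1 ≤ c m / a :=
    (le_div_iff₀' ha).2 (hc m hm)
  have hP := hopt.sum_posPart_le two_pos hE hk12 hK habsorb hca
  have hpchg (m : ℕ) (hm : m < 2) (k : ℕ) (hk : k < K) : pchg m k = (p m k)⁺ :=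
    hopt.pchg_eq_posPart (fun m hm => by linarith [hca m hm]) hm hk
  have hon (k : ℕ) (h₁ : k1 ≤ k) (h₂ : k ≤ k2) :=
    hopt.1.sum_eq_and_nonneg_of_mem hA hP (mem_Ico.2 ⟨h₁, Nat.lt_succ_of_le h₂⟩)
  have hoff (k : ℕ) (hk : k < K) (hkA : ¬(k1 ≤ k ∧ k ≤ k2)) (m : ℕ) (hm : m < 2) : p m k ≤ 0 :=
    hopt.1.nonpos_of_notMem hA hP hk (by grind) hm
  refine ⟨fun m k => share (p m k) (pgmin - pL k), fun k h₁ h₂ => ?_, fun m hm => ⟨?_, ?_, ?_, ?_⟩⟩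
  · obtain ⟨hsum, hnn⟩ := hon k h₁ h₂
    simp only [sum_range_succ, sum_range_zero, zero_add] at hsum
    have hd : 0 ≤ pgmin - pL k := hsum ▸ add_nonneg (hnn 0 two_pos) (hnn 1 one_lt_two)
    exact ⟨share_nonneg (hnn 0 two_pos) hd, share_nonneg (hnn 1 one_lt_two) hd,
      share_add_share hsum⟩
  · exact fun k => hopt.1.eq_zero_of_nonpos hm (hE m hm) (by omega)
      (fun k hk => hoff k (by omega) (by omega) m hm)
  · intro k h₁ h₂
    obtain ⟨hsum, hnn⟩ := hon k h₁ h₂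
    have hpd : p m k ≤ pgmin - pL k :=
      hsum ▸ single_le_sum (fun j hj => hnn j (mem_range.1 hj)) (mem_range.2 hm)
    exact ⟨(share_mul_self (hnn m hm) hpd).symm,
      (hpchg m hm k (by omega)).trans (posPart_eq_self.2 (hnn m hm))⟩
  · exact fun k h₁ h₂ => hoff k h₂ (by omega) m hm
  · exact fun k hk hkA => (hpchg m hm k hk).trans (posPart_eq_zero.2 (hoff k hk hkA m hm))

/-- Duopoly (`M = 2`), with `K_absorb = {k < K : pL,k ≤ pg,min}` equal to the contiguous
interval `{k1, …, k2}`, `1 ≤ k1 ≤ k2 ≤ K − 2`.  There is `c_min > 0` such that for all bids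
`c_m ≥ c_min`, every optimal solution satisfies: `p*_{m,k} = 0` before `k1`;
`p*_{m,k} = λ_{m,k} (pg,min − pL,k)` with `λ_{1,k}, λ_{2,k} ≥ 0`, `λ_{1,k}+λ_{2,k} = 1`
on `K_absorb`; `p*_{m,k} ≤ 0` after `k2`; and `pchg*_{m,k} = p*_{m,k}` on `K_absorb`,
`pchg*_{m,k} = 0` off `K_absorb`. -/
theorem stmt5 (K : ℕ) (Δ a pgmin : ℝ) (hΔ : 0 < Δ) (ha : 0 < a)
    (pL emax : ℕ → ℝ) (hemax : ∀ m < 2, 0 < emax m)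
    (k1 k2 : ℕ) (hk1 : 1 ≤ k1) (hk12 : k1 ≤ k2) (hk2 : k2 + 2 ≤ K)
    (habsorb : ∀ k < K, (pL k ≤ pgmin ↔ k1 ≤ k ∧ k ≤ k2))
    (hne : ∃ p pchg : ℕ → ℕ → ℝ, Feasible K 2 Δ pgmin pL emax p pchg) :
    ∃ cmin : ℝ, 0 < cmin ∧
      ∀ c : ℕ → ℝ, (∀ m < 2, cmin ≤ c m) →
        ∀ p pchg : ℕ → ℕ → ℝ, Optimal K 2 Δ a pgmin pL emax c p pchg →
          ∃ lam : ℕ → ℕ → ℝ,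
            (∀ k, k1 ≤ k → k ≤ k2 →
              0 ≤ lam 0 k ∧ 0 ≤ lam 1 k ∧ lam 0 k + lam 1 k = 1) ∧
            ∀ m < 2,
              (∀ k < k1, p m k = 0) ∧
              (∀ k, k1 ≤ k → k ≤ k2 →
                p m k = lam m k * (pgmin - pL k) ∧ pchg m k = p m k) ∧
              (∀ k, k2 < k → k < K → p m k ≤ 0) ∧
              (∀ k < K, ¬(k1 ≤ k ∧ k ≤ k2) → pchg m k = 0) :=
  stmt5_general K Δ a pgmin hΔ ha pL emax hemax k1 k2 hk12 hk2 habsorb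
end

section
/- Suppose M = 2, K_absorb is nonempty and equals a contiguous interval {k1,…,k2} with 1 ≤ k1 ≤ k2 ≤ K−2, and E_absorb ≤ (e_{1,max} + e_{2,max})/Δ. Then there exists a constant c_min > 0 such that, whenever c_1 ≥ c_min and c_2 ≥ c_min and c_m < c_{3−m} for some m ∈ {1,2}, every optimal solution (p*, p*_chg) of the operator's quadratic program satisfies ∑_{k=0}^{K−1} p*_chg,m,k = E_{m,max} and ∑_{k=0}^{K−1} p*_chg,3−m,k = E_{3−m,min}, where E_{m,max} = min(E_absorb, e_{m,max}/Δ) and E_{3−m,min} = max(E_absorb − e_{m,max}/Δ, 0). -/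
/- ========== auxiliary lemmas ========== -/

lemma tel_ico (f : ℕ → ℝ) {a b : ℕ} (h : a ≤ b) :
    ∑ k ∈ Finset.Ico a b, (f (k+1) - f k) = f b - f a := by
  rw [Finset.sum_Ico_eq_sub _ h, Finset.sum_range_sub, Finset.sum_range_sub]
  ring

lemma minmax_split (x B : ℝ) : min x B + max (x - B) 0 = x := by
  rcases le_total x B with h | h
  · rw [min_eq_left h, max_eq_right (by linarith)]; ring
  · rw [min_eq_right h, max_eq_left (by linarith)]; ring

lemma abs_eq_add_two_max (x : ℝ) : |x| = x + 2 * max (-x) 0 := by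
  rcases le_total x 0 with h | h
  · rw [abs_of_nonpos h, max_eq_left (by linarith)]; ring
  · rw [abs_of_nonneg h, max_eq_right (by linarith)]; ring

lemma quad_bound (x y pl B P : ℝ) (hx : |x| ≤ B) (hy : |y| ≤ B) (hpl : |pl| ≤ P) :
    1/2 * (y^2 - x^2) + pl * (y - x) ≤ (B + P) * |y - x| := by
  have h1 : 1/2 * (y^2 - x^2) + pl * (y - x) = (y - x) * ((x + y)/2 + pl) := by ring
  rw [h1]
  calc (y - x) * ((x + y)/2 + pl) ≤ |(y - x) * ((x + y)/2 + pl)| := le_abs_self _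
    _ = |y - x| * |(x + y)/2 + pl| := abs_mul _ _
    _ ≤ |y - x| * (B + P) := by
        apply mul_le_mul_of_nonneg_left _ (abs_nonneg _)
        calc |(x + y)/2 + pl| ≤ |(x+y)/2| + |pl| := abs_add_le _ _
          _ ≤ |x + y|/2 + P := by rw [abs_div]; simp; linarith
          _ ≤ (|x| + |y|)/2 + P := by have := abs_add_le x y; linarith
          _ ≤ B + P := by linarith
    _ = (B + P) * |y - x| := by ring

lemma max_add_le {A t : ℝ} (ht : t ≤ 0) : max A 0 + t ≤ max (A + t) 0 := by
  rcases le_total A 0 with h | h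
  · rw [max_eq_right h]; have : t ≤ max (A+t) 0 := le_trans ht (le_max_right _ _); linarith
  · rw [max_eq_left h]; exact le_max_left _ _

/- ========== trajectory construction ========== -/

noncomputable def Ctil (k1 k2 : ℕ) (d s : ℕ → ℝ) : ℕ → ℝ
  | 0 => 0
  | (k+1) => if k1 ≤ k ∧ k ≤ k2 then Ctil k1 k2 d s k + d k
             else max (Ctil k1 k2 d s k + min (s k) 0) 0

section CtilLemmas
variable {k1 k2 : ℕ} {d s : ℕ → ℝ}

lemma Ctil_zero : Ctil k1 k2 d s 0 = 0 := rfl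

lemma Ctil_succ_win {k : ℕ} (h : k1 ≤ k ∧ k ≤ k2) :
    Ctil k1 k2 d s (k+1) = Ctil k1 k2 d s k + d k := by
  rw [Ctil, if_pos h]

lemma Ctil_succ_off {k : ℕ} (h : ¬ (k1 ≤ k ∧ k ≤ k2)) :
    Ctil k1 k2 d s (k+1) = max (Ctil k1 k2 d s k + min (s k) 0) 0 := by
  rw [Ctil, if_neg h]

lemma Ctil_nonneg (hd : ∀ k, k1 ≤ k → k ≤ k2 → 0 ≤ d k) (k : ℕ) :
    0 ≤ Ctil k1 k2 d s k := by
  induction k with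
  | zero => simp [Ctil]
  | succ k ih =>
    by_cases h : k1 ≤ k ∧ k ≤ k2
    · rw [Ctil_succ_win h]; have := hd k h.1 h.2; linarith
    · rw [Ctil_succ_off h]; exact le_max_right _ _

lemma Ctil_eq_zero {k : ℕ} (hk : k ≤ k1) : Ctil k1 k2 d s k = 0 := by
  induction k with
  | zero => simp [Ctil]
  | succ k ih =>
    have hk' : ¬ (k1 ≤ k ∧ k ≤ k2) := by omega
    rw [Ctil_succ_off hk', ih (by omega)]
    have : min (s k) 0 ≤ 0 := min_le_right _ _
    rw [max_eq_right (by linarith)]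

lemma Ctil_window (h12 : k1 ≤ k2) {n : ℕ} (h1 : k1 ≤ n) (h2 : n ≤ k2 + 1) :
    Ctil k1 k2 d s n = ∑ j ∈ Finset.Ico k1 n, d j := by
  induction n, h1 using Nat.le_induction with
  | base => simp [Ctil_eq_zero (le_refl k1)]
  | succ n hn ih =>
    rw [Ctil_succ_win ⟨hn, by omega⟩, ih (by omega), Finset.sum_Ico_succ_top hn]

lemma Ctil_decr_after {n : ℕ} (hd : ∀ k, k1 ≤ k → k ≤ k2 → 0 ≤ d k) (h : k2 + 1 ≤ n) :
    Ctil k1 k2 d s (n+1) ≤ Ctil k1 k2 d s n := by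
  rw [Ctil_succ_off (by omega)]
  have h1 := Ctil_nonneg (s := s) hd n
  have h2 : min (s n) 0 ≤ 0 := min_le_right _ _
  exact max_le (by linarith) h1

lemma Ctil_bound_after {n : ℕ} (h : k2 + 1 ≤ n) :
    Ctil k1 k2 d s n ≤
      max (Ctil k1 k2 d s (k2+1) + ∑ j ∈ Finset.Ico (k2+1) n, min (s j) 0) 0 := by
  induction n, h using Nat.le_induction with
  | base => simp [le_max_left]
  | succ n hn ih =>
    rw [Ctil_succ_off (by omega), Finset.sum_Ico_succ_top hn, ← add_assoc]
    have hmin : min (s n) 0 ≤ 0 := min_le_right _ _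
    apply max_le _ (le_max_right _ _)
    calc Ctil k1 k2 d s n + min (s n) 0
        ≤ max (Ctil k1 k2 d s (k2+1) + ∑ j ∈ Finset.Ico (k2+1) n, min (s j) 0) 0
            + min (s n) 0 := by linarith
      _ ≤ max (Ctil k1 k2 d s (k2+1) + ∑ j ∈ Finset.Ico (k2+1) n, min (s j) 0 + min (s n) 0) 0 :=
          max_add_le hmin

lemma Ctil_le_E (hd : ∀ k, k1 ≤ k → k ≤ k2 → 0 ≤ d k) (h12 : k1 ≤ k2) (n : ℕ) :
    Ctil k1 k2 d s n ≤ ∑ j ∈ Finset.Icc k1 k2, d j := by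
  have hE : ∀ n, k1 ≤ n → n ≤ k2 + 1 → Ctil k1 k2 d s n ≤ ∑ j ∈ Finset.Icc k1 k2, d j := by
    intro n h1 h2
    rw [Ctil_window h12 h1 h2, ← Finset.Ico_add_one_right_eq_Icc]
    apply Finset.sum_le_sum_of_subset_of_nonneg
    · exact Finset.Ico_subset_Ico (le_refl _) h2
    · intro i hi _
      exact hd i (Finset.mem_Ico.mp hi).1 (by have := (Finset.mem_Ico.mp hi).2; omega)
  rcases le_or_gt n k1 with h | h
  · rw [Ctil_eq_zero h]
    have : (0:ℝ) ≤ ∑ j ∈ Finset.Icc k1 k2, d j :=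
      Finset.sum_nonneg fun i hi => hd i (Finset.mem_Icc.mp hi).1 (Finset.mem_Icc.mp hi).2
    linarith
  rcases le_or_gt n (k2+1) with h' | h'
  · exact hE n (by omega) h'
  · have hmono : ∀ n, k2 + 1 ≤ n → Ctil k1 k2 d s n ≤ Ctil k1 k2 d s (k2+1) := by
      intro n hn
      induction n, hn using Nat.le_induction with
      | base => exact le_refl _
      | succ n hn ih => exact le_trans (Ctil_decr_after hd hn) ih
    exact le_trans (hmono n (by omega)) (hE (k2+1) (by omega) (le_refl _))

end CtilLemmas

/- ========== the split of the trimmed trajectory ========== -/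

noncomputable def qsplit (m : ℕ) (Bm : ℝ) (Ct : ℕ → ℝ) : ℕ → ℕ → ℝ := fun μ k =>
  if μ = m then min (Ct (k+1)) Bm - min (Ct k) Bm
  else max (Ct (k+1) - Bm) 0 - max (Ct k - Bm) 0

lemma qsplit_cum_m (m : ℕ) (Bm : ℝ) (Ct : ℕ → ℝ) (h0 : Ct 0 = 0) (hB : 0 ≤ Bm) (n : ℕ) :
    ∑ j ∈ Finset.range n, qsplit m Bm Ct m j = min (Ct n) Bm := by
  simp only [qsplit, if_pos, eq_self_iff_true, if_true]
  rw [Finset.sum_range_sub (fun j => min (Ct j) Bm), h0, min_eq_left hB, sub_zero]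

lemma qsplit_cum_o (m μ : ℕ) (hμ : μ ≠ m) (Bm : ℝ) (Ct : ℕ → ℝ) (h0 : Ct 0 = 0) (hB : 0 ≤ Bm)
    (n : ℕ) :
    ∑ j ∈ Finset.range n, qsplit m Bm Ct μ j = max (Ct n - Bm) 0 := by
  simp only [qsplit, if_neg hμ]
  rw [Finset.sum_range_sub (fun j => max (Ct j - Bm) 0), h0]
  have e : max ((0:ℝ) - Bm) 0 = 0 := max_eq_right (by linarith)
  rw [e, sub_zero]

lemma qsplit_agg (m : ℕ) (hm : m < 2) (Bm : ℝ) (Ct : ℕ → ℝ) (k : ℕ) :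
    qsplit m Bm Ct 0 k + qsplit m Bm Ct 1 k = Ct (k+1) - Ct k := by
  have e1 := minmax_split (Ct (k+1)) Bm
  have e2 := minmax_split (Ct k) Bm
  interval_cases m <;> simp [qsplit] <;> linarith

lemma obj2 (K : ℕ) (a : ℝ) (pL c : ℕ → ℝ) (P C : ℕ → ℕ → ℝ) :
    Objective K 2 a pL c P C
      = (1/2) * (∑ k ∈ Finset.range K, (P 0 k + P 1 k)^2)
        + (∑ k ∈ Finset.range K, pL k * (P 0 k + P 1 k))
        + ((c 0 / a) * (∑ k ∈ Finset.range K, C 0 k)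
            + (c 1 / a) * (∑ k ∈ Finset.range K, C 1 k)) := by
  unfold Objective
  simp only [Finset.sum_range_succ, Finset.sum_range_zero, zero_add]
  have A : ∑ k ∈ Finset.range K, (pL k * P 0 k + pL k * P 1 k)
      = ∑ k ∈ Finset.range K, pL k * (P 0 k + P 1 k) :=
    Finset.sum_congr rfl fun k _ => by ring
  have B : ∑ k ∈ Finset.range K, ((c 0 / a) * C 0 k + (c 1 / a) * C 1 k)
      = (c 0 / a) * (∑ k ∈ Finset.range K, C 0 k) + (c 1 / a) * (∑ k ∈ Finset.range K, C 1 k) := by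
    rw [Finset.sum_add_distrib, Finset.mul_sum, Finset.mul_sum]
  rw [A, B]

lemma final_alg (cma coa Gv Xv Yv ai : ℝ) (h1 : cma * Xv + coa * Yv ≤ 2*Gv*(Xv+Yv))
    (h2 : 0 ≤ Yv) (h3 : 0 ≤ Xv + Yv) (h4 : 2*Gv + ai ≤ cma) (h5 : cma < coa) (h6 : 0 < ai) :
    Xv = 0 ∧ Yv = 0 := by
  have k1 : Xv + Yv ≤ 0 := by nlinarith
  have k2 : Xv + Yv = 0 := le_antisymm k1 h3
  have k3 : Yv ≤ 0 := by nlinarith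
  constructor <;> linarith

set_option maxHeartbeats 4000000

/-- Duopoly (`M = 2`), `K_absorb = {k1,…,k2}` contiguous with `1 ≤ k1 ≤ k2 ≤ K−2`, and
`E_absorb ≤ (e1,max + e2,max)/Δ`.  There is `c_min > 0` such that whenever both bids are
at least `c_min` and firm `m` underbids the other firm, every optimal solution delivers
`E_{m,max} = min(E_absorb, e_{m,max}/Δ)` to firm `m` and
`E_{3−m,min} = max(E_absorb − e_{m,max}/Δ, 0)` to the other firm. -/
theorem stmt6 (K : ℕ) (Δ a pgmin : ℝ) (hΔ : 0 < Δ) (ha : 0 < a)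
    (pL emax : ℕ → ℝ) (hemax : ∀ m < 2, 0 < emax m)
    (k1 k2 : ℕ) (hk1 : 1 ≤ k1) (hk12 : k1 ≤ k2) (hk2 : k2 + 2 ≤ K)
    (habsorb : ∀ k < K, (pL k ≤ pgmin ↔ k1 ≤ k ∧ k ≤ k2))
    (hEcap : ∑ k ∈ Finset.Icc k1 k2, (pgmin - pL k) ≤ (emax 0 + emax 1) / Δ)
    (hne : ∃ p pchg : ℕ → ℕ → ℝ, Feasible K 2 Δ pgmin pL emax p pchg) :
    ∃ cmin : ℝ, 0 < cmin ∧
      ∀ c : ℕ → ℝ, (∀ m < 2, cmin ≤ c m) →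
        ∀ m < 2, c m < c (1 - m) →
          ∀ p pchg : ℕ → ℕ → ℝ, Optimal K 2 Δ a pgmin pL emax c p pchg →
            (∑ k ∈ Finset.range K, pchg m k
              = min (∑ k ∈ Finset.Icc k1 k2, (pgmin - pL k)) (emax m / Δ)) ∧
            (∑ k ∈ Finset.range K, pchg (1 - m) k
              = max (∑ k ∈ Finset.Icc k1 k2, (pgmin - pL k) - emax m / Δ) 0) := by
  classical
  have hB0 : (0:ℝ) < emax 0 / Δ := div_pos (hemax 0 (by norm_num)) hΔ
  have hB1 : (0:ℝ) < emax 1 / Δ := div_pos (hemax 1 (by norm_num)) hΔ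
  set PL := ∑ k ∈ Finset.range K, |pL k| with hPL_def
  have hPL0 : 0 ≤ PL := Finset.sum_nonneg fun _ _ => abs_nonneg _
  set G := (emax 0 / Δ + emax 1 / Δ) + PL with hG_def
  have hG0 : 0 < G := by rw [hG_def]; linarith
  refine ⟨2*a*G + 1, by nlinarith, ?_⟩
  intro c hc m hm hlt p pchg hopt
  obtain ⟨⟨h1, h2, h3, h4⟩, hopt⟩ := hopt
  set E := ∑ k ∈ Finset.Icc k1 k2, (pgmin - pL k) with hE_def
  -- basic facts
  have hsum2 : ∀ (f : ℕ → ℝ), ∑ μ ∈ Finset.range 2, f μ = f 0 + f 1 := by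
    intro f; rw [Finset.sum_range_succ, Finset.sum_range_one]
  have hm2 : m = 0 ∨ m = 1 := by omega
  have hm1 : 1 - m < 2 := by omega
  have hcpos : ∀ μ, μ < 2 → 0 < c μ := fun μ hμ => lt_of_lt_of_le (by nlinarith) (hc μ hμ)
  have hdwin : ∀ k, k1 ≤ k → k ≤ k2 → 0 ≤ pgmin - pL k := by
    intro k ha1 ha2
    have := (habsorb k (by omega)).mpr ⟨ha1, ha2⟩
    linarith
  have hdoff : ∀ k, k < K → ¬(k1 ≤ k ∧ k ≤ k2) → pgmin - pL k < 0 := by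
    intro k hk hnk
    by_contra hcon
    push_neg at hcon
    exact hnk ((habsorb k hk).mp (by linarith))
  have hE0 : 0 ≤ E := by
    rw [hE_def]
    exact Finset.sum_nonneg fun i hi =>
      hdwin i (Finset.mem_Icc.mp hi).1 (Finset.mem_Icc.mp hi).2
  have hEcap' : E ≤ emax 0 / Δ + emax 1 / Δ := by
    rw [hE_def]; rw [← add_div]; exact hEcap
  have h1s : ∀ k, k < K → pgmin - pL k ≤ p 0 k + p 1 k := by
    intro k hk; have := h1 k hk; rwa [hsum2] at this
  -- cumulative bounds for p
  have hBμ : ∀ μ, μ < 2 → (0:ℝ) < emax μ / Δ := fun μ hμ => div_pos (hemax μ hμ) hΔ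
  have hcum : ∀ μ, μ < 2 → ∀ j, j ≤ K →
      0 ≤ ∑ i ∈ Finset.range j, p μ i ∧ ∑ i ∈ Finset.range j, p μ i ≤ emax μ / Δ := by
    intro μ hμ j hj
    rcases Nat.eq_zero_or_pos j with rfl | hj0
    · simp; exact (hBμ μ hμ).le
    rcases eq_or_lt_of_le hj with rfl | hjK
    · rw [h4 μ hμ]; exact ⟨le_refl _, (hBμ μ hμ).le⟩
    · exact h3 μ hμ j hj0 (by omega)
  have hpbnd : ∀ μ, μ < 2 → ∀ k, k < K → |p μ k| ≤ emax μ / Δ := by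
    intro μ hμ k hk
    have e := Finset.sum_range_succ (p μ) k
    have b1 := hcum μ hμ k (by omega)
    have b2 := hcum μ hμ (k+1) (by omega)
    rw [abs_le]
    constructor <;> linarith
  have hsbnd : ∀ k, k < K → |p 0 k + p 1 k| ≤ emax 0 / Δ + emax 1 / Δ := by
    intro k hk
    calc |p 0 k + p 1 k| ≤ |p 0 k| + |p 1 k| := abs_add_le _ _
      _ ≤ emax 0 / Δ + emax 1 / Δ :=
          add_le_add (hpbnd 0 (by norm_num) k hk) (hpbnd 1 (by norm_num) k hk)
  have hPLk : ∀ k, k < K → |pL k| ≤ PL := by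
    intro k hk
    rw [hPL_def]
    exact Finset.single_le_sum (fun i _ => abs_nonneg (pL i)) (Finset.mem_range.mpr hk)
  -- Lemma 0 : pchg sums equal positive-part sums
  set S : ℕ → ℝ := fun μ => ∑ k ∈ Finset.range K, max (p μ k) 0 with hS_def
  have hchg : ∀ μ, μ < 2 → ∑ k ∈ Finset.range K, pchg μ k = S μ := by
    have hfeas' : Feasible K 2 Δ pgmin pL emax p (fun μ k => max (p μ k) 0) :=
      ⟨h1, fun μ hμ k hk => ⟨le_max_right _ _, le_max_left _ _⟩, h3, h4⟩
    have hkey0 := hopt p _ hfeas'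
    rw [obj2, obj2] at hkey0
    have hge : ∀ μ, μ < 2 → S μ ≤ ∑ k ∈ Finset.range K, pchg μ k := by
      intro μ hμ
      apply Finset.sum_le_sum
      intro k hk
      have := h2 μ hμ k (Finset.mem_range.mp hk)
      exact max_le this.2 this.1
    have hg0 := hge 0 (by norm_num)
    have hg1 := hge 1 (by norm_num)
    have hc0 : 0 < c 0 / a := div_pos (hcpos 0 (by norm_num)) ha
    have hc1 : 0 < c 1 / a := div_pos (hcpos 1 (by norm_num)) ha
    have e0 : ∑ k ∈ Finset.range K, pchg 0 k = S 0 := by nlinarith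
    have e1 : ∑ k ∈ Finset.range K, pchg 1 k = S 1 := by nlinarith
    intro μ hμ
    interval_cases μ
    · exact e0
    · exact e1
  -- window aggregate bounds
  have hIccIco : Finset.Icc k1 k2 = Finset.Ico k1 (k2+1) := (Finset.Ico_add_one_right_eq_Icc k1 k2).symm
  have hwinsum : E ≤ ∑ k ∈ Finset.Icc k1 k2, (p 0 k + p 1 k) := by
    rw [hE_def]
    apply Finset.sum_le_sum
    intro k hk
    have := Finset.mem_Icc.mp hk
    exact h1s k (by omega)
  have hIccp : ∀ μ, μ < 2 → ∑ k ∈ Finset.Icc k1 k2, p μ k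
      = ∑ i ∈ Finset.range (k2+1), p μ i - ∑ i ∈ Finset.range k1, p μ i := by
    intro μ hμ
    rw [hIccIco, Finset.sum_Ico_eq_sub _ (by omega)]
  -- the trimmed trajectory
  set Ct := Ctil k1 k2 (fun k => pgmin - pL k) (fun k => p 0 k + p 1 k) with hCt_def
  have hCt0 : ∀ n, 0 ≤ Ct n := fun n => Ctil_nonneg hdwin n
  have hCtE : ∀ n, Ct n ≤ E := by
    intro n
    have := Ctil_le_E (s := fun k => p 0 k + p 1 k) hdwin hk12 n
    rw [hE_def]
    exact this
  have hCtzero : Ct 0 = 0 := Ctil_zero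
  have hCtk1 : Ct k1 = 0 := Ctil_eq_zero (le_refl k1)
  have hCtwin : Ct (k2+1) = E := by
    rw [hCt_def, Ctil_window hk12 (by omega) (le_refl _), hE_def, hIccIco]
  have hCp21 : E ≤ ∑ i ∈ Finset.range (k2+1), (p 0 i + p 1 i) := by
    have e0 := hIccp 0 (by norm_num)
    have e1 := hIccp 1 (by norm_num)
    have hsplit : ∑ k ∈ Finset.Icc k1 k2, (p 0 k + p 1 k)
        = ∑ k ∈ Finset.Icc k1 k2, p 0 k + ∑ k ∈ Finset.Icc k1 k2, p 1 k :=
      Finset.sum_add_distrib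
    have hr : ∀ j, j ≤ K → ∑ i ∈ Finset.range j, (p 0 i + p 1 i)
        = ∑ i ∈ Finset.range j, p 0 i + ∑ i ∈ Finset.range j, p 1 i :=
      fun j _ => Finset.sum_add_distrib
    have b0 := hcum 0 (by norm_num) k1 (by omega)
    have b1 := hcum 1 (by norm_num) k1 (by omega)
    rw [hr (k2+1) (by omega)]
    linarith
  have hCtK : Ct K = 0 := by
    have hb := Ctil_bound_after (k1 := k1) (k2 := k2)
      (d := fun k => pgmin - pL k) (s := fun k => p 0 k + p 1 k) (n := K) (by omega)
    rw [← hCt_def] at hb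
    have hests : ∑ j ∈ Finset.Ico (k2+1) K, min (p 0 j + p 1 j) 0
        ≤ ∑ j ∈ Finset.Ico (k2+1) K, (p 0 j + p 1 j) :=
      Finset.sum_le_sum fun j _ => min_le_left _ _
    have hsub : ∑ j ∈ Finset.Ico (k2+1) K, (p 0 j + p 1 j)
        = ∑ i ∈ Finset.range K, (p 0 i + p 1 i) - ∑ i ∈ Finset.range (k2+1), (p 0 i + p 1 i) :=
      Finset.sum_Ico_eq_sub _ (by omega)
    have hzero : ∑ i ∈ Finset.range K, (p 0 i + p 1 i) = 0 := by
      rw [Finset.sum_add_distrib, h4 0 (by norm_num), h4 1 (by norm_num)]; ring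
    have : Ct K ≤ 0 := by
      apply le_trans hb
      apply max_le _ (le_refl 0)
      rw [hCtwin]
      have : ∑ j ∈ Finset.Ico (k2+1) K, min ((fun k => p 0 k + p 1 k) j) 0
          = ∑ j ∈ Finset.Ico (k2+1) K, min (p 0 j + p 1 j) 0 := rfl
      rw [this]
      linarith
    linarith [hCt0 K]
  -- the comparison point
  set qt := qsplit m (emax m / Δ) Ct with hqt_def
  set qc : ℕ → ℕ → ℝ := fun μ k => max (qt μ k) 0 with hqc_def
  have hBm : (0:ℝ) < emax m / Δ := hBμ m hm
  have hcumqm : ∀ n, ∑ j ∈ Finset.range n, qt m j = min (Ct n) (emax m / Δ) := by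
    intro n
    rw [hqt_def]
    exact qsplit_cum_m m _ Ct hCtzero hBm.le n
  have hcumqo : ∀ μ, μ ≠ m → ∀ n,
      ∑ j ∈ Finset.range n, qt μ j = max (Ct n - emax m / Δ) 0 := by
    intro μ hμ n
    rw [hqt_def]
    exact qsplit_cum_o m μ hμ _ Ct hCtzero hBm.le n
  have haggq : ∀ k, qt 0 k + qt 1 k = Ct (k+1) - Ct k := by
    intro k
    rw [hqt_def]
    exact qsplit_agg m hm _ Ct k
  have hBmo : emax m / Δ + emax (1-m) / Δ = emax 0 / Δ + emax 1 / Δ := by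
    rcases hm2 with rfl | rfl <;> norm_num <;> ring
  have hqfeas : Feasible K 2 Δ pgmin pL emax qt qc := by
    refine ⟨?_, ?_, ?_, ?_⟩
    · intro k hk
      rw [hsum2, haggq k]
      by_cases hw : k1 ≤ k ∧ k ≤ k2
      · rw [hCt_def, Ctil_succ_win hw, ← hCt_def]
        simp
      · rw [hCt_def, Ctil_succ_off hw, ← hCt_def]
        have hd1 : pgmin - pL k < 0 := hdoff k hk hw
        have hd2 : pgmin - pL k ≤ p 0 k + p 1 k := h1s k hk
        have hd3 : pgmin - pL k ≤ min (p 0 k + p 1 k) 0 := le_min hd2 hd1.le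
        have hd4 : Ct k + min (p 0 k + p 1 k) 0
            ≤ max (Ct k + min ((fun j => p 0 j + p 1 j) k) 0) 0 := le_max_left _ _
        have : min ((fun j => p 0 j + p 1 j) k) 0 = min (p 0 k + p 1 k) 0 := rfl
        rw [this] at hd4
        linarith
    · intro μ hμ k hk
      exact ⟨le_max_right _ _, le_max_left _ _⟩
    · intro μ hμ k hk1' hk2'
      by_cases hμm : μ = m
      · subst hμm
        rw [hcumqm k]
        exact ⟨le_min (hCt0 k) hBm.le, min_le_right _ _⟩
      · have hμo : μ = 1 - m := by omega
        rw [hcumqo μ hμm k]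
        constructor
        · exact le_max_right _ _
        · apply max_le _ (hBμ μ hμ).le
          have := hCtE k
          have := hEcap'
          rw [hμo]
          have hBB : E - emax m / Δ ≤ emax (1-m) / Δ := by linarith
          linarith
    · intro μ hμ
      by_cases hμm : μ = m
      · subst hμm
        rw [hcumqm K, hCtK, min_eq_left hBm.le]
      · rw [hcumqo μ hμm K, hCtK]
        rw [max_eq_right (by linarith)]
  -- sums of qc
  have hTm : ∑ k ∈ Finset.range K, qc m k = min E (emax m / Δ) := by
    rw [Finset.range_eq_Ico]
    rw [← Finset.sum_Ico_consecutive _ (Nat.zero_le k1) (show k1 ≤ K by omega)]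
    rw [← Finset.sum_Ico_consecutive _ (show k1 ≤ k2+1 by omega) (show k2+1 ≤ K by omega)]
    have p1 : ∑ k ∈ Finset.Ico 0 k1, qc m k = 0 := by
      apply Finset.sum_eq_zero
      intro k hk
      have hkk := Finset.mem_Ico.mp hk
      have e1 : Ct k = 0 := Ctil_eq_zero (by omega)
      have e2 : Ct (k+1) = 0 := Ctil_eq_zero (by omega)
      rw [hqc_def]
      simp only [hqt_def, qsplit, if_pos rfl, e1, e2]
      simp
    have p2 : ∑ k ∈ Finset.Ico k1 (k2+1), qc m k
        = min E (emax m / Δ) := by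
      have hterm : ∀ k ∈ Finset.Ico k1 (k2+1), qc m k
          = min (Ct (k+1)) (emax m / Δ) - min (Ct k) (emax m / Δ) := by
        intro k hk
        have hkk := Finset.mem_Ico.mp hk
        have hmono : Ct k ≤ Ct (k+1) := by
          rw [hCt_def, Ctil_succ_win ⟨hkk.1, by omega⟩, ← hCt_def]
          have := hdwin k hkk.1 (by omega)
          linarith
        have hqq : qt m k = min (Ct (k+1)) (emax m / Δ) - min (Ct k) (emax m / Δ) := by
          rw [hqt_def]; simp [qsplit]
        rw [hqc_def]
        simp only [hqq]
        rw [max_eq_left (by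
          have := min_le_min_right (emax m / Δ) hmono
          linarith)]
      rw [Finset.sum_congr rfl hterm, tel_ico (fun n => min (Ct n) (emax m / Δ)) (by omega),
        hCtwin, hCtk1, min_eq_left hBm.le, sub_zero]
    have p3 : ∑ k ∈ Finset.Ico (k2+1) K, qc m k = 0 := by
      apply Finset.sum_eq_zero
      intro k hk
      have hkk := Finset.mem_Ico.mp hk
      have hmono : Ct (k+1) ≤ Ct k := by
        rw [hCt_def]; exact Ctil_decr_after hdwin hkk.1
      have hqq : qt m k = min (Ct (k+1)) (emax m / Δ) - min (Ct k) (emax m / Δ) := by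
        rw [hqt_def]; simp [qsplit]
      rw [hqc_def]
      simp only [hqq]
      rw [max_eq_right (by
        have := min_le_min_right (emax m / Δ) hmono
        linarith)]
    rw [p1, p2, p3]
    ring
  have hTo : ∑ k ∈ Finset.range K, qc (1-m) k = max (E - emax m / Δ) 0 := by
    have hom : (1-m) ≠ m := by omega
    rw [Finset.range_eq_Ico]
    rw [← Finset.sum_Ico_consecutive _ (Nat.zero_le k1) (show k1 ≤ K by omega)]
    rw [← Finset.sum_Ico_consecutive _ (show k1 ≤ k2+1 by omega) (show k2+1 ≤ K by omega)]
    have hqto : ∀ k, qt (1-m) k = max (Ct (k+1) - emax m / Δ) 0 - max (Ct k - emax m / Δ) 0 := by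
      intro k
      rw [hqt_def]; simp only [qsplit, if_neg hom]
    have p1 : ∑ k ∈ Finset.Ico 0 k1, qc (1-m) k = 0 := by
      apply Finset.sum_eq_zero
      intro k hk
      have hkk := Finset.mem_Ico.mp hk
      have e1 : Ct k = 0 := Ctil_eq_zero (by omega)
      have e2 : Ct (k+1) = 0 := Ctil_eq_zero (by omega)
      rw [hqc_def]
      simp only [hqto, e1, e2]
      norm_num
    have p2 : ∑ k ∈ Finset.Ico k1 (k2+1), qc (1-m) k = max (E - emax m / Δ) 0 := by
      have hterm : ∀ k ∈ Finset.Ico k1 (k2+1), qc (1-m) k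
          = max (Ct (k+1) - emax m / Δ) 0 - max (Ct k - emax m / Δ) 0 := by
        intro k hk
        have hkk := Finset.mem_Ico.mp hk
        have hmono : Ct k ≤ Ct (k+1) := by
          rw [hCt_def, Ctil_succ_win ⟨hkk.1, by omega⟩, ← hCt_def]
          have := hdwin k hkk.1 (by omega)
          linarith
        rw [hqc_def]
        simp only [hqto]
        rw [max_eq_left (by
          have := max_le_max (sub_le_sub_right hmono (emax m / Δ)) (le_refl (0:ℝ))
          linarith)]
      rw [Finset.sum_congr rfl hterm,
        tel_ico (fun n => max (Ct n - emax m / Δ) 0) (by omega), hCtwin, hCtk1]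
      have e : ((0:ℝ) - emax m / Δ) ⊔ 0 = 0 := max_eq_right (by linarith)
      rw [e, sub_zero]
    have p3 : ∑ k ∈ Finset.Ico (k2+1) K, qc (1-m) k = 0 := by
      apply Finset.sum_eq_zero
      intro k hk
      have hkk := Finset.mem_Ico.mp hk
      have hmono : Ct (k+1) ≤ Ct k := by
        rw [hCt_def]; exact Ctil_decr_after hdwin hkk.1
      rw [hqc_def]
      simp only [hqto]
      rw [max_eq_right (by
        have := max_le_max (sub_le_sub_right hmono (emax m / Δ)) (le_refl (0:ℝ))
        linarith)]
    rw [p1, p2, p3]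
    ring
  -- objective comparison
  have key := hopt qt qc hqfeas
  rw [obj2, obj2] at key
  simp only [haggq] at key
  have hqcsum : (c 0 / a) * (∑ k ∈ Finset.range K, qc 0 k)
        + (c 1 / a) * (∑ k ∈ Finset.range K, qc 1 k)
      = (c m / a) * min E (emax m / Δ) + (c (1-m) / a) * max (E - emax m / Δ) 0 := by
    rcases hm2 with h | h
    · subst h; norm_num at hTm hTo ⊢; rw [hTm, hTo]
    · subst h; norm_num at hTm hTo ⊢; rw [hTm, hTo]; ring
  have hpcsum : (c 0 / a) * (∑ k ∈ Finset.range K, pchg 0 k)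
        + (c 1 / a) * (∑ k ∈ Finset.range K, pchg 1 k)
      = (c m / a) * S m + (c (1-m) / a) * S (1-m) := by
    rw [hchg 0 (by norm_num), hchg 1 (by norm_num)]
    rcases hm2 with h | h
    · subst h; norm_num
    · subst h; norm_num; ring
  rw [hpcsum, hqcsum] at key
  -- quadratic difference bound
  have hstbnd : ∀ k, k < K → |Ct (k+1) - Ct k| ≤ emax 0 / Δ + emax 1 / Δ := by
    intro k hk
    have b1 := hCt0 k; have b2 := hCt0 (k+1); have b3 := hCtE k; have b4 := hCtE (k+1)
    rw [abs_le]; constructor <;> linarith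
  have hQd : (1/2) * (∑ k ∈ Finset.range K, (Ct (k+1) - Ct k)^2)
      + ∑ k ∈ Finset.range K, pL k * (Ct (k+1) - Ct k)
      - ((1/2) * (∑ k ∈ Finset.range K, (p 0 k + p 1 k)^2)
        + ∑ k ∈ Finset.range K, pL k * (p 0 k + p 1 k))
      ≤ G * ∑ k ∈ Finset.range K, |Ct (k+1) - Ct k - (p 0 k + p 1 k)| := by
    have hpt : ∀ k ∈ Finset.range K,
        1/2 * ((Ct (k+1) - Ct k)^2 - (p 0 k + p 1 k)^2)
          + pL k * ((Ct (k+1) - Ct k) - (p 0 k + p 1 k))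
        ≤ ((emax 0 / Δ + emax 1 / Δ) + PL) * |Ct (k+1) - Ct k - (p 0 k + p 1 k)| := by
      intro k hk
      have hk' := Finset.mem_range.mp hk
      exact quad_bound _ _ _ _ _ (hsbnd k hk') (hstbnd k hk') (hPLk k hk')
    have hsum := Finset.sum_le_sum hpt
    rw [← Finset.mul_sum] at hsum
    have e1 : ∀ k : ℕ, 1/2 * ((Ct (k+1) - Ct k)^2 - (p 0 k + p 1 k)^2)
          + pL k * ((Ct (k+1) - Ct k) - (p 0 k + p 1 k))
        = (1/2 * (Ct (k+1) - Ct k)^2 + pL k * (Ct (k+1) - Ct k))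
          - (1/2 * (p 0 k + p 1 k)^2 + pL k * (p 0 k + p 1 k)) := fun k => by ring
    have expand : ∑ k ∈ Finset.range K, (1/2 * ((Ct (k+1) - Ct k)^2 - (p 0 k + p 1 k)^2)
          + pL k * ((Ct (k+1) - Ct k) - (p 0 k + p 1 k)))
        = (1/2) * (∑ k ∈ Finset.range K, (Ct (k+1) - Ct k)^2)
          + ∑ k ∈ Finset.range K, pL k * (Ct (k+1) - Ct k)
          - ((1/2) * (∑ k ∈ Finset.range K, (p 0 k + p 1 k)^2)
            + ∑ k ∈ Finset.range K, pL k * (p 0 k + p 1 k)) := by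
      simp only [e1]
      rw [Finset.sum_sub_distrib, Finset.sum_add_distrib, Finset.sum_add_distrib,
        ← Finset.mul_sum, ← Finset.mul_sum]
    rw [expand] at hsum
    rw [hG_def]
    exact hsum
  -- L1 distance bound
  have hzeroS : ∑ i ∈ Finset.range K, (p 0 i + p 1 i) = 0 := by
    rw [Finset.sum_add_distrib, h4 0 (by norm_num), h4 1 (by norm_num)]; ring
  have hsums0 : ∑ k ∈ Finset.range K, (Ct (k+1) - Ct k - (p 0 k + p 1 k)) = 0 := by
    rw [Finset.sum_sub_distrib, Finset.sum_range_sub (fun n => Ct n), hCtK, hCtzero, hzeroS]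
    ring
  have habs : ∑ k ∈ Finset.range K, |Ct (k+1) - Ct k - (p 0 k + p 1 k)|
      ≤ 2 * (S 0 + S 1 - E) := by
    have e1 : ∀ k ∈ Finset.range K, |Ct (k+1) - Ct k - (p 0 k + p 1 k)|
        = (Ct (k+1) - Ct k - (p 0 k + p 1 k))
          + 2 * max (p 0 k + p 1 k - (Ct (k+1) - Ct k)) 0 := by
      intro k _
      rw [abs_eq_add_two_max, neg_sub]
    rw [Finset.sum_congr rfl e1, Finset.sum_add_distrib, hsums0, zero_add, ← Finset.mul_sum]
    have hpt : ∀ k ∈ Finset.range K, max (p 0 k + p 1 k - (Ct (k+1) - Ct k)) 0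
        ≤ max (p 0 k) 0 + max (p 1 k) 0 - (if k1 ≤ k ∧ k ≤ k2 then pgmin - pL k else 0) := by
      intro k hk
      have hkK := Finset.mem_range.mp hk
      have m0 : p 0 k ≤ max (p 0 k) 0 := le_max_left _ _
      have m1 : p 1 k ≤ max (p 1 k) 0 := le_max_left _ _
      have m0' : (0:ℝ) ≤ max (p 0 k) 0 := le_max_right _ _
      have m1' : (0:ℝ) ≤ max (p 1 k) 0 := le_max_right _ _
      by_cases hw : k1 ≤ k ∧ k ≤ k2
      · rw [if_pos hw]
        have hst : Ct (k+1) - Ct k = pgmin - pL k := by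
          rw [hCt_def, Ctil_succ_win hw, ← hCt_def]; ring
        rw [hst]
        have hd2 := h1s k hkK
        rw [max_eq_left (by linarith)]
        linarith
      · rw [if_neg hw]
        have hst : min (p 0 k + p 1 k) 0 ≤ Ct (k+1) - Ct k := by
          rw [hCt_def, Ctil_succ_off hw, ← hCt_def]
          have hmx := le_max_left (Ct k + min (p 0 k + p 1 k) 0) (0:ℝ)
          linarith
        apply max_le _ (by linarith)
        rcases le_total (p 0 k + p 1 k) 0 with hs | hs
        · rw [min_eq_left hs] at hst; linarith
        · rw [min_eq_right hs] at hst; linarith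
    have hsum2' := Finset.sum_le_sum hpt
    have hwE : ∑ k ∈ Finset.range K, (if k1 ≤ k ∧ k ≤ k2 then pgmin - pL k else 0) = E := by
      rw [← Finset.sum_filter]
      have hf : Finset.filter (fun k => k1 ≤ k ∧ k ≤ k2) (Finset.range K) = Finset.Icc k1 k2 := by
        ext x
        simp only [Finset.mem_filter, Finset.mem_range, Finset.mem_Icc]
        omega
      rw [hf]
    have hRHS : ∑ k ∈ Finset.range K, (max (p 0 k) 0 + max (p 1 k) 0
          - (if k1 ≤ k ∧ k ≤ k2 then pgmin - pL k else 0))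
        = S 0 + S 1 - E := by
      rw [Finset.sum_sub_distrib, Finset.sum_add_distrib, hwE]
    rw [hRHS] at hsum2'
    linarith
  -- master inequality
  have hGnn : (0:ℝ) ≤ G := hG0.le
  have master : (c m / a) * S m + (c (1-m) / a) * S (1-m)
      ≤ (c m / a) * min E (emax m / Δ) + (c (1-m) / a) * max (E - emax m / Δ) 0
        + 2 * G * (S 0 + S 1 - E) := by
    have h5 := mul_le_mul_of_nonneg_left habs hGnn
    have h6 : G * (2 * (S 0 + S 1 - E)) = 2 * G * (S 0 + S 1 - E) := by ring
    rw [h6] at h5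
    generalize hA : (∑ k ∈ Finset.range K, (p 0 k + p 1 k) ^ 2) = A at key hQd
    generalize hBq : (∑ k ∈ Finset.range K, (Ct (k+1) - Ct k) ^ 2) = Bq at key hQd
    generalize hCq : (∑ k ∈ Finset.range K, pL k * (p 0 k + p 1 k)) = Cq at key hQd
    generalize hDq : (∑ k ∈ Finset.range K, pL k * (Ct (k+1) - Ct k)) = Dq at key hQd
    generalize hEq : (∑ k ∈ Finset.range K, |Ct (k+1) - Ct k - (p 0 k + p 1 k)|) = Eq at hQd h5
    generalize hFq : (2 * G * (S 0 + S 1 - E)) = Fq at h5 ⊢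
    generalize hL2 : c m / a * S m + c (1 - m) / a * S (1 - m) = L2 at key ⊢
    generalize hR2 : c m / a * (E ⊓ emax m / Δ) + c (1 - m) / a * ((E - emax m / Δ) ⊔ 0) = R2 at key ⊢
    generalize hGE : G * Eq = GE at hQd h5
    linarith
  -- lower bounds
  have hIccsub : Finset.Icc k1 k2 ⊆ Finset.range K := by
    intro x hx
    have := Finset.mem_Icc.mp hx
    exact Finset.mem_range.mpr (by omega)
  have hSnn : ∀ μ, μ < 2 → 0 ≤ S μ := by
    intro μ hμ
    exact Finset.sum_nonneg fun k _ => le_max_right _ _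
  have hSIccmax : ∀ μ, μ < 2 → ∑ k ∈ Finset.Icc k1 k2, max (p μ k) 0 ≤ S μ := by
    intro μ hμ
    exact Finset.sum_le_sum_of_subset_of_nonneg hIccsub (fun k _ _ => le_max_right _ _)
  have hSIcc : ∀ μ, μ < 2 → ∑ k ∈ Finset.Icc k1 k2, p μ k ≤ S μ := by
    intro μ hμ
    refine le_trans (Finset.sum_le_sum fun k _ => le_max_left (p μ k) 0) (hSIccmax μ hμ)
  have hS01 : S m + S (1-m) = S 0 + S 1 := by
    rcases hm2 with h | h <;> subst h <;> norm_num <;> ring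
  have hY : max (E - emax m / Δ) 0 ≤ S (1-m) := by
    apply max_le _ (hSnn _ hm1)
    have hPm : ∑ k ∈ Finset.Icc k1 k2, p m k ≤ emax m / Δ := by
      rw [hIccp m hm]
      have b1 := hcum m hm (k2+1) (by omega)
      have b2 := hcum m hm k1 (by omega)
      linarith
    have hsplitw : ∑ k ∈ Finset.Icc k1 k2, (p 0 k + p 1 k)
        = ∑ k ∈ Finset.Icc k1 k2, p m k + ∑ k ∈ Finset.Icc k1 k2, p (1-m) k := by
      rcases hm2 with h | h <;> subst h <;> rw [Finset.sum_add_distrib] <;> norm_num <;> ring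
    have h6 := hSIcc (1-m) hm1
    linarith
  have hXY : E ≤ S 0 + S 1 := by
    have hbig : ∑ k ∈ Finset.Icc k1 k2, (p 0 k + p 1 k)
        ≤ ∑ k ∈ Finset.Icc k1 k2, (max (p 0 k) 0 + max (p 1 k) 0) := by
      apply Finset.sum_le_sum
      intro k _
      have := le_max_left (p 0 k) (0:ℝ)
      have := le_max_left (p 1 k) (0:ℝ)
      linarith
    have hsplit2 : ∑ k ∈ Finset.Icc k1 k2, (max (p 0 k) 0 + max (p 1 k) 0)
        = ∑ k ∈ Finset.Icc k1 k2, max (p 0 k) 0 + ∑ k ∈ Finset.Icc k1 k2, max (p 1 k) 0 :=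
      Finset.sum_add_distrib
    have a0 := hSIccmax 0 (by norm_num)
    have a1 := hSIccmax 1 (by norm_num)
    linarith
  -- final algebra
  have hca : 2*G + 1/a ≤ c m / a := by
    have h' : (2*a*G+1)/a ≤ c m / a := div_le_div_of_nonneg_right (hc m hm) ha.le
    have e : (2*a*G+1)/a = 2*G + 1/a := by field_simp
    linarith
  have hcalt : c m / a < c (1-m) / a := div_lt_div_of_pos_right hlt ha
  have h1a : (0:ℝ) < 1/a := by positivity
  have hmmE := minmax_split E (emax m / Δ)
  have masterXY : (c m / a) * (S m - min E (emax m / Δ))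
        + (c (1-m) / a) * (S (1-m) - max (E - emax m / Δ) 0)
      ≤ 2*G*((S m - min E (emax m / Δ)) + (S (1-m) - max (E - emax m / Δ) 0)) := by
    have e2 : (S m - min E (emax m / Δ)) + (S (1-m) - max (E - emax m / Δ) 0)
        = S 0 + S 1 - E := by
      rw [← hS01]; linarith
    rw [e2]
    have lhs_eq : (c m / a) * (S m - min E (emax m / Δ))
          + (c (1-m) / a) * (S (1-m) - max (E - emax m / Δ) 0)
        = ((c m / a) * S m + (c (1-m) / a) * S (1-m))
          - ((c m / a) * min E (emax m / Δ) + (c (1-m) / a) * max (E - emax m / Δ) 0) := by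
      ring
    rw [lhs_eq]
    linarith
  have hYnn : 0 ≤ S (1-m) - max (E - emax m / Δ) 0 := by linarith
  have hXYnn : 0 ≤ (S m - min E (emax m / Δ)) + (S (1-m) - max (E - emax m / Δ) 0) := by
    have := hS01
    linarith
  obtain ⟨hX0, hY0⟩ := final_alg (c m / a) (c (1-m) / a) G
    (S m - min E (emax m / Δ)) (S (1-m) - max (E - emax m / Δ) 0) (1/a)
    masterXY hYnn hXYnn hca hcalt h1a
  constructor
  · rw [hchg m hm]
    linarith
  · rw [hchg (1-m) hm1]
    linarith
end

section
/- Suppose M = 2, K_absorb is nonempty and equals a contiguous interval {k1,…,k2} with 1 ≤ k1 ≤ k2 ≤ K−2, and E_absorb ≤ (e_{1,max} + e_{2,max})/Δ. Then there exists a constant c_min > 0 such that, whenever c_1 = c_2 ≥ c_min, the optimal value of the operator's quadratic program does not depend on how the excess energy is allocated between the two firms: for any nonnegative reals s_1, s_2 with s_1 + s_2 = E_absorb and s_m ≤ e_{m,max}/Δ for m = 1,2, there exists an optimal solution with ∑_{k=0}^{K−1} p*_chg,m,k = s_m for m = 1,2; in particular an optimal solution exists with the fair split s_m = E_{m,split}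 := min(max(E_absorb/2, E_absorb − e_{3−m,max}/Δ), e_{m,max}/Δ). -/
open Finset

theorem sum_range_eq_add_Icc_add_Ico {α : Type*} [AddCommMonoid α] {k₁ k₂ K : ℕ}
    (h₁ : k₁ ≤ k₂ + 1) (h₂ : k₂ + 1 ≤ K) (f : ℕ → α) :
    ∑ k ∈ range K, f k
      = ∑ k ∈ range k₁, f k + ∑ k ∈ Icc k₁ k₂, f k + ∑ k ∈ Ico (k₂ + 1) K, f k := by
  rw [← sum_range_add_sum_Ico f h₂, ← sum_range_add_sum_Ico f h₁, Ico_add_one_right_eq_Icc]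

theorem sum_abs_eq_two_mul_sum_max_sub_sum {ι : Type*} (s : Finset ι) (f : ι → ℝ) :
    ∑ k ∈ s, |f k| = 2 * ∑ k ∈ s, max (f k) 0 - ∑ k ∈ s, f k := by
  rw [mul_sum, ← sum_sub_distrib]
  refine sum_congr rfl fun k _ => ?_
  rcases le_total (f k) 0 with h | h
  · rw [abs_of_nonpos h, max_eq_right h]; ring
  · rw [abs_of_nonneg h, max_eq_left h]; ring

theorem sum_range_nonneg_of_nonneg_of_nonpos {Q : ℕ → ℝ} {n K j : ℕ}
    (hpos : ∀ i < n, 0 ≤ Q i) (hneg : ∀ i ∈ Ico n K, Q i ≤ 0)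
    (hsum : ∑ i ∈ range K, Q i = 0) (hj : j ≤ K) :
    0 ≤ ∑ i ∈ range j, Q i := by
  rcases le_total j n with hjn | hnj
  · exact sum_nonneg fun i hi => hpos i ((mem_range.mp hi).trans_le hjn)
  · have htail : ∑ i ∈ Ico j K, Q i ≤ 0 :=
      sum_nonpos fun i hi => hneg i (by simp only [mem_Ico] at hi ⊢; omega)
    linarith [sum_range_add_sum_Ico Q hj]

theorem sum_range_le_sum_range_max {Q : ℕ → ℝ} {j K : ℕ} (hj : j ≤ K) :
    ∑ i ∈ range j, Q i ≤ ∑ i ∈ range K, max (Q i) 0 :=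
  (sum_le_sum fun _ _ => le_max_left _ _).trans <|
    sum_le_sum_of_subset_of_nonneg (range_subset_range.mpr hj) fun _ _ _ => le_max_right _ _

theorem sq_half_add_mul_le {x y v B V : ℝ} (hx : |x| ≤ B) (hy : |y| ≤ B) (hv : |v| ≤ V) :
    y ^ 2 / 2 + v * y ≤ x ^ 2 / 2 + v * x + (B + V) * |x - y| := by
  have hmid : |(x + y) / 2 + v| ≤ B + V := by
    calc |(x + y) / 2 + v| ≤ (|x| + |y|) / 2 + |v| := by
          grw [abs_add_le, abs_div, abs_add_le, abs_two]
      _ ≤ B + V := by linarith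
  have hprod : (y - x) * ((x + y) / 2 + v) ≤ (B + V) * |x - y| :=
    calc (y - x) * ((x + y) / 2 + v) ≤ |y - x| * |(x + y) / 2 + v| := by
          rw [← abs_mul]; exact le_abs_self _
      _ ≤ |x - y| * (B + V) := by rw [abs_sub_comm]; gcongr
      _ = (B + V) * |x - y| := mul_comm _ _
  linarith

noncomputable def aggregateCost (K : ℕ) (v Q : ℕ → ℝ) : ℝ :=
  ∑ k ∈ range K, (Q k ^ 2 / 2 + v k * Q k)

theorem continuous_aggregateCost (K : ℕ) (v : ℕ → ℝ) : Continuous (aggregateCost K v) := by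
  unfold aggregateCost; fun_prop

theorem aggregateCost_le_add {K : ℕ} {v Q Q' : ℕ → ℝ} {B : ℝ} (hQ : ∀ k < K, |Q k| ≤ B)
    (hQ' : ∀ k < K, |Q' k| ≤ B) :
    aggregateCost K v Q'
      ≤ aggregateCost K v Q + (B + ∑ k ∈ range K, |v k|) * ∑ k ∈ range K, |Q k - Q' k| := by
  rw [aggregateCost, aggregateCost, mul_sum, ← sum_add_distrib]
  refine sum_le_sum fun k hk => ?_
  have hkK := mem_range.mp hk
  exact sq_half_add_mul_le (hQ k hkK) (hQ' k hkK) (single_le_sum (fun j _ => abs_nonneg (v j)) hk)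

structure IsAggregateProfile (K : ℕ) (b : ℕ → ℝ) (E : ℝ) (Q : ℕ → ℝ) : Prop where
  lower : ∀ k < K, b k ≤ Q k
  sum_range_nonneg : ∀ j ≤ K, 0 ≤ ∑ i ∈ range j, Q i
  sum_range_le : ∀ j ≤ K, ∑ i ∈ range j, Q i ≤ E
  sum_eq_zero : ∑ i ∈ range K, Q i = 0

namespace IsAggregateProfile

variable {K : ℕ} {b : ℕ → ℝ} {E : ℝ} {Q : ℕ → ℝ}

theorem abs_le (hQ : IsAggregateProfile K b E Q) {k : ℕ} (hk : k < K) : |Q k| ≤ E := by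
  have h₁ := hQ.sum_range_nonneg k hk.le
  have h₂ := hQ.sum_range_le k hk.le
  have h₃ := hQ.sum_range_nonneg (k + 1) hk
  have h₄ := hQ.sum_range_le (k + 1) hk
  rw [sum_range_succ] at h₃ h₄
  exact _root_.abs_le.mpr ⟨by linarith, by linarith⟩

theorem sum_Icc_le_sum_Ico_max_neg_zero {k₁ k₂ : ℕ} (hQ : IsAggregateProfile K b E Q)
    (hk₁₂ : k₁ ≤ k₂) (hK : k₂ + 1 ≤ K) :
    ∑ k ∈ Icc k₁ k₂, b k ≤ ∑ k ∈ Ico (k₂ + 1) K, max (-Q k) 0 := by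
  have hsplit := sum_range_eq_add_Icc_add_Ico (k₁ := k₁) (by omega) hK Q
  have hhead := hQ.sum_range_nonneg k₁ (by omega)
  have hmid : ∑ k ∈ Icc k₁ k₂, b k ≤ ∑ k ∈ Icc k₁ k₂, Q k :=
    sum_le_sum fun k hk => hQ.lower k (by simp only [mem_Icc] at hk; omega)
  have htail : -∑ k ∈ Ico (k₂ + 1) K, max (-Q k) 0 ≤ ∑ k ∈ Ico (k₂ + 1) K, Q k := by
    rw [← sum_neg_distrib]
    exact sum_le_sum fun k _ => neg_le.mp (le_max_left _ _)
  linarith [hQ.sum_eq_zero]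

end IsAggregateProfile

/-- Profiles with `Q = b` on `[k₁, k₂]`, `b ≤ Q ≤ 0` on `[k₂ + 1, K)`, `Q = 0` elsewhere and
`∑ Q = 0`, when `b ≥ 0` exactly on `[k₁, k₂]`. -/
def absorbingProfiles (K k₁ k₂ : ℕ) (b : ℕ → ℝ) : Set (ℕ → ℝ) :=
  Set.Icc ((Ico k₁ K : Set ℕ).indicator b) ((Icc k₁ k₂ : Set ℕ).indicator b) ∩
    {Q | ∑ k ∈ range K, Q k = 0}

theorem isCompact_absorbingProfiles (K k₁ k₂ : ℕ) (b : ℕ → ℝ) :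
    IsCompact (absorbingProfiles K k₁ k₂ b) :=
  isCompact_Icc.inter_right (isClosed_eq (by fun_prop) continuous_const)

section absorbingProfiles

variable {K k₁ k₂ : ℕ} {b Q : ℕ → ℝ}

theorem sum_max_zero_of_mem_absorbingProfiles (hb : ∀ k < K, 0 ≤ b k ↔ k₁ ≤ k ∧ k ≤ k₂)
    (hK : k₂ + 1 ≤ K) (hQ : Q ∈ absorbingProfiles K k₁ k₂ b) :
    ∑ k ∈ range K, max (Q k) 0 = ∑ k ∈ Icc k₁ k₂, b k := by
  have hIcc : Icc k₁ k₂ ⊆ range K := fun k hk => by simp only [mem_Icc, mem_range] at hk ⊢; omega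
  rw [← sum_indicator_subset b hIcc]
  refine sum_congr rfl fun k hk => ?_
  have hlo := hQ.1.1 k
  have hhi := hQ.1.2 k
  by_cases hA : k₁ ≤ k ∧ k ≤ k₂
  · have hmem : k ∈ (Icc k₁ k₂ : Set ℕ) := by simpa using hA
    have hmem' : k ∈ (Ico k₁ K : Set ℕ) := by simp only [coe_Ico, Set.mem_Ico]; omega
    rw [Set.indicator_of_mem hmem] at hhi ⊢
    rw [Set.indicator_of_mem hmem'] at hlo
    have hbQ := le_antisymm hhi hlo
    rw [hbQ]
    exact max_eq_left ((hb k (by omega)).mpr hA)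
  · have hmem : k ∉ (Icc k₁ k₂ : Set ℕ) := by simpa using hA
    rw [Set.indicator_of_notMem hmem] at hhi ⊢
    exact max_eq_right hhi

theorem isAggregateProfile_of_mem_absorbingProfiles (hb : ∀ k < K, 0 ≤ b k ↔ k₁ ≤ k ∧ k ≤ k₂)
    (hK : k₂ + 1 ≤ K) (hQ : Q ∈ absorbingProfiles K k₁ k₂ b) :
    IsAggregateProfile K b (∑ k ∈ Icc k₁ k₂, b k) Q where
  lower k hk := by
    refine le_trans ?_ (hQ.1.1 k)
    by_cases h : k₁ ≤ k
    · rw [Set.indicator_of_mem (by simp only [coe_Ico, Set.mem_Ico]; omega)]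
    · rw [Set.indicator_of_notMem (by simp only [coe_Ico, Set.mem_Ico]; omega)]
      exact le_of_not_ge fun h' => h ((hb k hk).mp h').1
  sum_range_nonneg j hj := by
    refine sum_range_nonneg_of_nonneg_of_nonpos (n := k₂ + 1) (fun i hi => ?_) (fun i hi => ?_)
      hQ.2 hj
    · refine le_trans ?_ (hQ.1.1 i)
      by_cases h : k₁ ≤ i
      · rw [Set.indicator_of_mem (by simp only [coe_Ico, Set.mem_Ico]; omega)]
        exact (hb i (by omega)).mpr ⟨h, by omega⟩
      · rw [Set.indicator_of_notMem (by simp only [coe_Ico, Set.mem_Ico]; omega)]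
    · have := hQ.1.2 i
      rwa [Set.indicator_of_notMem (by simp only [coe_Icc, Set.mem_Icc]; simp at hi; omega)]
        at this
  sum_range_le j hj :=
    (sum_range_le_sum_range_max hj).trans (sum_max_zero_of_mem_absorbingProfiles hb hK hQ).le
  sum_eq_zero := hQ.2

end absorbingProfiles

section projection

variable {K k₁ k₂ : ℕ} {b Q : ℕ → ℝ} {E ρ : ℝ}

theorem sum_Icc_nonneg_of_nonneg_iff (hb : ∀ k < K, 0 ≤ b k ↔ k₁ ≤ k ∧ k ≤ k₂)
    (hK : k₂ + 1 ≤ K) : 0 ≤ ∑ k ∈ Icc k₁ k₂, b k :=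
  sum_nonneg fun k hk => (hb k (by simp only [mem_Icc] at hk; omega)).mpr (by simpa using hk)

noncomputable def absorbingProjection (K k₁ k₂ : ℕ) (b Q : ℕ → ℝ) (ρ : ℝ) : ℕ → ℝ :=
  (Icc k₁ k₂ : Set ℕ).indicator b + (Ico (k₂ + 1) K : Set ℕ).indicator fun k => -(ρ * max (-Q k) 0)

theorem absorbingProjection_apply_bounds (hb : ∀ k < K, 0 ≤ b k ↔ k₁ ≤ k ∧ k ≤ k₂)
    (hk₁₂ : k₁ ≤ k₂) (hK : k₂ + 1 ≤ K) (hQ : ∀ k < K, b k ≤ Q k) (hρ₀ : 0 ≤ ρ) (hρ₁ : ρ ≤ 1)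
    (k : ℕ) :
    let P := absorbingProjection K k₁ k₂ b Q ρ
    (Ico k₁ K : Set ℕ).indicator b k ≤ P k ∧ P k ≤ (Icc k₁ k₂ : Set ℕ).indicator b k ∧
      |P k| ≤ |Q k| ∧ max (Q k - P k) 0 + (Icc k₁ k₂ : Set ℕ).indicator b k ≤ max (Q k) 0 := by
  simp only [absorbingProjection, Pi.add_apply, Set.indicator_apply, coe_Icc, coe_Ico,
    Set.mem_Icc, Set.mem_Ico]
  rcases (show (k₁ ≤ k ∧ k ≤ k₂) ∨ (k₂ + 1 ≤ k ∧ k < K) ∨ ¬ (k₁ ≤ k ∧ k < K) by omega)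
    with hA | hA | hA
  · have hbk := (hb k (by omega)).mpr hA
    have hQk := hQ k (by omega)
    simp only [if_pos hA, if_pos (show k₁ ≤ k ∧ k < K by omega),
      if_neg (show ¬(k₂ + 1 ≤ k ∧ k < K) by omega), add_zero]
    rw [max_eq_left (by linarith), max_eq_left (by linarith), abs_of_nonneg hbk,
      abs_of_nonneg (by linarith)]
    exact ⟨le_rfl, le_rfl, hQk, by linarith⟩
  · have hbk : b k ≤ 0 := le_of_not_ge fun h => by have := (hb k hA.2).mp h; omega
    have hQk := hQ k hA.2
    simp only [if_neg (show ¬(k₁ ≤ k ∧ k ≤ k₂) by omega), if_pos (show k₁ ≤ k ∧ k < K by omega),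
      if_pos hA, zero_add, add_zero]
    rcases le_total (Q k) 0 with hq | hq
    · rw [max_eq_left (neg_nonneg.mpr hq), max_eq_right hq, abs_neg,
        abs_of_nonneg (mul_nonneg hρ₀ (neg_nonneg.mpr hq)), abs_of_nonpos hq,
        max_eq_right (by nlinarith)]
      exact ⟨by nlinarith, by nlinarith, by nlinarith, le_rfl⟩
    · rw [max_eq_right (neg_nonpos.mpr hq), mul_zero, neg_zero, sub_zero]
      exact ⟨hbk, le_rfl, by simp, le_rfl⟩
  · simp only [if_neg (show ¬(k₁ ≤ k ∧ k ≤ k₂) by omega), if_neg hA,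
      if_neg (show ¬(k₂ + 1 ≤ k ∧ k < K) by omega), add_zero, sub_zero]
    exact ⟨le_rfl, le_rfl, by simp, le_rfl⟩

/-- `ρ` is chosen so that the scaled discharges after `k₂` release exactly the energy absorbed
on `[k₁, k₂]`. -/
theorem exists_mem_absorbingProfiles_near (hb : ∀ k < K, 0 ≤ b k ↔ k₁ ≤ k ∧ k ≤ k₂)
    (hk₁₂ : k₁ ≤ k₂) (hK : k₂ + 1 ≤ K) (hQ : IsAggregateProfile K b E Q) :
    ∃ Q' ∈ absorbingProfiles K k₁ k₂ b, (∀ k, |Q' k| ≤ |Q k|) ∧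
      ∑ k ∈ range K, |Q k - Q' k|
        ≤ 2 * (∑ k ∈ range K, max (Q k) 0 - ∑ k ∈ Icc k₁ k₂, b k) := by
  have hE := sum_Icc_nonneg_of_nonneg_iff hb hK
  have hEN := hQ.sum_Icc_le_sum_Ico_max_neg_zero hk₁₂ hK
  obtain ⟨ρ, hρ₀, hρ₁, hρN⟩ : ∃ ρ : ℝ, 0 ≤ ρ ∧ ρ ≤ 1 ∧
      ρ * ∑ k ∈ Ico (k₂ + 1) K, max (-Q k) 0 = ∑ k ∈ Icc k₁ k₂, b k :=
    ⟨_ / _, div_nonneg hE (hE.trans hEN), div_le_one_of_le₀ hEN (hE.trans hEN),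
      div_mul_cancel_of_imp fun h => le_antisymm (h ▸ hEN) hE⟩
  have hIcc : Icc k₁ k₂ ⊆ range K := fun k hk => by simp only [mem_Icc, mem_range] at hk ⊢; omega
  have hIco : Ico (k₂ + 1) K ⊆ range K := fun k hk => by
    simp only [mem_Ico, mem_range] at hk ⊢; omega
  have hsum : ∑ k ∈ range K, absorbingProjection K k₁ k₂ b Q ρ k = 0 := by
    simp only [absorbingProjection, Pi.add_apply, sum_add_distrib, sum_indicator_subset _ hIcc,
      sum_indicator_subset _ hIco, sum_neg_distrib, ← mul_sum, hρN, add_neg_cancel]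
  have hpoint := absorbingProjection_apply_bounds hb hk₁₂ hK hQ.lower hρ₀ hρ₁
  refine ⟨_, ⟨⟨fun k => (hpoint k).1, fun k => (hpoint k).2.1⟩, hsum⟩,
    fun k => (hpoint k).2.2.1, ?_⟩
  have hexcess := sum_le_sum fun k (_ : k ∈ range K) => (hpoint k).2.2.2
  rw [sum_add_distrib, sum_indicator_subset _ hIcc] at hexcess
  rw [sum_abs_eq_two_mul_sum_max_sub_sum, sum_sub_distrib, hQ.sum_eq_zero, hsum]
  linarith

end projection

/-- Exact penalty: `E + ∑ |v|` is a Lipschitz constant of `aggregateCost` on the box `|Q| ≤ E`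
that contains every aggregate profile and its projection. -/
theorem aggregateCost_add_le_of_isMinOn {K k₁ k₂ : ℕ} {b v Qmin Q : ℕ → ℝ} {E r : ℝ}
    (hb : ∀ k < K, 0 ≤ b k ↔ k₁ ≤ k ∧ k ≤ k₂) (hk₁₂ : k₁ ≤ k₂) (hK : k₂ + 1 ≤ K)
    (hmin : IsMinOn (aggregateCost K v) (absorbingProfiles K k₁ k₂ b) Qmin)
    (hQ : IsAggregateProfile K b E Q) (hr : 2 * (E + ∑ k ∈ range K, |v k|) ≤ r) :
    aggregateCost K v Qmin + r * ∑ k ∈ Icc k₁ k₂, b k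
      ≤ aggregateCost K v Q + r * ∑ k ∈ range K, max (Q k) 0 := by
  obtain ⟨Q', hQ'mem, hQ'abs, hdist⟩ := exists_mem_absorbingProfiles_near hb hk₁₂ hK hQ
  have hbox : ∀ k < K, |Q k| ≤ E := fun k hk => hQ.abs_le hk
  have hlip := aggregateCost_le_add (v := v) hbox fun k hk => (hQ'abs k).trans (hbox k hk)
  have hQ' : aggregateCost K v Qmin ≤ aggregateCost K v Q' := hmin hQ'mem
  have hE : 0 ≤ E := by simpa using hQ.sum_range_le 0 (Nat.zero_le K)
  have hR : 0 ≤ E + ∑ k ∈ range K, |v k| := add_nonneg hE (sum_nonneg fun k _ => abs_nonneg _)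
  have hexcess : 0 ≤ ∑ k ∈ range K, max (Q k) 0 - ∑ k ∈ Icc k₁ k₂, b k := by
    linarith [sum_nonneg fun k (_ : k ∈ range K) => abs_nonneg (Q k - Q' k)]
  nlinarith [mul_le_mul_of_nonneg_left hdist hR, mul_le_mul_of_nonneg_right hr hexcess]

theorem sum_max_mul_zero {ι : Type*} {l : ℝ} (hl : 0 ≤ l) (s : Finset ι) (Q : ι → ℝ) :
    ∑ k ∈ s, max (l * Q k) 0 = l * ∑ k ∈ s, max (Q k) 0 := by
  rw [mul_sum]
  exact sum_congr rfl fun k _ => by rw [mul_max_of_nonneg _ _ hl, mul_zero]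

section operator

variable {K M : ℕ} {Δ a pgmin c₀ E : ℝ} {pL emax c l Q : ℕ → ℝ} {p pchg : ℕ → ℕ → ℝ}

theorem objective_eq (K M : ℕ) (a : ℝ) (pL c : ℕ → ℝ) (p pchg : ℕ → ℕ → ℝ) :
    Objective K M a pL c p pchg
      = aggregateCost K pL (fun k => ∑ m ∈ range M, p m k)
        + ∑ k ∈ range K, ∑ m ∈ range M, c m / a * pchg m k := by
  simp only [Objective, aggregateCost, sum_add_distrib, mul_sum]
  congr 2
  exact sum_congr rfl fun k _ => by ring

theorem Feasible.sum_range_mem (h : Feasible K M Δ pgmin pL emax p pchg)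
    (hemax : ∀ m < M, 0 ≤ emax m / Δ) {m j : ℕ} (hm : m < M) (hj : j ≤ K) :
    ∑ i ∈ range j, p m i ∈ Set.Icc 0 (emax m / Δ) := by
  rcases Nat.eq_zero_or_pos j with rfl | hj₀
  · simpa using hemax m hm
  rcases hj.eq_or_lt with rfl | hjK
  · rw [h.2.2.2 m hm]
    exact ⟨le_rfl, hemax m hm⟩
  · exact h.2.2.1 m hm j hj₀ (by omega)

theorem Feasible.isAggregateProfile (h : Feasible K M Δ pgmin pL emax p pchg)
    (hemax : ∀ m < M, 0 ≤ emax m / Δ) :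
    IsAggregateProfile K (fun k => pgmin - pL k) (∑ m ∈ range M, emax m / Δ)
      (fun k => ∑ m ∈ range M, p m k) where
  lower := h.1
  sum_range_nonneg j hj := by
    rw [sum_comm]
    exact sum_nonneg fun m hm => (h.sum_range_mem hemax (mem_range.mp hm) hj).1
  sum_range_le j hj := by
    rw [sum_comm]
    exact sum_le_sum fun m hm => (h.sum_range_mem hemax (mem_range.mp hm) hj).2
  sum_eq_zero := by
    rw [sum_comm]
    exact sum_eq_zero fun m hm => h.2.2.2 m (mem_range.mp hm)

theorem aggregateCost_add_le_objective (h : Feasible K M Δ pgmin pL emax p pchg)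
    (hc : ∀ m < M, c m = c₀) (hc₀ : 0 ≤ c₀ / a) :
    aggregateCost K pL (fun k => ∑ m ∈ range M, p m k)
        + c₀ / a * ∑ k ∈ range K, max (∑ m ∈ range M, p m k) 0
      ≤ Objective K M a pL c p pchg := by
  rw [objective_eq, mul_sum]
  gcongr with k hk
  have hprice : ∑ m ∈ range M, c m / a * pchg m k = c₀ / a * ∑ m ∈ range M, pchg m k := by
    rw [mul_sum]
    exact sum_congr rfl fun m hm => by rw [hc m (mem_range.mp hm)]
  rw [hprice]
  have hchg := fun m hm => h.2.1 m (mem_range.mp hm) k (mem_range.mp hk)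
  exact mul_le_mul_of_nonneg_left
    (max_le (sum_le_sum fun m hm => (hchg m hm).2) (sum_nonneg fun m hm => (hchg m hm).1)) hc₀

theorem feasible_proportional (hQ : IsAggregateProfile K (fun k => pgmin - pL k) E Q)
    (hl : ∀ m < M, 0 ≤ l m) (hl₁ : ∑ m ∈ range M, l m = 1)
    (hlcap : ∀ m < M, l m * E ≤ emax m / Δ) :
    Feasible K M Δ pgmin pL emax (fun m k => l m * Q k) (fun m k => max (l m * Q k) 0) := by
  refine ⟨fun k hk => ?_, fun m _ k _ => ⟨le_max_right _ _, le_max_left _ _⟩,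
    fun m hm j hj₁ hj => ?_, fun m _ => ?_⟩
  · rw [← sum_mul, hl₁, one_mul]
    exact hQ.lower k hk
  · rw [← mul_sum]
    exact ⟨mul_nonneg (hl m hm) (hQ.sum_range_nonneg j (by omega)),
      (mul_le_mul_of_nonneg_left (hQ.sum_range_le j (by omega)) (hl m hm)).trans (hlcap m hm)⟩
  · rw [← mul_sum, hQ.sum_eq_zero, mul_zero]

theorem objective_proportional (hc : ∀ m < M, c m = c₀) (hl : ∀ m < M, 0 ≤ l m)
    (hl₁ : ∑ m ∈ range M, l m = 1) :
    Objective K M a pL c (fun m k => l m * Q k) (fun m k => max (l m * Q k) 0)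
      = aggregateCost K pL Q + c₀ / a * ∑ k ∈ range K, max (Q k) 0 := by
  have hagg : (fun k => ∑ m ∈ range M, l m * Q k) = Q :=
    funext fun k => by rw [← sum_mul, hl₁, one_mul]
  rw [objective_eq, hagg, mul_sum]
  congr 1
  refine sum_congr rfl fun k _ => ?_
  calc ∑ m ∈ range M, c m / a * max (l m * Q k) 0
      = ∑ m ∈ range M, c₀ / a * (l m * max (Q k) 0) :=
        sum_congr rfl fun m hm => by
          rw [hc m (mem_range.mp hm), mul_max_of_nonneg _ _ (hl m (mem_range.mp hm)), mul_zero]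
    _ = c₀ / a * max (Q k) 0 := by rw [← mul_sum, ← sum_mul, hl₁, one_mul]

theorem optimal_proportional_of_isMinOn {k₁ k₂ : ℕ}
    (hb : ∀ k < K, 0 ≤ pgmin - pL k ↔ k₁ ≤ k ∧ k ≤ k₂) (hk₁₂ : k₁ ≤ k₂) (hK : k₂ + 1 ≤ K)
    (hQ : Q ∈ absorbingProfiles K k₁ k₂ fun k => pgmin - pL k)
    (hmin : IsMinOn (aggregateCost K pL) (absorbingProfiles K k₁ k₂ fun k => pgmin - pL k) Q)
    (hemax : ∀ m < M, 0 ≤ emax m / Δ) (hc : ∀ m < M, c m = c₀)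
    (hc₀ : 2 * (∑ m ∈ range M, emax m / Δ + ∑ k ∈ range K, |pL k|) ≤ c₀ / a)
    (hl : ∀ m < M, 0 ≤ l m) (hl₁ : ∑ m ∈ range M, l m = 1)
    (hlcap : ∀ m < M, l m * ∑ k ∈ Icc k₁ k₂, (pgmin - pL k) ≤ emax m / Δ) :
    Optimal K M Δ a pgmin pL emax c (fun m k => l m * Q k) (fun m k => max (l m * Q k) 0) := by
  refine ⟨feasible_proportional (isAggregateProfile_of_mem_absorbingProfiles hb hK hQ) hl hl₁
    hlcap, fun q qchg hq => ?_⟩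
  have hr : 0 ≤ c₀ / a := le_trans (mul_nonneg zero_le_two (add_nonneg
    (sum_nonneg fun m hm => hemax m (mem_range.mp hm)) (sum_nonneg fun k _ => abs_nonneg _))) hc₀
  rw [objective_proportional hc hl hl₁, sum_max_zero_of_mem_absorbingProfiles hb hK hQ]
  exact (aggregateCost_add_le_of_isMinOn hb hk₁₂ hK hmin (hq.isAggregateProfile hemax) hc₀).trans
    (aggregateCost_add_le_objective hq hc hr)

theorem exists_isMinOn_aggregateCost {k₁ k₂ : ℕ}
    (hb : ∀ k < K, 0 ≤ pgmin - pL k ↔ k₁ ≤ k ∧ k ≤ k₂) (hk₁₂ : k₁ ≤ k₂) (hK : k₂ + 1 ≤ K)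
    (hemax : ∀ m < M, 0 ≤ emax m / Δ)
    (hne : ∃ p pchg : ℕ → ℕ → ℝ, Feasible K M Δ pgmin pL emax p pchg) :
    ∃ Q ∈ absorbingProfiles K k₁ k₂ (fun k => pgmin - pL k),
      IsMinOn (aggregateCost K pL) (absorbingProfiles K k₁ k₂ fun k => pgmin - pL k) Q := by
  obtain ⟨p, pchg, hp⟩ := hne
  obtain ⟨Q₀, hQ₀, -⟩ :=
    exists_mem_absorbingProfiles_near hb hk₁₂ hK (hp.isAggregateProfile hemax)
  exact (isCompact_absorbingProfiles K k₁ k₂ _).exists_isMinOn ⟨Q₀, hQ₀⟩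
    (continuous_aggregateCost K pL).continuousOn

end operator

theorem exists_weights_two {s₀ s₁ E : ℝ} (h₀ : 0 ≤ s₀) (h₁ : 0 ≤ s₁) (hE : s₀ + s₁ = E) :
    ∃ l : ℕ → ℝ, (∀ m < 2, 0 ≤ l m) ∧ ∑ m ∈ range 2, l m = 1 ∧ l 0 * E = s₀ ∧ l 1 * E = s₁ := by
  rcases eq_or_ne E 0 with rfl | hE₀
  · refine ⟨fun m => if m = 0 then 1 else 0, fun m _ => by positivity, by simp,
      by simp; linarith, by simp; linarith⟩
  · refine ⟨fun m => (if m = 0 then s₀ else s₁) / E, fun m _ => ?_, ?_, ?_, ?_⟩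
    · have : 0 ≤ E := hE ▸ add_nonneg h₀ h₁
      dsimp only
      split_ifs <;> positivity
    · simp [sum_range_succ, ← add_div, hE, hE₀]
    · simp [hE₀]
    · simp [hE₀]

theorem min_max_half_add_min_max_half {E e₀ e₁ : ℝ} (hcap : E ≤ e₀ + e₁) :
    min (max (E / 2) (E - e₁)) e₀ + min (max (E / 2) (E - e₀)) e₁ = E := by
  simp only [min_def, max_def]
  split_ifs <;> linarith

theorem exists_optimal_two_of_isMinOn {K k₁ k₂ : ℕ} {Δ a pgmin s₀ s₁ : ℝ}
    {pL emax c Q : ℕ → ℝ}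
    (hb : ∀ k < K, 0 ≤ pgmin - pL k ↔ k₁ ≤ k ∧ k ≤ k₂) (hk₁₂ : k₁ ≤ k₂) (hK : k₂ + 1 ≤ K)
    (hQ : Q ∈ absorbingProfiles K k₁ k₂ fun k => pgmin - pL k)
    (hmin : IsMinOn (aggregateCost K pL) (absorbingProfiles K k₁ k₂ fun k => pgmin - pL k) Q)
    (hemax : ∀ m < 2, 0 ≤ emax m / Δ) (hc : c 0 = c 1)
    (hc₀ : 2 * (∑ m ∈ range 2, emax m / Δ + ∑ k ∈ range K, |pL k|) ≤ c 0 / a)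
    (hs₀ : 0 ≤ s₀) (hs₁ : 0 ≤ s₁) (hs : s₀ + s₁ = ∑ k ∈ Icc k₁ k₂, (pgmin - pL k))
    (hs₀cap : s₀ ≤ emax 0 / Δ) (hs₁cap : s₁ ≤ emax 1 / Δ) :
    ∃ p pchg : ℕ → ℕ → ℝ, Optimal K 2 Δ a pgmin pL emax c p pchg ∧
      ∑ k ∈ range K, pchg 0 k = s₀ ∧ ∑ k ∈ range K, pchg 1 k = s₁ := by
  obtain ⟨l, hl, hl₁, hl₀E, hl₁E⟩ := exists_weights_two hs₀ hs₁ hs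
  have hlcap : ∀ m < 2, l m * ∑ k ∈ Icc k₁ k₂, (pgmin - pL k) ≤ emax m / Δ := fun m hm => by
    interval_cases m <;> linarith
  have hcm : ∀ m < 2, c m = c 0 := fun m hm => by interval_cases m <;> simp [hc]
  refine ⟨_, _, optimal_proportional_of_isMinOn hb hk₁₂ hK hQ hmin hemax hcm hc₀ hl hl₁ hlcap,
    ?_, ?_⟩ <;>
  rw [sum_max_mul_zero (hl _ (by norm_num)), sum_max_zero_of_mem_absorbingProfiles hb hK hQ]
  exacts [hl₀E, hl₁E]

theorem stmt7_general (K : ℕ) (Δ a pgmin : ℝ) (hΔ : 0 < Δ) (ha : 0 < a)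
    (pL emax : ℕ → ℝ) (hemax : ∀ m < 2, 0 < emax m)
    (k1 k2 : ℕ) (hk12 : k1 ≤ k2) (hk2 : k2 + 2 ≤ K)
    (habsorb : ∀ k < K, (pL k ≤ pgmin ↔ k1 ≤ k ∧ k ≤ k2))
    (hEcap : ∑ k ∈ Finset.Icc k1 k2, (pgmin - pL k) ≤ (emax 0 + emax 1) / Δ)
    (hne : ∃ p pchg : ℕ → ℕ → ℝ, Feasible K 2 Δ pgmin pL emax p pchg) :
    ∃ cmin : ℝ, 0 < cmin ∧
      ∀ c : ℕ → ℝ, c 0 = c 1 → cmin ≤ c 0 →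
        (∀ s0 s1 : ℝ, 0 ≤ s0 → 0 ≤ s1 →
          s0 + s1 = ∑ k ∈ Finset.Icc k1 k2, (pgmin - pL k) →
          s0 ≤ emax 0 / Δ → s1 ≤ emax 1 / Δ →
          ∃ p pchg : ℕ → ℕ → ℝ, Optimal K 2 Δ a pgmin pL emax c p pchg ∧
            ∑ k ∈ Finset.range K, pchg 0 k = s0 ∧
            ∑ k ∈ Finset.range K, pchg 1 k = s1) ∧
        (∃ p pchg : ℕ → ℕ → ℝ, Optimal K 2 Δ a pgmin pL emax c p pchg ∧
          ∑ k ∈ Finset.range K, pchg 0 k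
            = min (max ((∑ k ∈ Finset.Icc k1 k2, (pgmin - pL k)) / 2)
                (∑ k ∈ Finset.Icc k1 k2, (pgmin - pL k) - emax 1 / Δ)) (emax 0 / Δ) ∧
          ∑ k ∈ Finset.range K, pchg 1 k
            = min (max ((∑ k ∈ Finset.Icc k1 k2, (pgmin - pL k)) / 2)
                (∑ k ∈ Finset.Icc k1 k2, (pgmin - pL k) - emax 0 / Δ)) (emax 1 / Δ)) := by
  have hb : ∀ k < K, 0 ≤ pgmin - pL k ↔ k1 ≤ k ∧ k ≤ k2 := fun k hk =>
    sub_nonneg.trans (habsorb k hk)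
  have hK : k2 + 1 ≤ K := by omega
  have hcap : ∀ m < 2, 0 < emax m / Δ := fun m hm => div_pos (hemax m hm) hΔ
  obtain ⟨Q, hQ, hmin⟩ := exists_isMinOn_aggregateCost hb hk12 hK (fun m hm => (hcap m hm).le) hne
  have hE : 0 < ∑ m ∈ range 2, emax m / Δ :=
    sum_pos (fun m hm => hcap m (mem_range.mp hm)) (by simp)
  have hpL : 0 ≤ ∑ k ∈ range K, |pL k| := sum_nonneg fun k _ => abs_nonneg _
  refine ⟨2 * a * (∑ m ∈ range 2, emax m / Δ + ∑ k ∈ range K, |pL k|), by positivity,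
    fun c hc01 hcmin => ?_⟩
  have hr : 2 * (∑ m ∈ range 2, emax m / Δ + ∑ k ∈ range K, |pL k|) ≤ c 0 / a := by
    rw [le_div_iff₀ ha]; linarith
  have hsplit := fun s0 s1 => exists_optimal_two_of_isMinOn (s₀ := s0) (s₁ := s1) hb hk12 hK hQ
    hmin (fun m hm => (hcap m hm).le) hc01 hr
  have hEtot := sum_Icc_nonneg_of_nonneg_iff hb hK
  exact ⟨hsplit, hsplit _ _ (le_min (le_max_of_le_left (by positivity)) (hcap 0 two_pos).le)
    (le_min (le_max_of_le_left (by positivity)) (hcap 1 one_lt_two).le)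
    (min_max_half_add_min_max_half (by rwa [← add_div])) (min_le_right _ _) (min_le_right _ _)⟩

/-- Duopoly with equal bids `c_1 = c_2 ≥ c_min`: any feasible allocation `(s_1, s_2)` of
the excess energy `E_absorb` between the two firms is achieved by some optimal solution;
in particular the fair split `E_{m,split}` is achieved by an optimal solution. -/
theorem stmt7 (K : ℕ) (Δ a pgmin : ℝ) (hΔ : 0 < Δ) (ha : 0 < a)
    (pL emax : ℕ → ℝ) (hemax : ∀ m < 2, 0 < emax m)
    (k1 k2 : ℕ) (hk1 : 1 ≤ k1) (hk12 : k1 ≤ k2) (hk2 : k2 + 2 ≤ K)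
    (habsorb : ∀ k < K, (pL k ≤ pgmin ↔ k1 ≤ k ∧ k ≤ k2))
    (hEcap : ∑ k ∈ Finset.Icc k1 k2, (pgmin - pL k) ≤ (emax 0 + emax 1) / Δ)
    (hne : ∃ p pchg : ℕ → ℕ → ℝ, Feasible K 2 Δ pgmin pL emax p pchg) :
    ∃ cmin : ℝ, 0 < cmin ∧
      ∀ c : ℕ → ℝ, c 0 = c 1 → cmin ≤ c 0 →
        (∀ s0 s1 : ℝ, 0 ≤ s0 → 0 ≤ s1 →
          s0 + s1 = ∑ k ∈ Finset.Icc k1 k2, (pgmin - pL k) →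
          s0 ≤ emax 0 / Δ → s1 ≤ emax 1 / Δ →
          ∃ p pchg : ℕ → ℕ → ℝ, Optimal K 2 Δ a pgmin pL emax c p pchg ∧
            ∑ k ∈ Finset.range K, pchg 0 k = s0 ∧
            ∑ k ∈ Finset.range K, pchg 1 k = s1) ∧
        (∃ p pchg : ℕ → ℕ → ℝ, Optimal K 2 Δ a pgmin pL emax c p pchg ∧
          ∑ k ∈ Finset.range K, pchg 0 k
            = min (max ((∑ k ∈ Finset.Icc k1 k2, (pgmin - pL k)) / 2)
                (∑ k ∈ Finset.Icc k1 k2, (pgmin - pL k) - emax 1 / Δ)) (emax 0 / Δ) ∧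
          ∑ k ∈ Finset.range K, pchg 1 k
            = min (max ((∑ k ∈ Finset.Icc k1 k2, (pgmin - pL k)) / 2)
                (∑ k ∈ Finset.Icc k1 k2, (pgmin - pL k) - emax 0 / Δ)) (emax 1 / Δ)) :=
  stmt7_general K Δ a pgmin hΔ ha pL emax hemax k1 k2 hk12 hk2 habsorb hEcap hne
end

section
/- Let the storage firm's profit be J(c) = c·E_max if c < c', J(c) = c·E_split if c = c', and J(c) = c·E_min if c > c', for bids c on the grid G = {δ, 2δ, …, c_max}. Assume 0 ≤ E_min ≤ E_split < E_max, the opponent's bid satisfies c' ∈ G with 2δ ≤ c' ≤ c_max − δ, every bid under consideration satisfies c ≥ c_min where c_min ≥ δ·E_max/(E_max − E_split), and c_min < (E_min/E_max)·c_max. Then the bid c* defined by c* = c' − δ if c_max·E_min ≤ (c' − δ)·E_max, and c* = c_max otherwise, satisfies J(c*) ≥ J(c) for every c ∈ G with c_min ≤ c ≤ c_max, with strict inequality J(c*) > J(c) for every such c except possibly c = c_max in the first case (where J(c' − δ) = J(c_max) may hold, and the lower bid c' − δ is selected). -/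
/-- Membership in the discrete bid grid `G = {δ, 2δ, …, Nδ}`. -/
def InGrid (δ : ℝ) (N : ℕ) (c : ℝ) : Prop :=
  ∃ i : ℕ, 1 ≤ i ∧ i ≤ N ∧ c = (i : ℝ) * δ

/-- The storage firm's profit: `c·E_max` when undercutting the opponent's bid `c'`,
`c·E_split` when tying and `c·E_min` when overbidding. -/
noncomputable def J (c' Emin Esplit Emax c : ℝ) : ℝ :=
  if c < c' then c * Emax else if c = c' then c * Esplit else c * Emin

set_option maxHeartbeats 1000000 in
/-- The bid `c* = c' − δ` if `c_max·E_min ≤ (c' − δ)·E_max`, and `c* = c_max` otherwise,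
is a best response: `J(c*) ≥ J(c)` for every grid bid `c` with `c_min ≤ c ≤ c_max`, strictly
except possibly for `c = c_max` in the first case. -/
theorem stmt9 (δ cmax cmin c' Emin Esplit Emax : ℝ) (N : ℕ)
    (hδ : 0 < δ) (hcmax : cmax = (N : ℝ) * δ)
    (hc'G : InGrid δ N c') (hc'lo : 2 * δ ≤ c') (hc'hi : c' ≤ cmax - δ)
    (hE0 : 0 ≤ Emin) (hE1 : Emin ≤ Esplit) (hE2 : Esplit < Emax)
    (hcmin : δ * Emax / (Emax - Esplit) ≤ cmin)
    (hcmin2 : cmin < Emin / Emax * cmax) :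
    ∀ c : ℝ, InGrid δ N c → cmin ≤ c → c ≤ cmax →
      J c' Emin Esplit Emax
          (if cmax * Emin ≤ (c' - δ) * Emax then c' - δ else cmax)
        ≥ J c' Emin Esplit Emax c ∧
      ((c ≠ (if cmax * Emin ≤ (c' - δ) * Emax then c' - δ else cmax) ∧
        ¬(cmax * Emin ≤ (c' - δ) * Emax ∧ c = cmax)) →
        J c' Emin Esplit Emax
            (if cmax * Emin ≤ (c' - δ) * Emax then c' - δ else cmax)
          > J c' Emin Esplit Emax c) := by
  have hEmax : 0 < Emax := lt_of_le_of_lt (hE0.trans hE1) hE2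
  have hES : 0 < Emax - Esplit := by linarith
  have hkey : δ * Emax ≤ cmin * (Emax - Esplit) := by
    rw [div_le_iff₀ hES] at hcmin; linarith
  have hcmin0 : 0 < cmin := by nlinarith [mul_pos hδ hEmax]
  have hcmax0 : 0 ≤ cmax := by rw [hcmax]; positivity
  have hEmin : 0 < Emin := by
    rcases hE0.lt_or_eq with h | h
    · exact h
    · exfalso
      rw [← h] at hcmin2
      simp at hcmin2
      linarith
  obtain ⟨j, hj1, hjN, hc'⟩ := hc'G
  intro c hcG hlo hhi
  obtain ⟨i, hi1, hiN, hc⟩ := hcG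
  have hgrid_lt : c < c' → c ≤ c' - δ := by
    intro h
    have hij : i < j := by
      by_contra hij; push_neg at hij
      have : c' ≤ c := by
        rw [hc, hc']
        exact mul_le_mul_of_nonneg_right (by exact_mod_cast hij) hδ.le
      linarith
    have : (i : ℝ) + 1 ≤ (j : ℝ) := by exact_mod_cast hij
    rw [hc, hc']; nlinarith
  have hc'pos : 0 < c' - δ := by linarith
  by_cases hcase : cmax * Emin ≤ (c' - δ) * Emax
  · -- c* = c' - δ
    simp only [if_pos hcase]
    have hJstar : J c' Emin Esplit Emax (c' - δ) = (c' - δ) * Emax := by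
      unfold J; rw [if_pos (by linarith)]
    have h1 : cmin < c' - δ := by
      have hEd : Emin / Emax * cmax ≤ c' - δ := by
        rw [div_mul_eq_mul_div, div_le_iff₀ hEmax]; nlinarith
      linarith
    rcases lt_trichotomy c c' with h | h | h
    · have hJc : J c' Emin Esplit Emax c = c * Emax := by unfold J; rw [if_pos h]
      have hle : c ≤ c' - δ := hgrid_lt h
      constructor
      · rw [hJstar, hJc]; nlinarith
      · rintro ⟨hne, -⟩
        have : c < c' - δ := lt_of_le_of_ne hle hne
        rw [hJstar, hJc]; nlinarith
    · have hJc : J c' Emin Esplit Emax c = c' * Esplit := by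
        unfold J; rw [if_neg (by linarith), if_pos h, h]
      have hstrict : (c' - δ) * Emax > c' * Esplit := by
        nlinarith [mul_lt_mul_of_pos_right (show cmin + δ < c' by linarith) hES,
          mul_pos hδ hES]
      exact ⟨by rw [hJstar, hJc]; linarith, fun _ => by rw [hJstar, hJc]; linarith⟩
    · have hJc : J c' Emin Esplit Emax c = c * Emin := by
        unfold J; rw [if_neg (by linarith), if_neg (by linarith)]
      constructor
      · rw [hJstar, hJc]; nlinarith [mul_le_mul_of_nonneg_right hhi hE0]
      · rintro ⟨-, hne2⟩
        have hcne : c ≠ cmax := fun hcc => hne2 ⟨hcase, hcc⟩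
        have : c < cmax := lt_of_le_of_ne hhi hcne
        rw [hJstar, hJc]; nlinarith
  · -- c* = cmax
    simp only [if_neg hcase]
    push_neg at hcase
    have hJstar : J c' Emin Esplit Emax cmax = cmax * Emin := by
      unfold J; rw [if_neg (by linarith), if_neg (by linarith)]
    rcases lt_trichotomy c c' with h | h | h
    · have hJc : J c' Emin Esplit Emax c = c * Emax := by unfold J; rw [if_pos h]
      have hle : c ≤ c' - δ := hgrid_lt h
      have hstrict : cmax * Emin > c * Emax := by nlinarith
      exact ⟨by rw [hJstar, hJc]; linarith, fun _ => by rw [hJstar, hJc]; linarith⟩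
    · have hJc : J c' Emin Esplit Emax c = c' * Esplit := by
        unfold J; rw [if_neg (by linarith), if_pos h, h]
      have hlo' : cmin ≤ c' := by rw [← h]; exact hlo
      have hstrict : cmax * Emin > c' * Esplit := by nlinarith
      exact ⟨by rw [hJstar, hJc]; linarith, fun _ => by rw [hJstar, hJc]; linarith⟩
    · have hJc : J c' Emin Esplit Emax c = c * Emin := by
        unfold J; rw [if_neg (by linarith), if_neg (by linarith)]
      constructor
      · rw [hJstar, hJc]; nlinarith
      · rintro ⟨hne, -⟩
        have : c < cmax := lt_of_le_of_ne hhi hne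
        rw [hJstar, hJc]; nlinarith
end

section
/- With the piecewise profit J of the discrete bidding problem, suppose 0 ≤ E_min ≤ E_split < E_max, c' ∈ G with 2δ ≤ c' ≤ c_max − δ, c_min ≥ δ·E_max/(E_max − E_split), and c_max·E_min > (c' − δ)·E_max. Then J(c_max) > J(c) for every c ∈ G with c_min ≤ c ≤ c_max and c ≠ c_max; that is, bidding the price cap is the strict best response. -/
/-- If `c_max·E_min > (c' − δ)·E_max`, bidding the price cap is the strict best response:
`J(c_max) > J(c)` for every grid bid `c ≠ c_max` with `c_min ≤ c ≤ c_max`. -/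
theorem stmt10 (δ cmax cmin c' Emin Esplit Emax : ℝ) (N : ℕ)
    (hδ : 0 < δ) (hcmax : cmax = (N : ℝ) * δ)
    (hc'G : InGrid δ N c') (hc'lo : 2 * δ ≤ c') (hc'hi : c' ≤ cmax - δ)
    (hE0 : 0 ≤ Emin) (hE1 : Emin ≤ Esplit) (hE2 : Esplit < Emax)
    (hcmin : δ * Emax / (Emax - Esplit) ≤ cmin)
    (hcase : cmax * Emin > (c' - δ) * Emax) :
    ∀ c : ℝ, InGrid δ N c → cmin ≤ c → c ≤ cmax → c ≠ cmax →
      J c' Emin Esplit Emax cmax > J c' Emin Esplit Emax c := by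
  intro c hcG hclo hchi hcne
  obtain ⟨j, hj1, hjN, hc'⟩ := hc'G
  obtain ⟨i, hi1, hiN, hc⟩ := hcG
  have hEmax : (0 : ℝ) < Emax := lt_of_le_of_lt (le_trans hE0 hE1) hE2
  have hc'pos : 0 < c' := lt_of_lt_of_le (by linarith) hc'lo
  -- J cmax = cmax * Emin
  have hJmax : J c' Emin Esplit Emax cmax = cmax * Emin := by
    have h1 : ¬ cmax < c' := by linarith
    have h2 : cmax ≠ c' := by intro h; linarith
    rw [J, if_neg h1, if_neg h2]
  have hEminpos : 0 < Emin := by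
    nlinarith [mul_pos (by linarith : (0:ℝ) < c' - δ) hEmax]
  have hclt : c < cmax := lt_of_le_of_ne hchi hcne
  rw [hJmax]
  unfold J
  by_cases h1 : c < c'
  · rw [if_pos h1]
    have hij : i < j := by
      by_contra h
      push_neg at h
      have : (j : ℝ) ≤ (i : ℝ) := by exact_mod_cast h
      nlinarith
    have hsucc : (i : ℝ) + 1 ≤ (j : ℝ) := by exact_mod_cast hij
    have hle : c ≤ c' - δ := by rw [hc, hc']; nlinarith
    nlinarith
  · rw [if_neg h1]
    by_cases h2 : c = c'
    · rw [if_pos h2]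
      have hsub : 0 < Emax - Esplit := by linarith
      have : δ * Emax ≤ c * (Emax - Esplit) := by
        have := (div_le_iff₀ hsub).mp (le_trans hcmin hclo)
        linarith
      nlinarith
    · rw [if_neg h2]
      nlinarith
end

section
/- Consider the duopoly best-response dynamics and let t0 be an even step (firm 1's turn) with c_1^{(t0)} ∈ G. For every n ∈ ℕ, if c_1^{(t0)} − 2nδ ≥ L_1 and c_1^{(t0)} − (2n+1)δ ≥ L_2, then c_1^{(t0+2n)} = c_1^{(t0)} − 2nδ and c_2^{(t0+2n+1)} = c_1^{(t0)} − (2n+1)δ; in particular, the bids strictly decrease by δ at every step as long as they remain above the thresholds. -/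
/-- Duopoly best-response dynamics: firm 1 updates at even steps and firm 2 at odd
steps; the updating firm `m` undercuts the opponent's previous bid by `δ` if this stays
at or above its threshold `L_m`, and otherwise jumps to the price cap `cmax`; the
non-updating firm keeps its previous bid. -/
def BRDynamics (δ cmax L1 L2 : ℝ) (c1 c2 : ℕ → ℝ) : Prop :=
  ∀ t : ℕ,
    (Even (t + 1) →
      c1 (t + 1) = (if L1 ≤ c2 t - δ then c2 t - δ else cmax) ∧ c2 (t + 1) = c2 t) ∧
    (¬ Even (t + 1) →
      c2 (t + 1) = (if L2 ≤ c1 t - δ then c1 t - δ else cmax) ∧ c1 (t + 1) = c1 t)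

/-- Along the best-response dynamics, starting from an even step `t0` (firm 1's turn)
with a grid bid `c_1^{(t0)}`: for every `n`, if `c_1^{(t0)} − 2nδ ≥ L_1` and
`c_1^{(t0)} − (2n+1)δ ≥ L_2`, then `c_1^{(t0+2n)} = c_1^{(t0)} − 2nδ` and
`c_2^{(t0+2n+1)} = c_1^{(t0)} − (2n+1)δ`. -/
theorem stmt12 (δ cmax L1 L2 : ℝ) (N : ℕ)
    (hδ : 0 < δ) (hcmax : cmax = (N : ℝ) * δ)
    (hL1 : 0 ≤ L1) (hL1' : L1 ≤ cmax - 2 * δ)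
    (hL2 : 0 ≤ L2) (hL2' : L2 ≤ cmax - 2 * δ)
    (c1 c2 : ℕ → ℝ) (hdyn : BRDynamics δ cmax L1 L2 c1 c2)
    (t0 : ℕ) (ht0 : Even t0) (hG : InGrid δ N (c1 t0)) :
    ∀ n : ℕ, L1 ≤ c1 t0 - 2 * (n : ℝ) * δ →
      L2 ≤ c1 t0 - (2 * (n : ℝ) + 1) * δ →
      c1 (t0 + 2 * n) = c1 t0 - 2 * (n : ℝ) * δ ∧
      c2 (t0 + 2 * n + 1) = c1 t0 - (2 * (n : ℝ) + 1) * δ := by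
  intro n
  induction n with
  | zero =>
    intro h1 h2
    constructor
    · simp
    · have hodd : ¬ Even (t0 + 1) := by
        simpa [Nat.even_add_one] using ht0
      have := (hdyn t0).2 hodd
      rw [this.1, if_pos (by push_cast at h2 ⊢; linarith)]
      push_cast at h2 ⊢; ring
  | succ n ih =>
    intro h1 h2
    push_cast at h1 h2
    have h1' : L1 ≤ c1 t0 - 2 * (n : ℝ) * δ := by linarith
    have h2' : L2 ≤ c1 t0 - (2 * (n : ℝ) + 1) * δ := by linarith
    obtain ⟨hc1, hc2⟩ := ih h1' h2'
    -- step t0 + 2n + 2 : firm 1 updates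
    have heven : Even (t0 + 2 * n + 1 + 1) := by
      have : t0 + 2 * n + 1 + 1 = t0 + 2 * (n + 1) := by ring
      rw [this]
      exact ht0.add (even_two_mul _)
    have hstep1 := (hdyn (t0 + 2 * n + 1)).1 heven
    have e1 : c1 (t0 + 2 * n + 1 + 1) = c1 t0 - (2 * (n : ℝ) + 2) * δ := by
      rw [hstep1.1, hc2, if_pos (by linarith)]; ring
    -- step t0 + 2n + 3 : firm 2 updates
    have hodd : ¬ Even (t0 + 2 * n + 1 + 1 + 1) := by
      rw [Nat.even_add_one]
      simpa using heven
    have hstep2 := (hdyn (t0 + 2 * n + 1 + 1)).2 hodd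
    have e2 : c2 (t0 + 2 * n + 1 + 1 + 1) = c1 t0 - (2 * (n : ℝ) + 3) * δ := by
      rw [hstep2.1, e1, if_pos (by linarith)]; ring
    have key : t0 + 2 * (n + 1) = t0 + 2 * n + 1 + 1 := by ring
    constructor
    · rw [key, e1]; push_cast; ring
    · rw [show t0 + 2 * (n + 1) + 1 = t0 + 2 * n + 1 + 1 + 1 by ring, e2]
      push_cast; ring
end

section
/- Consider the duopoly best-response dynamics with thresholds L_m = c_max·E_{m,min}/E_{m,max} for m = 1,2, where 0 < E_{m,min} < E_{m,max}. Assume max{L_1, L_2} ≤ c_max − 2δ and the initial bid satisfies c_1^{(0)} ∈ G with c_1^{(0)} − δ ≥ 0. Then the best-response dynamics enters an infinite loop: the joint bid sequence (c_1^{(t)}, c_2^{(t)}) is not eventually constant (the dynamics never reaches a fixed point), and there exist steps t_A < t_B with c_1^{(t_B)} = c_1^{(t_A)} while c_1 is non-constant between t_A and t_B, so the sequence is eventually periodic with period at least 2. -/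
/-- With thresholds `L_m = c_max·E_{m,min}/E_{m,max}` (`0 < E_{m,min} < E_{m,max}`),
`max{L_1, L_2} ≤ c_max − 2δ`, and a grid initial bid, the best-response dynamics enters
an infinite loop: the joint bid sequence is not eventually constant, and firm 1's bid
sequence revisits a value after having moved away from it (eventual periodicity with
period at least 2). -/
theorem stmt13 (δ cmax : ℝ) (N : ℕ) (E1min E1max E2min E2max : ℝ)
    (hδ : 0 < δ) (hcmax : cmax = (N : ℝ) * δ)
    (hE1 : 0 < E1min) (hE1' : E1min < E1max)
    (hE2 : 0 < E2min) (hE2' : E2min < E2max)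
    (hL : max (cmax * E1min / E1max) (cmax * E2min / E2max) ≤ cmax - 2 * δ)
    (c1 c2 : ℕ → ℝ)
    (hdyn : BRDynamics δ cmax (cmax * E1min / E1max) (cmax * E2min / E2max) c1 c2)
    (hG : InGrid δ N (c1 0)) (hinit : 0 ≤ c1 0 - δ) :
    (¬ ∃ T : ℕ, ∀ t : ℕ, T ≤ t → c1 t = c1 T ∧ c2 t = c2 T) ∧
    (∃ tA tB : ℕ, tA < tB ∧ c1 tB = c1 tA ∧
      ∃ t : ℕ, tA < t ∧ t < tB ∧ c1 t ≠ c1 tA) := by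
  set L1 := cmax * E1min / E1max with hL1def
  set L2 := cmax * E2min / E2max with hL2def
  have hcm0 : 0 ≤ cmax := by rw [hcmax]; positivity
  have hL1le : L1 ≤ cmax - 2 * δ := le_trans (le_max_left _ _) hL
  have hL2le : L2 ≤ cmax - 2 * δ := le_trans (le_max_right _ _) hL
  have hL1nn : 0 ≤ L1 := div_nonneg (mul_nonneg hcm0 hE1.le) (by linarith)
  have hcpos : 0 < cmax := by linarith
  have hL1pos : 0 < L1 := div_pos (mul_pos hcpos hE1) (by linarith)
  have hL2pos : 0 < L2 := div_pos (mul_pos hcpos hE2) (by linarith)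
  have hNpos : 0 < N := by
    by_contra h
    push_neg at h
    interval_cases N
    simp at hcmax
    linarith
  -- an update always stays on the grid
  have hupd : ∀ L : ℝ, 0 < L → ∀ x : ℝ, InGrid δ N x →
      InGrid δ N (if L ≤ x - δ then x - δ else cmax) := by
    intro L hLpos x hx
    obtain ⟨i, hi1, hiN, rfl⟩ := hx
    split_ifs with h
    · have h2 : (1 : ℝ) < i := by nlinarith
      have h2' : 2 ≤ i := by exact_mod_cast Nat.one_lt_cast.mp h2
      refine ⟨i - 1, by omega, by omega, ?_⟩
      push_cast [Nat.cast_sub (by omega : 1 ≤ i)]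
      ring
    · exact ⟨N, hNpos, le_refl _, hcmax⟩
  -- grid invariant
  have hg : ∀ t : ℕ, InGrid δ N (c1 (t + 1)) ∧ InGrid δ N (c2 (t + 1)) := by
    intro t
    induction t with
    | zero =>
      have h := (hdyn 0).2 (by rw [Nat.even_iff]; omega)
      rw [h.1, h.2]
      exact ⟨hG, hupd _ hL2pos _ hG⟩
    | succ s ih =>
      rcases Nat.even_or_odd (s + 2) with he | ho
      · have h := (hdyn (s + 1)).1 he
        rw [h.1, h.2]
        exact ⟨hupd _ hL1pos _ ih.2, ih.2⟩
      · have h := (hdyn (s + 1)).2 (Nat.not_even_iff_odd.mpr ho)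
        rw [h.1, h.2]
        exact ⟨ih.1, hupd _ hL2pos _ ih.1⟩
  have hgridc1 : ∀ t : ℕ, InGrid δ N (c1 t) := by
    intro t
    cases t with
    | zero => exact hG
    | succ s => exact (hg s).1
  -- Part 1: no fixed point
  have key : ¬ ∃ T : ℕ, ∀ t : ℕ, T ≤ t → c1 t = c1 T ∧ c2 t = c2 T := by
    rintro ⟨T, hT⟩
    obtain ⟨hc1a, hc2a⟩ := hT (2 * T + 1) (by omega)
    obtain ⟨hc1b, hc2b⟩ := hT (2 * T + 2) (by omega)
    obtain ⟨hc1c, hc2c⟩ := hT (2 * T + 3) (by omega)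
    have he := (hdyn (2 * T + 1)).1 (by rw [Nat.even_iff]; omega)
    have ho := (hdyn (2 * T + 2)).2 (by rw [Nat.even_iff]; omega)
    have e1 : c1 T = if L1 ≤ c2 T - δ then c2 T - δ else cmax := by
      rw [← hc1b, he.1, hc2a]
    have e2 : c2 T = if L2 ≤ c1 T - δ then c1 T - δ else cmax := by
      rw [← hc2c, ho.1, hc1b]
    split_ifs at e1 e2 with h1 h2
    · linarith
    · push_neg at h2; linarith
    · push_neg at h1; linarith
    · push_neg at h1; linarith
  -- c1 alone is not eventually constant
  have key1 : ∀ T : ℕ, ∃ t : ℕ, T ≤ t ∧ c1 t ≠ c1 T := by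
    intro T
    by_contra hcon
    push_neg at hcon
    apply key
    refine ⟨T + 2, fun t ht => ?_⟩
    constructor
    · rw [hcon t (by omega), hcon (T + 2) (by omega)]
    · -- c2 is constant from T+2 on
      have hb : ∀ s : ℕ, T ≤ s → ¬ Even (s + 1) →
          c2 (s + 1) = if L2 ≤ c1 T - δ then c1 T - δ else cmax := by
        intro s hs hodd
        rw [((hdyn s).2 hodd).1, hcon s hs]
      have hall : ∀ u : ℕ, T + 2 ≤ u →
          c2 u = if L2 ≤ c1 T - δ then c1 T - δ else cmax := by
        intro u hu
        obtain ⟨s, rfl⟩ : ∃ s, u = s + 1 := ⟨u - 1, by omega⟩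
        rcases Nat.even_or_odd (s + 1) with he | ho
        · -- s+1 even : c2 (s+1) = c2 s, and s = s'+1 with s'+1 odd
          have h := ((hdyn s).1 he).2
          obtain ⟨s', rfl⟩ : ∃ s', s = s' + 1 := ⟨s - 1, by omega⟩
          have hodd : ¬ Even (s' + 1) := by
            rw [Nat.even_iff] at he ⊢; omega
          rw [h, hb s' (by omega) hodd]
        · rw [hb s (by omega) (Nat.not_even_iff_odd.mpr ho)]
      rw [hall t ht, hall (T + 2) (le_refl _)]
  constructor
  · exact key
  · -- Part 2: pigeonhole
    have hch : ∀ t : ℕ, ∃ i : ℕ, 1 ≤ i ∧ i ≤ N ∧ c1 t = (i : ℝ) * δ := hgridc1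
    choose g hg1 hg2 hg3 using hch
    have hinj : ∀ s t : ℕ, g s = g t → c1 s = c1 t := by
      intro s t h
      rw [hg3, hg3, h]
    let f : ℕ → Fin (N + 1) := fun t => ⟨g t, by have := hg2 t; omega⟩
    obtain ⟨b, hb⟩ := Finite.exists_infinite_fiber f
    have hbs : (f ⁻¹' {b}).Infinite := Set.infinite_coe_iff.mp hb
    obtain ⟨tA, htA⟩ := hbs.nonempty
    obtain ⟨t, ht, hne⟩ := key1 tA
    obtain ⟨tB, htB, htlt⟩ := hbs.exists_gt t
    have hgAB : g tB = g tA := by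
      have h1 : f tA = b := htA
      have h2 : f tB = b := htB
      have : f tB = f tA := h2.trans h1.symm
      simpa [f, Fin.mk.injEq] using this
    have htAlt : tA < t := lt_of_le_of_ne ht (fun h => hne (by rw [h]))
    exact ⟨tA, tB, lt_trans htAlt htlt, hinj _ _ hgAB, t, htAlt, htlt, hne⟩
end
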